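/- arXiv:2305.11126 — 11 statements merged into one kernel-verified Lean document; each statement's English description precedes it below -/
import Mathlib

section
/- Let X be a nonnegative random variable with E[X] ≤ 1 (an e-value). Let G ⊆ [0,∞] be a closed set with infimum g_* and supremum g^*. Define the stochastic rounding S_G(x): if x < g_*, x > g^*, x ∈ G, or the least element of G above x is ∞, set S_G(x) = x; otherwise, letting x_- = sup{y ∈ G : y ≤ x} and x^+ = inf{y ∈ G : y ≥ x}, set S_G(x) = x_- with probability (x^+ - x)/(x^+ - x_-) and S_G(x) = x^+ with probability (x - x_-)/(x^+ - x_-), with the randomization independent of X. Then E[S_G(X)] = E[X], so S_G(X) is also an e-value. -/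
open MeasureTheory ProbabilityTheory Set
open scoped ENNReal

open Classical in
/-- Stochastic rounding of `x` onto a grid `G ⊆ [0,∞]`, driven by an auxiliary
uniform random value `v`. -/
noncomputable def stochRound (G : Set ℝ≥0∞) (x : ℝ≥0∞) (v : ℝ) : ℝ≥0∞ :=
  if x < sInf G ∨ sSup G < x ∨ x ∈ G ∨ sInf {y ∈ G | x ≤ y} = ∞ then x
  else if ENNReal.ofReal v ≤
      (x - sSup {y ∈ G | y ≤ x}) / (sInf {y ∈ G | x ≤ y} - sSup {y ∈ G | y ≤ x})
    then sInf {y ∈ G | x ≤ y}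
    else sSup {y ∈ G | y ≤ x}

lemma stochRound_measurable (G : Set ℝ≥0∞) (hG : IsClosed G) :
    Measurable (fun p : ℝ≥0∞ × ℝ => stochRound G p.1 p.2) := by
  have hg : Measurable (fun x : ℝ≥0∞ => sSup {y ∈ G | y ≤ x}) :=
    Monotone.measurable (fun _ _ h => sSup_le_sSup (fun y hy => ⟨hy.1, hy.2.trans h⟩))
  have hh : Measurable (fun x : ℝ≥0∞ => sInf {y ∈ G | x ≤ y}) :=
    Monotone.measurable (fun _ _ h => sInf_le_sInf (fun y hy => ⟨hy.1, h.trans hy.2⟩))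
  have hf : Measurable (fun x : ℝ≥0∞ =>
      (x - sSup {y ∈ G | y ≤ x}) / (sInf {y ∈ G | x ≤ y} - sSup {y ∈ G | y ≤ x})) :=
    (measurable_id.sub hg).div (hh.sub hg)
  have hC : MeasurableSet {x : ℝ≥0∞ |
      x < sInf G ∨ sSup G < x ∨ x ∈ G ∨ sInf {y ∈ G | x ≤ y} = ∞} := by
    simp only [setOf_or]
    exact ((measurableSet_lt measurable_id measurable_const).union
      ((measurableSet_lt measurable_const measurable_id).union
        (hG.measurableSet.union (hh (measurableSet_singleton ∞)))))
  unfold stochRound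
  refine Measurable.ite (measurable_fst hC) measurable_fst
    (Measurable.ite ?_ (hh.comp measurable_fst) (hg.comp measurable_fst))
  exact measurableSet_le (ENNReal.measurable_ofReal.comp measurable_snd) (hf.comp measurable_fst)

lemma stochRound_lintegral (G : Set ℝ≥0∞) (hG : IsClosed G) (x : ℝ≥0∞) :
    ∫⁻ v, stochRound G x v ∂((volume : Measure ℝ).restrict (Icc (0:ℝ) 1)) = x := by
  have hμuniv : (volume : Measure ℝ).restrict (Icc (0:ℝ) 1) univ = 1 := by
    rw [Measure.restrict_apply_univ, Real.volume_Icc]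
    norm_num
  by_cases hcond : x < sInf G ∨ sSup G < x ∨ x ∈ G ∨ sInf {y ∈ G | x ≤ y} = ∞
  · simp only [stochRound, if_pos hcond, lintegral_const, hμuniv, mul_one]
  · push_neg at hcond
    obtain ⟨h1, h2, h3, h4⟩ := hcond
    set a := sSup {y ∈ G | y ≤ x} with ha_def
    set b := sInf {y ∈ G | x ≤ y} with hb_def
    -- G nonempty
    have hGne : G.Nonempty := by
      rcases Set.eq_empty_or_nonempty G with hGe | h
      · exfalso
        rw [hGe, sInf_empty] at h1
        rw [hGe, sSup_empty] at h2
        exact absurd (h1.trans h2) (by simp)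
      · exact h
    have hInfG : sInf G ∈ G := hG.sInf_mem hGne
    have hSupG : sSup G ∈ G := hG.sSup_mem hGne
    have hAne : {y ∈ G | y ≤ x}.Nonempty := ⟨sInf G, hInfG, h1⟩
    have hBne : {y ∈ G | x ≤ y}.Nonempty := ⟨sSup G, hSupG, h2⟩
    have hAcl : IsClosed {y ∈ G | y ≤ x} := hG.inter isClosed_Iic
    have hBcl : IsClosed {y ∈ G | x ≤ y} := hG.inter isClosed_Ici
    have haA : a ∈ {y ∈ G | y ≤ x} := hAcl.sSup_mem hAne
    have hbB : b ∈ {y ∈ G | x ≤ y} := hBcl.sInf_mem hBne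
    have hax : a < x := lt_of_le_of_ne haA.2 (fun h => h3 (h ▸ haA.1))
    have hxb : x < b := lt_of_le_of_ne hbB.2 (fun h => h3 (h ▸ hbB.1))
    have hab : a < b := hax.trans hxb
    have hbtop : b ≠ ∞ := h4
    have hxtop : x ≠ ∞ := (hxb.trans_le le_top).ne
    have hatop : a ≠ ∞ := (hab.trans_le le_top).ne
    have hba_pos : b - a ≠ 0 := by
      simp [tsub_eq_zero_iff_le, not_le, hab]
    have hba_top : b - a ≠ ∞ := by
      exact (tsub_le_self.trans_lt (lt_top_iff_ne_top.2 hbtop)).ne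
    set p := (x - a) / (b - a) with hp_def
    have hp_le_one : p ≤ 1 := by
      rw [hp_def, ENNReal.div_le_iff hba_pos hba_top, one_mul]
      exact tsub_le_tsub_right hxb.le a
    have hp_top : p ≠ ∞ := (hp_le_one.trans_lt ENNReal.one_lt_top).ne
    -- compute the integral
    have hset : {v : ℝ | ENNReal.ofReal v ≤ p} = Iic p.toReal := by
      ext v
      simp [ENNReal.ofReal_le_iff_le_toReal hp_top]
    have hfun : (fun v : ℝ => stochRound G x v) =
        fun v => if ENNReal.ofReal v ≤ p then b else a := by
      funext v
      simp only [stochRound]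
      rw [if_neg]
      push_neg
      exact ⟨h1, h2, h3, h4⟩
    rw [hfun]
    set t := p.toReal with ht_def
    have ht0 : 0 ≤ t := ENNReal.toReal_nonneg
    have ht1 : t ≤ 1 := by
      rw [ht_def, ← ENNReal.toReal_one]
      exact ENNReal.toReal_mono ENNReal.one_ne_top hp_le_one
    have hfun2 : (fun v : ℝ => if ENNReal.ofReal v ≤ p then b else a) =
        fun v => (Iic t).indicator (fun _ => b) v + (Iic t)ᶜ.indicator (fun _ => a) v := by
      funext v
      have hv : ENNReal.ofReal v ≤ p ↔ v ∈ Iic t := by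
        rw [← hset]; rfl
      by_cases hvt : v ∈ Iic t
      · rw [if_pos (hv.mpr hvt), Set.indicator_of_mem hvt,
          Set.indicator_of_notMem (Set.notMem_compl_iff.mpr hvt), add_zero]
      · rw [if_neg (fun h => hvt (hv.mp h)), Set.indicator_of_notMem hvt,
          Set.indicator_of_mem (Set.mem_compl hvt), zero_add]
    have hμS : ((volume : Measure ℝ).restrict (Icc (0:ℝ) 1)) (Iic t) = p := by
      rw [Measure.restrict_apply measurableSet_Iic]
      have : Iic t ∩ Icc (0:ℝ) 1 = Icc 0 t := by
        ext v
        simp only [mem_inter_iff, mem_Iic, mem_Icc]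
        constructor
        · rintro ⟨hvt, hv0, _⟩; exact ⟨hv0, hvt⟩
        · rintro ⟨hv0, hvt⟩; exact ⟨hvt, hv0, hvt.trans ht1⟩
      rw [this, Real.volume_Icc, sub_zero, ht_def, ENNReal.ofReal_toReal hp_top]
    have hμSc : ((volume : Measure ℝ).restrict (Icc (0:ℝ) 1)) ((Iic t)ᶜ) = 1 - p := by
      rw [Measure.restrict_apply measurableSet_Iic.compl, compl_Iic]
      have : Ioi t ∩ Icc (0:ℝ) 1 = Ioc t 1 := by
        ext v
        simp only [mem_inter_iff, mem_Ioi, mem_Icc, mem_Ioc]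
        constructor
        · rintro ⟨hvt, _, hv1⟩; exact ⟨hvt, hv1⟩
        · rintro ⟨hvt, hv1⟩; exact ⟨hvt, ht0.trans hvt.le, hv1⟩
      rw [this, Real.volume_Ioc, ENNReal.ofReal_sub _ ht0, ENNReal.ofReal_one,
        ht_def, ENNReal.ofReal_toReal hp_top]
    rw [hfun2]
    rw [lintegral_add_left ((measurable_const).indicator measurableSet_Iic)]
    rw [lintegral_indicator measurableSet_Iic, lintegral_indicator measurableSet_Iic.compl,
      setLIntegral_const, setLIntegral_const, hμS, hμSc]
    -- now prove b * p + a * (1 - p) = x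
    have h1p_top : (1:ℝ≥0∞) - p ≠ ∞ := (tsub_le_self.trans_lt ENNReal.one_lt_top).ne
    have hbp_top : b * p ≠ ∞ := ENNReal.mul_ne_top hbtop hp_top
    have hap_top : a * (1 - p) ≠ ∞ := ENNReal.mul_ne_top hatop h1p_top
    rw [← ENNReal.toReal_eq_toReal_iff' (ENNReal.add_ne_top.mpr ⟨hbp_top, hap_top⟩) hxtop]
    rw [ENNReal.toReal_add hbp_top hap_top, ENNReal.toReal_mul, ENNReal.toReal_mul,
      ENNReal.toReal_sub_of_le hp_le_one ENNReal.one_ne_top, ENNReal.toReal_one,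
      ht_def.symm, ht_def, hp_def, ENNReal.toReal_div,
      ENNReal.toReal_sub_of_le hax.le hxtop, ENNReal.toReal_sub_of_le hab.le hbtop]
    have hAX : a.toReal < x.toReal := ENNReal.toReal_strict_mono hxtop hax
    have hXB : x.toReal < b.toReal := ENNReal.toReal_strict_mono hbtop hxb
    have hBA : b.toReal - a.toReal ≠ 0 := sub_ne_zero.mpr (hAX.trans hXB).ne'
    field_simp
    ring

/-- Stochastic rounding onto a closed grid preserves the expectation of an
e-value, hence produces an e-value. -/
theorem stmt0 {Ω : Type*} [MeasureSpace Ω] [IsProbabilityMeasure (ℙ : Measure Ω)]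
    (G : Set ℝ≥0∞) (hG : IsClosed G)
    (X : Ω → ℝ≥0∞) (V : Ω → ℝ)
    (hXm : Measurable X) (hVm : Measurable V)
    (hXe : ∫⁻ ω, X ω ∂ℙ ≤ 1)
    (hUnif : Measure.map V ℙ = (volume : Measure ℝ).restrict (Icc (0:ℝ) 1))
    (hInd : IndepFun X V ℙ) :
    (∫⁻ ω, stochRound G (X ω) (V ω) ∂ℙ = ∫⁻ ω, X ω ∂ℙ) ∧
    (∫⁻ ω, stochRound G (X ω) (V ω) ∂ℙ ≤ 1) := by
  have hmeas := stochRound_measurable G hG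
  have hmap : Measure.map (fun ω => (X ω, V ω)) ℙ = (Measure.map X ℙ).prod (Measure.map V ℙ) :=
    (indepFun_iff_map_prod_eq_prod_map_map hXm.aemeasurable hVm.aemeasurable).mp hInd
  have key : ∫⁻ ω, stochRound G (X ω) (V ω) ∂ℙ = ∫⁻ ω, X ω ∂ℙ := by
    calc ∫⁻ ω, stochRound G (X ω) (V ω) ∂ℙ
        = ∫⁻ q, stochRound G q.1 q.2 ∂(Measure.map (fun ω => (X ω, V ω)) ℙ) :=
          (lintegral_map hmeas (hXm.prodMk hVm)).symm
      _ = ∫⁻ q, stochRound G q.1 q.2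
            ∂((Measure.map X ℙ).prod ((volume : Measure ℝ).restrict (Icc (0:ℝ) 1))) := by
          rw [hmap, hUnif]
      _ = ∫⁻ x, ∫⁻ v, stochRound G x v ∂((volume : Measure ℝ).restrict (Icc (0:ℝ) 1))
            ∂(Measure.map X ℙ) := lintegral_prod _ hmeas.aemeasurable
      _ = ∫⁻ x, x ∂(Measure.map X ℙ) :=
          lintegral_congr fun x => stochRound_lintegral G hG x
      _ = ∫⁻ ω, X ω ∂ℙ := lintegral_map measurable_id hXm
  exact ⟨key, key.le.trans hXe⟩
end

section
/- Let X be a nonnegative random variable, let α̂ be a random variable taking values in (0,1] possibly dependent on X, and let U be uniform on [0,1] independent of (X, α̂). Define S_{α̂}(X) = X·1{X ≥ 1/α̂} + (1/α̂)·1{1/α̂ > X ≥ U/α̂}. Then E[S_{α̂}(X)] = E[X]. In particular, if E[X] ≤ 1 then S_{α̂}(X) is also an e-value. -/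
open MeasureTheory ProbabilityTheory Set
open scoped ENNReal

lemma inner_calc {x a : ℝ} (hx : 0 ≤ x) (ha : a ∈ Set.Ioc (0:ℝ) 1) :
    ∫⁻ u in Icc (0:ℝ) 1, ENNReal.ofReal (x * (if 1 / a ≤ x then 1 else 0)
      + (1 / a) * (if x < 1 / a ∧ u / a ≤ x then 1 else 0)) = ENNReal.ofReal x := by
  obtain ⟨ha0, ha1⟩ := ha
  by_cases h : 1 / a ≤ x
  · have : ∀ u : ℝ, ENNReal.ofReal (x * (if 1 / a ≤ x then 1 else 0)
        + (1 / a) * (if x < 1 / a ∧ u / a ≤ x then 1 else 0)) = ENNReal.ofReal x := by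
      intro u
      rw [if_pos h, if_neg (by push_neg; intro hc; exact absurd hc (not_lt.mpr h))]
      ring_nf
    simp only [this]
    rw [setLIntegral_const, Real.volume_Icc]
    norm_num
  · push_neg at h
    have key : ∀ u : ℝ, ENNReal.ofReal (x * (if 1 / a ≤ x then 1 else 0)
        + (1 / a) * (if x < 1 / a ∧ u / a ≤ x then 1 else 0))
        = Set.indicator (Iic (a * x)) (fun _ => ENNReal.ofReal (1 / a)) u := by
      intro u
      rw [if_neg (not_le.mpr h)]
      have hdiv : u / a ≤ x ↔ u ≤ a * x := by
        rw [div_le_iff₀ ha0, mul_comm]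
      by_cases hu : u ≤ a * x
      · rw [if_pos ⟨h, hdiv.mpr hu⟩, Set.indicator_of_mem (Set.mem_Iic.mpr hu)]
        ring_nf
      · rw [if_neg (fun hc => hu (hdiv.mp hc.2)),
          Set.indicator_of_notMem (fun hc => hu (Set.mem_Iic.mp hc))]
        simp
    simp only [key]
    rw [lintegral_indicator measurableSet_Iic,
      Measure.restrict_restrict measurableSet_Iic,
      setLIntegral_const]
    have hset : Iic (a * x) ∩ Icc 0 1 = Icc 0 (a * x) := by
      ext u
      simp only [Set.mem_inter_iff, Set.mem_Iic, Set.mem_Icc]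
      constructor
      · rintro ⟨h1, h2, h3⟩; exact ⟨h2, h1⟩
      · rintro ⟨h1, h2⟩
        have hax1 : a * x < 1 := by
          calc a * x < a * (1 / a) := mul_lt_mul_of_pos_left h ha0
            _ = 1 := by field_simp
        exact ⟨h2, h1, h2.trans hax1.le⟩
    rw [hset, Real.volume_Icc]
    rw [← ENNReal.ofReal_mul (by positivity)]
    congr 1
    field_simp
    ring

/-- Adaptive stochastic rounding `S_α̂(X) = X·1{X ≥ 1/α̂} + (1/α̂)·1{1/α̂ > X ≥ U/α̂}`
preserves expectation; in particular it maps e-values to e-values. -/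
theorem stmt1 {Ω : Type*} [MeasureSpace Ω] [IsProbabilityMeasure (ℙ : Measure Ω)]
    (X A U : Ω → ℝ)
    (hXm : Measurable X) (hAm : Measurable A) (hUm : Measurable U)
    (hX0 : ∀ ω, 0 ≤ X ω) (hA : ∀ ω, A ω ∈ Set.Ioc (0:ℝ) 1)
    (hUnif : Measure.map U ℙ = (volume : Measure ℝ).restrict (Icc (0:ℝ) 1))
    (hInd : IndepFun (fun ω => (X ω, A ω)) U ℙ)
    (S : Ω → ℝ)
    (hS : ∀ ω, S ω = X ω * (if 1 / A ω ≤ X ω then 1 else 0)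
        + (1 / A ω) * (if X ω < 1 / A ω ∧ U ω / A ω ≤ X ω then 1 else 0)) :
    (∫⁻ ω, ENNReal.ofReal (S ω) ∂ℙ = ∫⁻ ω, ENNReal.ofReal (X ω) ∂ℙ) ∧
    ((∫⁻ ω, ENNReal.ofReal (X ω) ∂ℙ ≤ 1) → ∫⁻ ω, ENNReal.ofReal (S ω) ∂ℙ ≤ 1) := by
  have hXA : Measurable (fun ω => (X ω, A ω)) := hXm.prodMk hAm
  set g : (ℝ × ℝ) × ℝ → ℝ≥0∞ := fun p => ENNReal.ofReal (p.1.1 * (if 1 / p.1.2 ≤ p.1.1 then 1 else 0)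
      + (1 / p.1.2) * (if p.1.1 < 1 / p.1.2 ∧ p.2 / p.1.2 ≤ p.1.1 then 1 else 0)) with hg_def
  have hm11 : Measurable (fun p : (ℝ × ℝ) × ℝ => p.1.1) := measurable_fst.fst
  have hm12 : Measurable (fun p : (ℝ × ℝ) × ℝ => p.1.2) := measurable_fst.snd
  have hm2 : Measurable (fun p : (ℝ × ℝ) × ℝ => p.2) := measurable_snd
  have hgm : Measurable g := by
    apply ENNReal.measurable_ofReal.comp
    apply Measurable.add
    · exact hm11.mul (Measurable.ite (measurableSet_le ((measurable_const).div hm12) hm11)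
        measurable_const measurable_const)
    · exact ((measurable_const).div hm12).mul (Measurable.ite
        ((measurableSet_lt hm11 ((measurable_const).div hm12)).inter
          (measurableSet_le (hm2.div hm12) hm11)) measurable_const measurable_const)
  have hmap : Measure.map (fun ω => ((X ω, A ω), U ω)) ℙ
      = (Measure.map (fun ω => (X ω, A ω)) ℙ).prod (Measure.map U ℙ) :=
    (indepFun_iff_map_prod_eq_prod_map_map hXA.aemeasurable hUm.aemeasurable).mp hInd
  have key : ∫⁻ ω, ENNReal.ofReal (S ω) ∂ℙ = ∫⁻ ω, ENNReal.ofReal (X ω) ∂ℙ := by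
    have step1 : ∫⁻ ω, ENNReal.ofReal (S ω) ∂ℙ = ∫⁻ ω, g ((X ω, A ω), U ω) ∂ℙ := by
      apply lintegral_congr; intro ω; rw [hS ω]
    rw [step1, ← lintegral_map hgm (hXA.prodMk hUm), hmap, hUnif]
    have hSF : SFinite ((volume : Measure ℝ).restrict (Icc (0:ℝ) 1)) := inferInstance
    rw [lintegral_prod g hgm.aemeasurable]
    have hae : ∀ᵐ q ∂(Measure.map (fun ω => (X ω, A ω)) ℙ),
        (0 ≤ q.1 ∧ q.2 ∈ Set.Ioc (0:ℝ) 1) := by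
      rw [ae_map_iff hXA.aemeasurable]
      · exact ae_of_all _ (fun ω => ⟨hX0 ω, hA ω⟩)
      · exact (measurableSet_le measurable_const measurable_fst).inter
          ((measurableSet_Ioc.preimage measurable_snd))
    have step2 : ∫⁻ q, (∫⁻ u in Icc (0:ℝ) 1, g (q, u)) ∂(Measure.map (fun ω => (X ω, A ω)) ℙ)
        = ∫⁻ q, ENNReal.ofReal q.1 ∂(Measure.map (fun ω => (X ω, A ω)) ℙ) := by
      apply lintegral_congr_ae
      filter_upwards [hae] with q hq
      exact inner_calc hq.1 hq.2
    rw [step2]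
    exact lintegral_map measurable_fst.ennreal_ofReal hXA
  exact ⟨key, fun h => key ▸ h⟩
end

section
/- For any nonnegative random variable X with E[X] ≤ 1, any constant c > 0, and any superuniform random variable U independent of X: E[1{X ≥ U/c}] ≤ c. That is, the probability that cX exceeds an independent superuniform variable is at most c·E[X] ≤ c. -/
open MeasureTheory ProbabilityTheory Set
open scoped ENNReal

/-- Randomized Markov inequality: if `X ≥ 0` with `E[X] ≤ 1`, `c > 0`, and `U`
is superuniform and independent of `X`, then `P(X ≥ U/c) ≤ c`. -/
theorem stmt4 {Ω : Type*} [MeasureSpace Ω] [IsProbabilityMeasure (ℙ : Measure Ω)]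
    (X U : Ω → ℝ) (hXm : Measurable X) (hUm : Measurable U)
    (hX0 : ∀ ω, 0 ≤ X ω) (hXe : ∫⁻ ω, ENNReal.ofReal (X ω) ∂ℙ ≤ 1)
    (hU : ∀ s ∈ Set.Icc (0:ℝ) 1, ℙ {ω | U ω ≤ s} ≤ ENNReal.ofReal s)
    (hInd : IndepFun X U ℙ)
    (c : ℝ) (hc : 0 < c) :
    ℙ {ω | U ω / c ≤ X ω} ≤ ENNReal.ofReal c := by
  have hmap : (ℙ : Measure Ω).map (fun ω => (X ω, U ω)) =
      ((ℙ : Measure Ω).map X).prod ((ℙ : Measure Ω).map U) :=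
    (indepFun_iff_map_prod_eq_prod_map_map hXm.aemeasurable hUm.aemeasurable).mp hInd
  have hmeas : MeasurableSet {p : ℝ × ℝ | p.2 / c ≤ p.1} :=
    measurableSet_le (measurable_snd.div_const c) measurable_fst
  have hset : {ω | U ω / c ≤ X ω} = (fun ω => (X ω, U ω)) ⁻¹' {p : ℝ × ℝ | p.2 / c ≤ p.1} :=
    rfl
  rw [hset, ← Measure.map_apply (hXm.prodMk hUm) hmeas, hmap, Measure.prod_apply hmeas]
  have hν : ∀ x : ℝ, 0 ≤ x →
      ((ℙ : Measure Ω).map U) (Prod.mk x ⁻¹' {p : ℝ × ℝ | p.2 / c ≤ p.1})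
        ≤ ENNReal.ofReal c * ENNReal.ofReal x := by
    intro x hx
    have hpre : (Prod.mk x ⁻¹' {p : ℝ × ℝ | p.2 / c ≤ p.1}) = Set.Iic (c * x) := by
      ext u
      simp [Set.mem_preimage, div_le_iff₀ hc, mul_comm]
    rw [hpre, Measure.map_apply hUm measurableSet_Iic]
    rw [← ENNReal.ofReal_mul hc.le]
    have hUp : U ⁻¹' Set.Iic (c * x) = {ω | U ω ≤ c * x} := rfl
    rw [hUp]
    by_cases h1 : c * x ≤ 1
    · exact hU (c * x) ⟨mul_nonneg hc.le hx, h1⟩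
    · calc ℙ {ω | U ω ≤ c * x} ≤ 1 := prob_le_one
        _ ≤ ENNReal.ofReal (c * x) := by
            rw [← ENNReal.ofReal_one]
            exact ENNReal.ofReal_le_ofReal (le_of_not_ge h1)
  have hae : ∀ᵐ x ∂((ℙ : Measure Ω).map X), 0 ≤ x := by
    rw [ae_map_iff hXm.aemeasurable measurableSet_Ici]
    exact Filter.Eventually.of_forall hX0
  calc ∫⁻ x, ((ℙ : Measure Ω).map U) (Prod.mk x ⁻¹' {p : ℝ × ℝ | p.2 / c ≤ p.1})
        ∂((ℙ : Measure Ω).map X)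
      ≤ ∫⁻ x, ENNReal.ofReal c * ENNReal.ofReal x ∂((ℙ : Measure Ω).map X) := by
        refine lintegral_mono_ae ?_
        filter_upwards [hae] with x hx using hν x hx
    _ = ENNReal.ofReal c * ∫⁻ x, ENNReal.ofReal x ∂((ℙ : Measure Ω).map X) :=
        lintegral_const_mul _ ENNReal.measurable_ofReal
    _ = ENNReal.ofReal c * ∫⁻ ω, ENNReal.ofReal (X ω) ∂ℙ := by
        rw [lintegral_map ENNReal.measurable_ofReal hXm]
    _ ≤ ENNReal.ofReal c * 1 := mul_le_mul_right hXe _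
    _ = ENNReal.ofReal c := mul_one _
end

section
/- Let X_1,…,X_K be nonnegative random variables with Σ_{i∈N} E[X_i] ≤ K, where N ⊆ [K] is the set of true nulls, and let U be uniform on [0,1] independent of (X_1,…,X_K). Apply the BH procedure at level α to the values (U/X_1,…,U/X_K): i.e., reject the hypotheses corresponding to the k*_U largest e-values, where k*_U = max{ i : U/X_{[i]} ≤ α i / K } (here X_{[i]} is the i-th largest X). Then the false discovery rate E[|D ∩ N| / (|D| ∨ 1)] is at most α. -/
open MeasureTheory ProbabilityTheory Set
open scoped ENNReal

/-- The number of rejections of the U-eBH procedure at level `α`, applied to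
e-values `X` with uniform randomizer value `u`: the largest `k ≤ K` such that
at least `k` of the e-values satisfy `u ≤ α k X_j / K` (equivalently, the
`k`-th largest e-value `X_[k]` satisfies `u / X_[k] ≤ α k / K`). -/
noncomputable def kUeBH (K : ℕ) (α : ℝ) (X : Fin K → ℝ) (u : ℝ) : ℕ :=
  sSup {k : ℕ | k ≤ K ∧
    k ≤ (Finset.univ.filter (fun j : Fin K => u ≤ α * k * X j / K)).card}

namespace UeBH


lemma set_nonempty (K : ℕ) (α : ℝ) (X : Fin K → ℝ) (u : ℝ) :
    (0:ℕ) ∈ {k : ℕ | k ≤ K ∧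
      k ≤ (Finset.univ.filter (fun j : Fin K => u ≤ α * k * X j / K)).card} := by
  simp

lemma set_bddAbove (K : ℕ) (α : ℝ) (X : Fin K → ℝ) (u : ℝ) :
    BddAbove {k : ℕ | k ≤ K ∧
      k ≤ (Finset.univ.filter (fun j : Fin K => u ≤ α * k * X j / K)).card} :=
  ⟨K, fun _ h => h.1⟩

lemma kUeBH_mem (K : ℕ) (α : ℝ) (X : Fin K → ℝ) (u : ℝ) :
    kUeBH K α X u ≤ K ∧ kUeBH K α X u ≤
      (Finset.univ.filter (fun j : Fin K => u ≤ α * (kUeBH K α X u) * X j / K)).card :=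
  Nat.sSup_mem ⟨0, set_nonempty K α X u⟩ (set_bddAbove K α X u)

lemma kUeBH_antitone (K : ℕ) (α : ℝ) (X : Fin K → ℝ) :
    Antitone (fun u => kUeBH K α X u) := by
  intro u v huv
  refine csSup_le_csSup (set_bddAbove K α X u) ⟨0, set_nonempty K α X v⟩ ?_
  rintro k ⟨hk, hcard⟩
  refine ⟨hk, hcard.trans (Finset.card_le_card ?_)⟩
  intro j hj
  simp only [Finset.mem_filter, Finset.mem_univ, true_and] at hj ⊢
  exact le_trans huv hj

lemma core_ineq {c vj v' : ℝ} {j : ℕ} (hc : 0 ≤ c) (hv' : 0 ≤ v') (hle : v' ≤ vj)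
    (hj : 1 ≤ j) :
    max (min vj (c*j) - v') 0 / j + min v' (c*(j+1)) / (j+1)
      ≤ min vj (c*j) / j := by
  have hj0 : (0:ℝ) < j := by exact_mod_cast hj
  have hj1 : (0:ℝ) < (j:ℝ) + 1 := by positivity
  set a := min vj (c*(j:ℝ)) with ha
  have ha0 : 0 ≤ a := le_min (hv'.trans hle) (by positivity)
  have key : min v' (c*((j:ℝ)+1)) / ((j:ℝ)+1) ≤ min a v' / j := by
    rcases le_or_gt v' a with h | h
    · calc min v' (c*((j:ℝ)+1)) / ((j:ℝ)+1) ≤ v' / ((j:ℝ)+1) := by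
            gcongr; exact min_le_left _ _
        _ ≤ v' / j := by gcongr; linarith
        _ = min a v' / j := by rw [min_eq_right h]
    · have haj : a = c * j := by
        rcases le_total vj (c*(j:ℝ)) with h1 | h1
        · exfalso; rw [ha, min_eq_left h1] at h; linarith
        · rw [ha, min_eq_right h1]
      rw [min_eq_left h.le]
      calc min v' (c*((j:ℝ)+1)) / ((j:ℝ)+1) ≤ c*((j:ℝ)+1) / ((j:ℝ)+1) := by
            gcongr; exact min_le_right _ _
        _ = c := by field_simp
        _ = c * j / j := by field_simp
        _ = a / j := by rw [haj]
  have hsplit : max (a - v') 0 + min a v' = a := by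
    rcases le_total v' a with h | h
    · rw [max_eq_left (by linarith), min_eq_right h]; ring
    · rw [max_eq_right (by linarith), min_eq_left h]; ring
  calc max (a - v') 0 / j + min v' (c*((j:ℝ)+1)) / ((j:ℝ)+1)
      ≤ max (a - v') 0 / j + min a v' / j := by linarith [key]
    _ = (max (a - v') 0 + min a v') / j := by ring
    _ = a / j := by rw [hsplit]

lemma key_real (c : ℝ) (hc : 0 ≤ c) (v : ℕ → ℝ) (hv0 : ∀ k, 0 ≤ v k)
    (hmono : ∀ k, v (k+1) ≤ v k) (K : ℕ) (hvK : v (K+1) = 0) :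
    ∀ n j, 1 ≤ j → j + n = K →
      ∑ k ∈ Finset.Icc j K, max (min (v k) (c*k) - v (k+1)) 0 / k
        ≤ min (v j) (c*j) / j := by
  intro n
  induction n with
  | zero =>
      intro j hj hjK
      simp only [Nat.add_zero] at hjK
      subst hjK
      rw [Finset.Icc_self, Finset.sum_singleton, hvK]
      have : min (v j) (c*(j:ℝ)) - 0 = min (v j) (c*(j:ℝ)) := by ring
      rw [this, max_eq_left (le_min (hv0 j) (by positivity))]
  | succ n ih =>
      intro j hj hjK
      have hicc : Finset.Icc j K = insert j (Finset.Icc (j+1) K) := by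
        ext m; simp only [Finset.mem_Icc, Finset.mem_insert]; omega
      rw [hicc, Finset.sum_insert (by simp)]
      have h2 := ih (j+1) (by omega) (by omega)
      have h3 := core_ineq (c := c) (vj := v j) (v' := v (j+1)) (j := j)
        hc (hv0 _) (hmono j) hj
      push_cast at h2 h3 ⊢
      linarith

lemma integral_bound (K : ℕ) (hK : 0 < K) (α : ℝ) (hα : 0 < α)
    (x : Fin K → ℝ) (hx : ∀ j, 0 ≤ x j) (i : Fin K) :
    ∫⁻ u in Icc (0:ℝ) 1,
        (if u ≤ α * (kUeBH K α x u) * x i / K then (1:ℝ≥0∞) else 0)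
          / ((max (kUeBH K α x u) 1 : ℕ) : ℝ≥0∞) ∂volume
      ≤ ENNReal.ofReal (α * x i / K) := by
  set g : ℝ → ℕ := fun u => kUeBH K α x u with hg
  have hganti : Antitone g := kUeBH_antitone K α x
  have hgle : ∀ u, g u ≤ K := fun u => (kUeBH_mem K α x u).1
  set c : ℝ := α * x i / K with hc
  have hc0 : 0 ≤ c := div_nonneg (mul_nonneg hα.le (hx i)) (Nat.cast_nonneg K)
  have hrw : ∀ u, α * (g u) * x i / K = c * g u := by
    intro u; rw [hc]; ring
  -- the sets B k
  set B : ℕ → Set ℝ := fun k => {u | g u = k ∧ u ≤ c * k} with hB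
  have hBmeas : ∀ k, MeasurableSet (B k) := by
    intro k
    apply Set.OrdConnected.measurableSet
    constructor
    rintro u ⟨hu1, hu2⟩ w ⟨hw1, hw2⟩ z hz
    constructor
    · have h1 : g w ≤ g z := hganti hz.2
      have h2 : g z ≤ g u := hganti hz.1
      omega
    · exact hz.2.trans hw2
  -- pointwise bound
  have hpt : ∀ u, (if u ≤ α * (g u) * x i / K then (1:ℝ≥0∞) else 0)
      / ((max (g u) 1 : ℕ) : ℝ≥0∞)
      ≤ ∑ k ∈ Finset.range (K+1),
          Set.indicator (B k) (fun _ => (((max k 1 : ℕ) : ℝ≥0∞))⁻¹) u := by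
    intro u
    by_cases h : u ≤ α * (g u) * x i / K
    · rw [if_pos h]
      have hmem : u ∈ B (g u) := ⟨rfl, by rw [← hrw u]; exact h⟩
      have : Set.indicator (B (g u)) (fun _ => (((max (g u) 1 : ℕ) : ℝ≥0∞))⁻¹) u
          = (((max (g u) 1 : ℕ) : ℝ≥0∞))⁻¹ := Set.indicator_of_mem hmem _
      rw [one_div]
      rw [← this]
      exact Finset.single_le_sum (f := fun k =>
        Set.indicator (B k) (fun _ => (((max k 1 : ℕ) : ℝ≥0∞))⁻¹) u)
        (fun _ _ => by positivity) (Finset.mem_range.2 (Nat.lt_succ_of_le (hgle u)))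
    · rw [if_neg h]; simp
  calc ∫⁻ u in Icc (0:ℝ) 1,
        (if u ≤ α * (g u) * x i / K then (1:ℝ≥0∞) else 0)
          / ((max (g u) 1 : ℕ) : ℝ≥0∞) ∂volume
      ≤ ∫⁻ u in Icc (0:ℝ) 1, ∑ k ∈ Finset.range (K+1),
          Set.indicator (B k) (fun _ => (((max k 1 : ℕ) : ℝ≥0∞))⁻¹) u ∂volume :=
        lintegral_mono hpt
    _ = ∑ k ∈ Finset.range (K+1), ∫⁻ u in Icc (0:ℝ) 1,
          Set.indicator (B k) (fun _ => (((max k 1 : ℕ) : ℝ≥0∞))⁻¹) u ∂volume := by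
        apply lintegral_finset_sum
        intro k _
        exact (measurable_const.indicator (hBmeas k))
    _ = ∑ k ∈ Finset.range (K+1),
          (((max k 1 : ℕ) : ℝ≥0∞))⁻¹ * volume (B k ∩ Icc (0:ℝ) 1) := by
        apply Finset.sum_congr rfl
        intro k _
        rw [lintegral_indicator_const (hBmeas k), Measure.restrict_apply (hBmeas k)]
    _ ≤ ENNReal.ofReal c := by
        set v : ℕ → ℝ := fun k => sSup {u | u ∈ Icc (0:ℝ) 1 ∧ k ≤ g u} with hv
        have hbdd : ∀ k, BddAbove {u | u ∈ Icc (0:ℝ) 1 ∧ k ≤ g u} :=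
          fun k => ⟨1, fun u hu => hu.1.2⟩
        have hv0 : ∀ k, 0 ≤ v k := fun k => Real.sSup_nonneg (fun u hu => hu.1.1)
        have hmono : ∀ k, v (k+1) ≤ v k := by
          intro k
          apply Real.sSup_le _ (hv0 k)
          intro u hu
          exact le_csSup (hbdd k) ⟨hu.1, (Nat.le_succ k).trans hu.2⟩
        have hvK : v (K+1) = 0 := by
          have : {u | u ∈ Icc (0:ℝ) 1 ∧ K+1 ≤ g u} = ∅ := by
            ext u
            simp only [Set.mem_setOf_eq, Set.mem_empty_iff_false, iff_false, not_and]
            intro _ h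
            have := hgle u
            omega
          rw [hv]; simp only [this]; exact Real.sSup_empty
        have hsub : ∀ k, B k ∩ Icc (0:ℝ) 1 ⊆ Icc (v (k+1)) (min (v k) (c*k)) := by
          rintro k u ⟨⟨hgu, hck⟩, huI⟩
          constructor
          · by_contra hlt
            push_neg at hlt
            rcases Set.eq_empty_or_nonempty {w | w ∈ Icc (0:ℝ) 1 ∧ k+1 ≤ g w} with he | hne
            · rw [hv] at hlt
              simp only [he] at hlt
              rw [Real.sSup_empty] at hlt
              exact absurd huI.1 (by linarith)
            · obtain ⟨w, hwS, hw⟩ := exists_lt_of_lt_csSup hne hlt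
              have h1 : g w ≤ g u := hganti hw.le
              have h2 : k+1 ≤ g w := hwS.2
              omega
          · exact le_min (le_csSup (hbdd k) ⟨huI, hgu.ge⟩) hck
        have hterm : ∀ k ∈ Finset.Icc 1 K,
            (((max k 1 : ℕ) : ℝ≥0∞))⁻¹ * volume (B k ∩ Icc (0:ℝ) 1)
              ≤ ENNReal.ofReal (max (min (v k) (c*k) - v (k+1)) 0 / k) := by
          intro k hk
          rw [Finset.mem_Icc] at hk
          have hk1 : max k 1 = k := max_eq_left hk.1
          have hkpos : (0:ℝ) < k := by exact_mod_cast hk.1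
          calc (((max k 1 : ℕ) : ℝ≥0∞))⁻¹ * volume (B k ∩ Icc (0:ℝ) 1)
              ≤ ((k : ℕ) : ℝ≥0∞)⁻¹ * volume (Icc (v (k+1)) (min (v k) (c*k))) := by
                rw [hk1]; exact mul_le_mul_right (measure_mono (hsub k)) _
            _ = ((k : ℕ) : ℝ≥0∞)⁻¹ * ENNReal.ofReal (min (v k) (c*k) - v (k+1)) := by
                rw [Real.volume_Icc]
            _ ≤ ((k : ℕ) : ℝ≥0∞)⁻¹ * ENNReal.ofReal (max (min (v k) (c*k) - v (k+1)) 0) := by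
                exact mul_le_mul_right (ENNReal.ofReal_le_ofReal (le_max_left _ _)) _
            _ = ENNReal.ofReal (max (min (v k) (c*k) - v (k+1)) 0 / k) := by
                rw [ENNReal.ofReal_div_of_pos hkpos, ENNReal.ofReal_natCast,
                  div_eq_mul_inv, mul_comm]
        have hzero : (((max 0 1 : ℕ) : ℝ≥0∞))⁻¹ * volume (B 0 ∩ Icc (0:ℝ) 1) = 0 := by
          have hsub0 : B 0 ∩ Icc (0:ℝ) 1 ⊆ {(0:ℝ)} := by
            rintro u ⟨⟨hgu, hck⟩, huI⟩
            simp only [Nat.cast_zero, mul_zero] at hck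
            simp only [Set.mem_singleton_iff]
            linarith [huI.1]
          have : volume (B 0 ∩ Icc (0:ℝ) 1) = 0 :=
            measure_mono_null hsub0 Real.volume_singleton
          rw [this, mul_zero]
        have hrange : Finset.range (K+1) = insert 0 (Finset.Icc 1 K) := by
          ext m; simp only [Finset.mem_range, Finset.mem_insert, Finset.mem_Icc]; omega
        rw [hrange, Finset.sum_insert (by simp)]
        rw [hzero, zero_add]
        calc ∑ k ∈ Finset.Icc 1 K,
              (((max k 1 : ℕ) : ℝ≥0∞))⁻¹ * volume (B k ∩ Icc (0:ℝ) 1)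
            ≤ ∑ k ∈ Finset.Icc 1 K,
              ENNReal.ofReal (max (min (v k) (c*k) - v (k+1)) 0 / k) :=
              Finset.sum_le_sum hterm
          _ = ENNReal.ofReal (∑ k ∈ Finset.Icc 1 K,
              max (min (v k) (c*k) - v (k+1)) 0 / k) := by
              rw [ENNReal.ofReal_sum_of_nonneg]
              intro k hk
              positivity
          _ ≤ ENNReal.ofReal c := by
              apply ENNReal.ofReal_le_ofReal
              have := key_real c hc0 v hv0 hmono K hvK (K-1) 1 le_rfl (by omega)
              push_cast at this
              calc ∑ k ∈ Finset.Icc 1 K, max (min (v k) (c*k) - v (k+1)) 0 / k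
                  ≤ min (v 1) (c*1) / 1 := this
                _ ≤ c := by
                    rw [div_one, mul_one]
                    exact min_le_right _ _

lemma measurable_card (K : ℕ) (α : ℝ) (k : ℕ) :
    Measurable (fun p : (Fin K → ℝ) × ℝ =>
      (Finset.univ.filter (fun j : Fin K => p.2 ≤ α * k * p.1 j / K)).card) := by
  have : (fun p : (Fin K → ℝ) × ℝ =>
      (Finset.univ.filter (fun j : Fin K => p.2 ≤ α * k * p.1 j / K)).card)
      = fun p => ∑ j : Fin K, if p.2 ≤ α * k * p.1 j / K then 1 else 0 := by
    funext p
    rw [Finset.card_filter]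
  rw [this]
  apply Finset.measurable_sum
  intro j _
  apply Measurable.ite _ measurable_const measurable_const
  exact measurableSet_le measurable_snd (by fun_prop)

lemma kUeBH_eq_iff (K : ℕ) (α : ℝ) (x : Fin K → ℝ) (u : ℝ) (n : ℕ) :
    kUeBH K α x u = n ↔
      (n ≤ K ∧ n ≤ (Finset.univ.filter (fun j : Fin K => u ≤ α * n * x j / K)).card)
      ∧ ∀ m ∈ Finset.Icc (n+1) K,
        ¬ m ≤ (Finset.univ.filter (fun j : Fin K => u ≤ α * m * x j / K)).card := by
  constructor
  · intro h
    refine ⟨h ▸ Nat.sSup_mem ⟨0, set_nonempty K α x u⟩ (set_bddAbove K α x u), ?_⟩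
    intro m hm hcard
    rw [Finset.mem_Icc] at hm
    have : m ≤ kUeBH K α x u := le_csSup (set_bddAbove K α x u) ⟨hm.2, hcard⟩
    omega
  · rintro ⟨hn, hm⟩
    apply le_antisymm
    · apply csSup_le ⟨0, set_nonempty K α x u⟩
      rintro k ⟨hk, hcard⟩
      by_contra hkn
      exact hm k (Finset.mem_Icc.2 ⟨by omega, hk⟩) hcard
    · exact le_csSup (set_bddAbove K α x u) hn

lemma measurable_kUeBH (K : ℕ) (α : ℝ) :
    Measurable (fun p : (Fin K → ℝ) × ℝ => kUeBH K α p.1 p.2) := by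
  apply measurable_to_countable'
  intro n
  have : (fun p : (Fin K → ℝ) × ℝ => kUeBH K α p.1 p.2) ⁻¹' {n}
      = ({p : (Fin K → ℝ) × ℝ | n ≤ K} ∩
          {p | n ≤ (Finset.univ.filter (fun j : Fin K => p.2 ≤ α * n * p.1 j / K)).card})
        ∩ ⋂ m ∈ Finset.Icc (n+1) K,
          {p : (Fin K → ℝ) × ℝ |
            m ≤ (Finset.univ.filter (fun j : Fin K => p.2 ≤ α * m * p.1 j / K)).card}ᶜ := by
    ext p
    simp only [Set.mem_preimage, Set.mem_singleton_iff, kUeBH_eq_iff, Set.mem_inter_iff,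
      Set.mem_setOf_eq, Set.mem_iInter, Set.mem_compl_iff]
  rw [this]
  apply MeasurableSet.inter
  · exact (MeasurableSet.const _).inter ((measurable_card K α n) measurableSet_Ici)
  · exact MeasurableSet.biInter (Finset.Icc (n+1) K).countable_toSet
      (fun m _ => ((measurable_card K α m) measurableSet_Ici).compl)

lemma measurable_G (K : ℕ) (α : ℝ) (i : Fin K) :
    Measurable (fun p : (Fin K → ℝ) × ℝ =>
      (if p.2 ≤ α * (kUeBH K α p.1 p.2) * p.1 i / K then (1:ℝ≥0∞) else 0)
        / ((max (kUeBH K α p.1 p.2) 1 : ℕ) : ℝ≥0∞)) := by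
  have hk := measurable_kUeBH K α
  apply Measurable.div
  · apply Measurable.ite _ measurable_const measurable_const
    apply measurableSet_le measurable_snd
    have h1 : Measurable (fun p : (Fin K → ℝ) × ℝ => ((kUeBH K α p.1 p.2 : ℕ) : ℝ)) :=
      (measurable_from_top (f := (Nat.cast : ℕ → ℝ))).comp hk
    exact (((measurable_const.mul h1).mul
      ((measurable_pi_apply i).comp measurable_fst)).div_const K)
  · exact (measurable_from_top (f := fun n : ℕ => ((max n 1 : ℕ) : ℝ≥0∞))).comp hk


end UeBH

/-- FDR control of the U-eBH procedure (BH applied to `(U/X_1, …, U/X_K)`)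
under arbitrary dependence of the e-values: if `Σ_{i ∈ N} E[X_i] ≤ K` and `U`
is uniform on `[0,1]` independent of the e-values, then FDR ≤ α. -/
theorem stmt5 {Ω : Type*} [MeasureSpace Ω] [IsProbabilityMeasure (ℙ : Measure Ω)]
    (K : ℕ) (hK : 0 < K) (α : ℝ) (hα : 0 < α) (hα1 : α ≤ 1)
    (X : Fin K → Ω → ℝ) (hXm : ∀ i, Measurable (X i)) (hX0 : ∀ i ω, 0 ≤ X i ω)
    (N : Finset (Fin K))
    (hN : ∑ i ∈ N, ∫⁻ ω, ENNReal.ofReal (X i ω) ∂ℙ ≤ K)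
    (U : Ω → ℝ) (hUm : Measurable U)
    (hUnif : Measure.map U ℙ = (volume : Measure ℝ).restrict (Icc (0:ℝ) 1))
    (hInd : IndepFun (fun ω i => X i ω) U ℙ)
    (D : Ω → Finset (Fin K))
    (hD : ∀ ω, D ω = Finset.univ.filter
      (fun j => U ω ≤ α * (kUeBH K α (fun i => X i ω) (U ω)) * X j ω / K)) :
    ∫⁻ ω, ((D ω ∩ N).card : ℝ≥0∞) / ((max (D ω).card 1 : ℕ) : ℝ≥0∞) ∂ℙ
      ≤ ENNReal.ofReal α := by
  classical
  set XV : Ω → (Fin K → ℝ) := fun ω i => X i ω with hXV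
  have hXVm : Measurable XV := measurable_pi_lambda _ hXm
  set G : Fin K → ((Fin K → ℝ) × ℝ) → ℝ≥0∞ := fun i p =>
    (if p.2 ≤ α * (kUeBH K α p.1 p.2) * p.1 i / K then (1:ℝ≥0∞) else 0)
      / ((max (kUeBH K α p.1 p.2) 1 : ℕ) : ℝ≥0∞) with hG
  have hGm : ∀ i, Measurable (G i) := fun i => UeBH.measurable_G K α i
  have hpair : Measurable (fun ω => (XV ω, U ω)) := hXVm.prodMk hUm
  -- pointwise FDP bound
  have hpt : ∀ ω, ((D ω ∩ N).card : ℝ≥0∞) / ((max (D ω).card 1 : ℕ) : ℝ≥0∞)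
      ≤ ∑ i ∈ N, G i (XV ω, U ω) := by
    intro ω
    set kω := kUeBH K α (XV ω) (U ω) with hkω
    have hDω : D ω = Finset.univ.filter (fun j => U ω ≤ α * kω * XV ω j / K) := hD ω
    have hcard : kω ≤ (D ω).card := by
      rw [hDω]; exact (UeBH.kUeBH_mem K α (XV ω) (U ω)).2
    have hDN : ((D ω ∩ N).card : ℝ≥0∞) = ∑ i ∈ N, if i ∈ D ω then (1:ℝ≥0∞) else 0 := by
      rw [Finset.inter_comm, ← Finset.filter_mem_eq_inter, Finset.card_filter]
      push_cast
      exact Finset.sum_congr rfl (fun i _ => by split <;> simp)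
    rw [div_eq_mul_inv, hDN, Finset.sum_mul]
    apply Finset.sum_le_sum
    intro i _
    have hinv : ((max (D ω).card 1 : ℕ) : ℝ≥0∞)⁻¹ ≤ ((max kω 1 : ℕ) : ℝ≥0∞)⁻¹ :=
      ENNReal.inv_le_inv' (by exact_mod_cast max_le_max hcard le_rfl)
    calc (if i ∈ D ω then (1:ℝ≥0∞) else 0) * ((max (D ω).card 1 : ℕ) : ℝ≥0∞)⁻¹
        ≤ (if i ∈ D ω then (1:ℝ≥0∞) else 0) * ((max kω 1 : ℕ) : ℝ≥0∞)⁻¹ :=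
          mul_le_mul' le_rfl hinv
      _ = G i (XV ω, U ω) := by
          rw [hDω, hG]
          simp only [Finset.mem_filter, Finset.mem_univ, true_and, div_eq_mul_inv]
          rfl
  -- key per-hypothesis bound
  have key : ∀ i, ∫⁻ ω, G i (XV ω, U ω) ∂ℙ
      ≤ ENNReal.ofReal (α / K) * ∫⁻ ω, ENNReal.ofReal (X i ω) ∂ℙ := by
    intro i
    have hmap : Measure.map (fun ω => (XV ω, U ω)) ℙ = (Measure.map XV ℙ).prod (Measure.map U ℙ) :=
      (indepFun_iff_map_prod_eq_prod_map_map hXVm.aemeasurable hUm.aemeasurable).mp hInd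
    have hSmeas : MeasurableSet {x : Fin K → ℝ | ∀ j, 0 ≤ x j} := by
      have : {x : Fin K → ℝ | ∀ j, 0 ≤ x j} = ⋂ j, (fun x : Fin K → ℝ => x j) ⁻¹' Ici 0 := by
        ext x; simp [Set.mem_iInter]
      rw [this]
      exact MeasurableSet.iInter (fun j => (measurable_pi_apply j) measurableSet_Ici)
    have hae : ∀ᵐ x ∂(Measure.map XV ℙ), ∀ j, 0 ≤ x j := by
      rw [MeasureTheory.ae_map_iff hXVm.aemeasurable hSmeas]
      exact ae_of_all _ (fun ω j => hX0 j ω)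
    calc ∫⁻ ω, G i (XV ω, U ω) ∂ℙ
        = ∫⁻ p, G i p ∂(Measure.map (fun ω => (XV ω, U ω)) ℙ) :=
          (lintegral_map (hGm i) hpair).symm
      _ = ∫⁻ p, G i p ∂((Measure.map XV ℙ).prod ((volume : Measure ℝ).restrict (Icc (0:ℝ) 1))) := by
          rw [hmap, hUnif]
      _ = ∫⁻ x, (∫⁻ u in Icc (0:ℝ) 1, G i (x, u)) ∂(Measure.map XV ℙ) :=
          lintegral_prod _ (hGm i).aemeasurable
      _ ≤ ∫⁻ x, ENNReal.ofReal (α * x i / K) ∂(Measure.map XV ℙ) := by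
          apply lintegral_mono_ae
          filter_upwards [hae] with x hx
          exact UeBH.integral_bound K hK α hα x hx i
      _ = ∫⁻ ω, ENNReal.ofReal (α * XV ω i / K) ∂ℙ :=
          lintegral_map (ENNReal.measurable_ofReal.comp
            (by fun_prop)) hXVm
      _ = ∫⁻ ω, ENNReal.ofReal (α / K) * ENNReal.ofReal (X i ω) ∂ℙ := by
          apply lintegral_congr
          intro ω
          rw [← ENNReal.ofReal_mul (by positivity)]
          congr 1
          field_simp
          rfl
      _ = ENNReal.ofReal (α / K) * ∫⁻ ω, ENNReal.ofReal (X i ω) ∂ℙ :=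
          lintegral_const_mul _ (ENNReal.measurable_ofReal.comp (hXm i))
  calc ∫⁻ ω, ((D ω ∩ N).card : ℝ≥0∞) / ((max (D ω).card 1 : ℕ) : ℝ≥0∞) ∂ℙ
      ≤ ∫⁻ ω, ∑ i ∈ N, G i (XV ω, U ω) ∂ℙ := lintegral_mono hpt
    _ = ∑ i ∈ N, ∫⁻ ω, G i (XV ω, U ω) ∂ℙ :=
        lintegral_finset_sum _ (fun i _ => (hGm i).comp hpair)
    _ ≤ ∑ i ∈ N, ENNReal.ofReal (α / K) * ∫⁻ ω, ENNReal.ofReal (X i ω) ∂ℙ :=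
        Finset.sum_le_sum (fun i _ => key i)
    _ = ENNReal.ofReal (α / K) * ∑ i ∈ N, ∫⁻ ω, ENNReal.ofReal (X i ω) ∂ℙ :=
        (Finset.mul_sum _ _ _).symm
    _ ≤ ENNReal.ofReal (α / K) * K := mul_le_mul' le_rfl hN
    _ = ENNReal.ofReal α := by
        rw [← ENNReal.ofReal_natCast K, ← ENNReal.ofReal_mul (by positivity)]
        congr 1
        field_simp
end

section
/- Let P_1,…,P_K be arbitrarily dependent superuniform random variables and U uniform on [0,1] independent of them. The RBY procedure at level α rejects the hypotheses with p-values at most α(⌊k*/U⌋ ∧ K)/(Kℓ_K), where k* = max{i : P_{(i)} ≤ α(⌊i/U⌋ ∧ K)/(Kℓ_K)} and ℓ_K = Σ_{j=1}^K 1/j. Then the false discovery rate of the RBY procedure is at most α. -/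
open MeasureTheory ProbabilityTheory Set
open scoped ENNReal

namespace RBY

noncomputable def mf (K k : ℕ) (u : ℝ) : ℕ := min ⌊(k:ℝ)/u⌋₊ K

noncomputable def cnt (α lK : ℝ) (K : ℕ) (x : Fin K → ℝ) (m : ℕ) : ℕ :=
  (Finset.univ.filter (fun j : Fin K => x j ≤ α * (m : ℝ) / (K * lK))).card

noncomputable def kS (α lK : ℝ) (K : ℕ) (x : Fin K → ℝ) (u : ℝ) : ℕ :=
  sSup {k : ℕ | k ≤ K ∧ k ≤ cnt α lK K x (mf K k u)}

noncomputable def Dx (α lK : ℝ) (K : ℕ) (x : Fin K → ℝ) (u : ℝ) : Finset (Fin K) :=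
  Finset.univ.filter
    (fun j : Fin K => x j ≤ α * ((mf K (kS α lK K x u) u : ℕ) : ℝ) / (K * lK))

noncomputable def w (K m : ℕ) : ℝ := if m < K then 1/m - 1/(m+1) else 1/(K:ℝ)
variable {α lK : ℝ} {K : ℕ}

lemma cnt_mono (hα : 0 ≤ α) (hKlK : 0 < (K:ℝ) * lK) (x : Fin K → ℝ) {m m' : ℕ}
    (h : m ≤ m') : cnt α lK K x m ≤ cnt α lK K x m' := by
  apply Finset.card_le_card
  intro j hj
  simp only [Finset.mem_filter] at *
  refine ⟨hj.1, le_trans hj.2 ?_⟩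
  gcongr

lemma mf_anti {k : ℕ} {u v : ℝ} (hu : 0 < u) (huv : u ≤ v) : mf K k v ≤ mf K k u := by
  unfold mf
  refine min_le_min (Nat.floor_mono ?_) le_rfl
  exact div_le_div_of_nonneg_left (by positivity) hu huv

lemma mf_mono {k k' : ℕ} {u : ℝ} (hu : 0 ≤ u) (h : k ≤ k') : mf K k u ≤ mf K k' u := by
  unfold mf
  refine min_le_min (Nat.floor_mono ?_) le_rfl
  gcongr

lemma kS_le_K (x : Fin K → ℝ) (u : ℝ) : kS α lK K x u ≤ K ∧
    kS α lK K x u ≤ cnt α lK K x (mf K (kS α lK K x u) u) :=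
  Nat.sSup_mem (⟨0, by simp⟩ : {k : ℕ | k ≤ K ∧ k ≤ cnt α lK K x (mf K k u)}.Nonempty)
    ⟨K, fun k hk => hk.1⟩

lemma kS_anti (hα : 0 ≤ α) (hKlK : 0 < (K:ℝ) * lK) (x : Fin K → ℝ) {u v : ℝ}
    (hu : 0 < u) (huv : u ≤ v) : kS α lK K x v ≤ kS α lK K x u := by
  apply csSup_le_csSup ⟨K, fun k hk => hk.1⟩ ⟨0, by simp⟩
  intro k hk
  exact ⟨hk.1, hk.2.trans (cnt_mono hα hKlK x (mf_anti hu huv))⟩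

lemma Dx_anti (hα : 0 ≤ α) (hKlK : 0 < (K:ℝ) * lK) (x : Fin K → ℝ) {u v : ℝ}
    (hu : 0 < u) (huv : u ≤ v) : Dx α lK K x v ⊆ Dx α lK K x u := by
  intro j hj
  simp only [Dx, Finset.mem_filter] at *
  refine ⟨hj.1, le_trans hj.2 ?_⟩
  have h1 : mf K (kS α lK K x v) v ≤ mf K (kS α lK K x u) u :=
    le_trans (mf_anti hu huv) (mf_mono hu.le (kS_anti hα hKlK x hu huv))
  gcongr






lemma w_nonneg {K m : ℕ} (hm : 1 ≤ m) : 0 ≤ w K m := by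
  unfold w
  split
  · have h0 : (0:ℝ) < m := by exact_mod_cast hm
    have : (1:ℝ)/(m+1) ≤ 1/m := by
      apply one_div_le_one_div_of_le h0; linarith
    linarith
  · positivity

lemma W1aux {K : ℕ} : ∀ d m0, 1 ≤ m0 → m0 + d = K →
    ∑ m ∈ Finset.Icc m0 K, w K m = 1/(m0:ℝ) := by
  intro d
  induction d with
  | zero =>
    intro m0 hm0 hK
    have : m0 = K := by omega
    subst this
    simp only [Finset.Icc_self, Finset.sum_singleton]
    unfold w
    rw [if_neg (lt_irrefl _)]
  | succ d ih =>
    intro m0 hm0 hK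
    have hlt : m0 < K := by omega
    rw [Finset.Icc_eq_cons_Ioc (le_of_lt hlt), Finset.sum_cons, ← Finset.Icc_add_one_left_eq_Ioc,
      ih (m0+1) (by omega) (by omega)]
    unfold w
    rw [if_pos hlt]
    push_cast
    ring

lemma W1 {K m0 : ℕ} (hm0 : 1 ≤ m0) (hm0K : m0 ≤ K) :
    ∑ m ∈ Finset.Icc m0 K, w K m = 1/(m0:ℝ) :=
  W1aux (K - m0) m0 hm0 (by omega)

lemma sum_w_mul {K : ℕ} (hK : 0 < K) :
    ∑ m ∈ Finset.Icc 1 K, w K m * m = ∑ m ∈ Finset.Icc 1 K, 1/(m:ℝ) := by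
  obtain ⟨K', rfl⟩ : ∃ K', K = K' + 1 := ⟨K - 1, by omega⟩
  rw [← Finset.Ico_add_one_right_eq_Icc, Finset.sum_Ico_succ_top (by omega)]
  have h1 : ∀ m ∈ Finset.Ico 1 (K'+1), w (K'+1) m * m = 1/((m:ℝ)+1) := by
    intro m hm
    rw [Finset.mem_Ico] at hm
    unfold w
    rw [if_pos (by omega)]
    have hm0 : (0:ℝ) < m := by exact_mod_cast hm.1
    field_simp
    ring
  rw [Finset.sum_congr rfl h1]
  have h2 : w (K'+1) (K'+1) * (((K'+1 : ℕ)):ℝ) = 1 := by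
    unfold w
    rw [if_neg (lt_irrefl _)]
    have h0 : ((K':ℝ)+1) ≠ 0 := by positivity
    push_cast
    field_simp
  have h3 : ∑ m ∈ Finset.Ico 1 (K'+1), 1/((m:ℝ)+1)
      = ∑ m ∈ Finset.Ico 2 (K'+2), 1/(m:ℝ) := by
    rw [← Finset.map_add_right_Ico 1 (K'+1) 1]
    rw [Finset.sum_map]
    simp [addRightEmbedding]
  rw [h2, h3]
  have h4 : ∑ m ∈ Finset.Ico 1 (K'+2), 1/(m:ℝ)
      = 1 + ∑ m ∈ Finset.Ico 2 (K'+2), 1/(m:ℝ) := by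
    rw [← Finset.sum_Ico_consecutive (f := fun m => (1:ℝ)/m) (m := 1) (n := 2) (k := K'+2)
      (by omega) (by omega)]
    norm_num
  rw [show K' + 1 + 1 = K' + 2 by ring, h4]
  push_cast
  ring



lemma sum_w_thr {α lK : ℝ} {K : ℕ} (hK : 0 < K)
    (hlK : lK = ∑ j ∈ Finset.Icc 1 K, (1:ℝ)/j) (hlKpos : 0 < lK) :
    ∑ m ∈ Finset.Icc 1 K, w K m * (α * (m:ℝ) / (K*lK)) = α/K := by
  have h1 : ∀ m ∈ Finset.Icc 1 K, w K m * (α * (m:ℝ)/(K*lK)) = (w K m * m) * (α/(K*lK)) := by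
    intro m _
    ring
  rw [Finset.sum_congr rfl h1, ← Finset.sum_mul, sum_w_mul hK, ← hlK]
  have hKne : ((K:ℝ)) ≠ 0 := by positivity
  have hlKne : lK ≠ 0 := ne_of_gt hlKpos
  field_simp

lemma meas_cnt (g : (Fin K → ℝ) × ℝ → ℕ) (hg : Measurable g) :
    Measurable (fun q : (Fin K → ℝ) × ℝ => cnt α lK K q.1 (g q)) := by
  have h : (fun q : (Fin K → ℝ) × ℝ => cnt α lK K q.1 (g q))
      = fun q => ∑ j : Fin K, if q.1 j ≤ α * ((g q : ℕ) : ℝ) / (K * lK) then 1 else 0 := by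
    funext q
    exact Finset.card_filter _ _
  rw [h]
  apply Finset.measurable_sum
  intro j _
  have hgr : Measurable (fun q : (Fin K → ℝ) × ℝ => ((g q : ℕ) : ℝ)) :=
    (measurable_from_top (f := fun n : ℕ => (n:ℝ))).comp hg
  have hq1 : Measurable (fun q : (Fin K → ℝ) × ℝ => q.1 j) := measurable_fst.eval
  have hset : MeasurableSet {q : (Fin K → ℝ) × ℝ | q.1 j ≤ α * ((g q : ℕ) : ℝ) / (K * lK)} :=
    measurableSet_le hq1 ((hgr.const_mul α).div_const _)
  exact Measurable.ite hset measurable_const measurable_const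

lemma meas_mf_fixed (k : ℕ) : Measurable (fun u : ℝ => mf K k u) := by
  have h1 : Measurable (fun u : ℝ => ((k:ℝ)/u)) := measurable_const.div measurable_id
  exact (measurable_from_top (f := fun n : ℕ => min n K)).comp (Nat.measurable_floor.comp h1)

lemma kS_eq_findGreatest (x : Fin K → ℝ) (u : ℝ) :
    kS α lK K x u = Nat.findGreatest (fun k => k ≤ cnt α lK K x (mf K k u)) K := by
  apply le_antisymm
  · have hmem := Nat.sSup_mem
      (⟨0, by simp⟩ : {k : ℕ | k ≤ K ∧ k ≤ cnt α lK K x (mf K k u)}.Nonempty)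
      ⟨K, fun k hk => hk.1⟩
    exact Nat.le_findGreatest hmem.1 hmem.2
  · rcases Nat.eq_zero_or_pos (Nat.findGreatest (fun k => k ≤ cnt α lK K x (mf K k u)) K)
      with h | h
    · rw [h]; exact Nat.zero_le _
    · apply le_csSup ⟨K, fun k hk => hk.1⟩
      exact ⟨Nat.findGreatest_le _, Nat.findGreatest_spec (P := fun k => k ≤ cnt α lK K x (mf K k u)) (Nat.zero_le K) (Nat.zero_le _)⟩

lemma meas_kS : Measurable (fun q : (Fin K → ℝ) × ℝ => kS α lK K q.1 q.2) := by
  have key : ∀ n : ℕ, Measurable (fun q : (Fin K → ℝ) × ℝ =>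
      Nat.findGreatest (fun k => k ≤ cnt α lK K q.1 (mf K k q.2)) n) := by
    intro n
    induction n with
    | zero => simpa [Nat.findGreatest] using measurable_const
    | succ n ih =>
      have h : (fun q : (Fin K → ℝ) × ℝ =>
          Nat.findGreatest (fun k => k ≤ cnt α lK K q.1 (mf K k q.2)) (n+1))
          = fun q => if n+1 ≤ cnt α lK K q.1 (mf K (n+1) q.2) then n+1
              else Nat.findGreatest (fun k => k ≤ cnt α lK K q.1 (mf K k q.2)) n := by
        funext q
        exact Nat.findGreatest_succ _
      rw [h]
      have hc : Measurable (fun q : (Fin K → ℝ) × ℝ => cnt α lK K q.1 (mf K (n+1) q.2)) :=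
        meas_cnt _ ((meas_mf_fixed (n+1)).comp measurable_snd)
      have hset : MeasurableSet {q : (Fin K → ℝ) × ℝ | n+1 ≤ cnt α lK K q.1 (mf K (n+1) q.2)} :=
        hc (by trivial : MeasurableSet {m : ℕ | n+1 ≤ m})
      exact Measurable.ite hset measurable_const ih
  have h : (fun q : (Fin K → ℝ) × ℝ => kS α lK K q.1 q.2)
      = fun q => Nat.findGreatest (fun k => k ≤ cnt α lK K q.1 (mf K k q.2)) K :=
    funext fun q => kS_eq_findGreatest _ _
  rw [h]
  exact key K

lemma meas_mfkS : Measurable (fun q : (Fin K → ℝ) × ℝ => mf K (kS α lK K q.1 q.2) q.2) := by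
  have h1 : Measurable (fun q : (Fin K → ℝ) × ℝ => ((kS α lK K q.1 q.2 : ℕ) : ℝ)) :=
    (measurable_from_top (f := fun n : ℕ => (n:ℝ))).comp meas_kS
  have h2 : Measurable (fun q : (Fin K → ℝ) × ℝ => ((kS α lK K q.1 q.2 : ℕ) : ℝ) / q.2) :=
    h1.div measurable_snd
  exact (measurable_from_top (f := fun n : ℕ => min n K)).comp (Nat.measurable_floor.comp h2)

lemma meas_cardDx : Measurable (fun q : (Fin K → ℝ) × ℝ => (Dx α lK K q.1 q.2).card) :=
  meas_cnt _ meas_mfkS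

lemma meas_memDx (i : Fin K) :
    MeasurableSet {q : (Fin K → ℝ) × ℝ | i ∈ Dx α lK K q.1 q.2} := by
  have h : {q : (Fin K → ℝ) × ℝ | i ∈ Dx α lK K q.1 q.2}
      = {q : (Fin K → ℝ) × ℝ |
          q.1 i ≤ α * ((mf K (kS α lK K q.1 q.2) q.2 : ℕ) : ℝ) / (K * lK)} := by
    ext q
    simp [Dx]
  rw [h]
  have hq1 : Measurable (fun q : (Fin K → ℝ) × ℝ => q.1 i) := measurable_fst.eval
  exact measurableSet_le hq1
    ((((measurable_from_top (f := fun n : ℕ => (n:ℝ))).comp meas_mfkS).const_mul α).div_const _)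

lemma split_FDP (N : Finset (Fin K)) (dd : Finset (Fin K)) :
    ((dd ∩ N).card : ℝ≥0∞) / ((max dd.card 1 : ℕ) : ℝ≥0∞)
      = ∑ i ∈ N, (if i ∈ dd then (((max dd.card 1 : ℕ)) : ℝ≥0∞)⁻¹ else 0) := by
  rw [div_eq_mul_inv]
  have h1 : dd ∩ N = N.filter (· ∈ dd) := by
    ext j
    simp [Finset.mem_inter, Finset.mem_filter, and_comm]
  rw [h1, Finset.card_filter]
  push_cast
  rw [Finset.sum_mul]
  apply Finset.sum_congr rfl
  intro i _
  split <;> simp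

lemma key (hα : 0 < α) (hlK1 : 1 ≤ lK) (hK : 0 < K) (x : Fin K → ℝ) (i : Fin K)
    (hxi : 0 < x i) :
    ∫⁻ u in Icc (0:ℝ) 1,
        (if i ∈ Dx α lK K x u then (((max (Dx α lK K x u).card 1 : ℕ)) : ℝ≥0∞)⁻¹ else 0)
      ≤ ∑ m ∈ Finset.Icc 1 K, ENNReal.ofReal (w K m) *
          (if x i ≤ α * (m:ℝ) / (K * lK) then 1 else 0) := by
  have hKlK : 0 < (K:ℝ) * lK := by
    have : (0:ℝ) < K := by exact_mod_cast hK
    nlinarith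
  -- least threshold index covering x i
  have hex : ∃ m : ℕ, x i ≤ α * (m:ℝ) / (K * lK) := by
    obtain ⟨m, hm⟩ := exists_nat_ge (x i * (K * lK) / α)
    refine ⟨m, ?_⟩
    rw [le_div_iff₀ hKlK]
    rw [div_le_iff₀ hα] at hm
    linarith
  set m0 := Nat.find hex with hm0def
  have hm0spec : x i ≤ α * (m0:ℝ) / (K * lK) := Nat.find_spec hex
  have hm0pos : 0 < m0 := by
    rcases Nat.eq_zero_or_pos m0 with h | h
    · exfalso
      rw [h] at hm0spec
      norm_num at hm0spec
      linarith
    · exact h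
  have hm0min : ∀ m : ℕ, x i ≤ α * (m:ℝ) / (K * lK) → m0 ≤ m :=
    fun m hm => Nat.find_min' hex hm
  have hmemD : ∀ u : ℝ, i ∈ Dx α lK K x u → m0 ≤ mf K (kS α lK K x u) u := by
    intro u hu
    exact hm0min _ (Finset.mem_filter.mp hu).2
  by_cases hm0K : m0 ≤ K
  · -- RHS is at least 1/m0
    have hRHS : ((m0:ℕ) : ℝ≥0∞)⁻¹ ≤ ∑ m ∈ Finset.Icc 1 K, ENNReal.ofReal (w K m) *
        (if x i ≤ α * (m:ℝ) / (K * lK) then 1 else 0) := by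
      have e1 : ((m0:ℕ) : ℝ≥0∞)⁻¹ = ENNReal.ofReal (∑ m ∈ Finset.Icc m0 K, w K m) := by
        rw [W1 hm0pos hm0K]
        rw [one_div, ENNReal.ofReal_inv_of_pos (by exact_mod_cast hm0pos),
          ENNReal.ofReal_natCast]
      rw [e1, ENNReal.ofReal_sum_of_nonneg (fun m hm => w_nonneg (le_trans hm0pos (Finset.mem_Icc.mp hm).1))]
      have e2 : ∀ m ∈ Finset.Icc m0 K, ENNReal.ofReal (w K m)
          = ENNReal.ofReal (w K m) * (if x i ≤ α * (m:ℝ) / (K * lK) then 1 else 0) := by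
        intro m hm
        rw [if_pos, mul_one]
        refine le_trans hm0spec ?_
        gcongr
        exact_mod_cast (Finset.mem_Icc.mp hm).1
      rw [Finset.sum_congr rfl e2]
      apply Finset.sum_le_sum_of_subset
      apply Finset.Icc_subset_Icc hm0pos le_rfl
    refine le_trans ?_ hRHS
    -- now bound the integral by 1/m0
    rw [← setLIntegral_congr (Ioc_ae_eq_Icc (α := ℝ) (μ := volume))]
    set E : Set ℝ := {u : ℝ | u ∈ Ioc (0:ℝ) 1 ∧ i ∈ Dx α lK K x u} with hE
    by_cases hEne : E.Nonempty
    · set ub := sSup E with hub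
      have hEbdd : BddAbove E := ⟨1, fun v hv => hv.1.2⟩
      have hubmem : ∀ u ∈ E, u ≤ ub := fun u hu => le_csSup hEbdd hu
      have hub1 : ub ≤ 1 := csSup_le hEne (fun v hv => hv.1.2)
      have hub0 : 0 < ub := by
        obtain ⟨v, hv⟩ := hEne
        exact lt_of_lt_of_le hv.1.1 (hubmem v hv)
      -- self-consistency: u * m0 ≤ |D(u)| on E
      have hI1 : ∀ u, u ∈ E → u * m0 ≤ ((Dx α lK K x u).card : ℝ) := by
        intro u hu
        have hu0 : 0 < u := hu.1.1
        have h1 : m0 ≤ ⌊((kS α lK K x u : ℕ) : ℝ)/u⌋₊ :=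
          le_trans (hmemD u hu.2) (min_le_left _ _)
        have h2 : (m0:ℝ) ≤ ((kS α lK K x u : ℕ) : ℝ)/u :=
          (Nat.le_floor_iff (by positivity)).mp h1
        have h3 : u * m0 ≤ ((kS α lK K x u : ℕ) : ℝ) := by
          rw [le_div_iff₀ hu0] at h2
          linarith
        have h4 : kS α lK K x u ≤ (Dx α lK K x u).card := by
          have hmem := Nat.sSup_mem
            (⟨0, by simp⟩ : {k : ℕ | k ≤ K ∧ k ≤ cnt α lK K x (mf K k u)}.Nonempty)
            ⟨K, fun k hk => hk.1⟩
          exact hmem.2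
        have h5 : ((kS α lK K x u : ℕ) : ℝ) ≤ ((Dx α lK K x u).card : ℝ) := by
          exact_mod_cast h4
        linarith
      have hψ : ∀ u, u ∈ E → ub * m0 ≤ ((Dx α lK K x u).card : ℝ) := by
        intro u hu
        have hm0R : (0:ℝ) < m0 := by exact_mod_cast hm0pos
        have hall : ∀ v ∈ E, v ≤ ((Dx α lK K x u).card : ℝ) / m0 := by
          intro v hv
          rw [le_div_iff₀ hm0R]
          rcases le_total v u with h | h
          · refine le_trans ?_ (hI1 u hu)
            have : (0:ℝ) ≤ m0 := le_of_lt hm0R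
            nlinarith
          · refine le_trans (hI1 v hv) ?_
            have := Finset.card_le_card (Dx_anti hα.le hKlK x hu.1.1 h)
            exact_mod_cast this
        have := csSup_le hEne hall
        rw [le_div_iff₀ hm0R] at this
        linarith
      -- pointwise domination by an indicator
      have hpt : ∀ u ∈ Ioc (0:ℝ) 1,
          (if i ∈ Dx α lK K x u then (((max (Dx α lK K x u).card 1 : ℕ)) : ℝ≥0∞)⁻¹ else 0)
          ≤ (Ioc (0:ℝ) ub).indicator (fun _ => ENNReal.ofReal (1/(ub * m0))) u := by
        intro u hu
        by_cases hiD : i ∈ Dx α lK K x u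
        · have huE : u ∈ E := ⟨hu, hiD⟩
          rw [if_pos hiD, Set.indicator_of_mem (Set.mem_Ioc.mpr ⟨hu.1, hubmem u huE⟩)]
          have hcpos : 0 < (Dx α lK K x u).card := Finset.card_pos.mpr ⟨i, hiD⟩
          have hmax : max (Dx α lK K x u).card 1 = (Dx α lK K x u).card :=
            max_eq_left hcpos
          rw [hmax]
          have hubm0 : (0:ℝ) < ub * m0 := by
            have : (0:ℝ) < m0 := by exact_mod_cast hm0pos
            nlinarith
          rw [one_div, ENNReal.ofReal_inv_of_pos hubm0]
          apply ENNReal.inv_le_inv'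
          rw [← ENNReal.ofReal_natCast]
          exact ENNReal.ofReal_le_ofReal (hψ u huE)
        · rw [if_neg hiD]
          exact zero_le
      calc ∫⁻ u in Ioc (0:ℝ) 1,
            (if i ∈ Dx α lK K x u then (((max (Dx α lK K x u).card 1 : ℕ)) : ℝ≥0∞)⁻¹ else 0)
          ≤ ∫⁻ u in Ioc (0:ℝ) 1,
              (Ioc (0:ℝ) ub).indicator (fun _ => ENNReal.ofReal (1/(ub * m0))) u :=
            setLIntegral_mono (measurable_const.indicator measurableSet_Ioc) hpt
        _ ≤ ∫⁻ u, (Ioc (0:ℝ) ub).indicator (fun _ => ENNReal.ofReal (1/(ub * m0))) u :=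
            setLIntegral_le_lintegral _ _
        _ = ENNReal.ofReal (1/(ub * m0)) * volume (Ioc (0:ℝ) ub) :=
            lintegral_indicator_const measurableSet_Ioc _
        _ = ENNReal.ofReal (1/(ub * m0)) * ENNReal.ofReal ub := by
            rw [Real.volume_Ioc, sub_zero]
        _ = ENNReal.ofReal ((1/(ub * m0)) * ub) := by
            rw [← ENNReal.ofReal_mul (by positivity)]
        _ = ENNReal.ofReal ((m0:ℝ))⁻¹ := by
            congr 1
            have h1 : ub ≠ 0 := ne_of_gt hub0
            have h2 : (m0:ℝ) ≠ 0 := by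
              have : (0:ℝ) < m0 := by exact_mod_cast hm0pos
              exact ne_of_gt this
            field_simp
        _ = ((m0:ℕ) : ℝ≥0∞)⁻¹ := by
            rw [ENNReal.ofReal_inv_of_pos (by exact_mod_cast hm0pos), ENNReal.ofReal_natCast]
    · -- E empty : integrand vanishes on Ioc 0 1
      have hz : ∀ u ∈ Ioc (0:ℝ) 1,
          (if i ∈ Dx α lK K x u then (((max (Dx α lK K x u).card 1 : ℕ)) : ℝ≥0∞)⁻¹ else 0)
          ≤ (0:ℝ≥0∞) := by
        intro u hu
        rw [if_neg (fun h => hEne ⟨u, hu, h⟩)]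
      refine le_trans (setLIntegral_mono measurable_const hz) ?_
      simp
  · -- m0 > K : no rejection of i ever happens
    have hz : ∀ u : ℝ,
        (if i ∈ Dx α lK K x u then (((max (Dx α lK K x u).card 1 : ℕ)) : ℝ≥0∞)⁻¹ else 0) = 0 := by
      intro u
      rw [if_neg]
      intro h
      exact hm0K (le_trans (hmemD u h) (min_le_right _ _))
    calc ∫⁻ u in Icc (0:ℝ) 1,
          (if i ∈ Dx α lK K x u then (((max (Dx α lK K x u).card 1 : ℕ)) : ℝ≥0∞)⁻¹ else 0)
        = ∫⁻ _ in Icc (0:ℝ) 1, (0:ℝ≥0∞) := by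
          apply lintegral_congr
          intro u
          exact hz u
      _ = 0 := lintegral_zero
      _ ≤ _ := zero_le

end RBY
/-- FDR control of the randomized BY procedure: for arbitrarily dependent
p-values (superuniform on the set `N` of true nulls) and `U` uniform on `[0,1]`
independent of them, rejecting the hypotheses with
`P_i ≤ α(⌊k*/U⌋ ∧ K)/(K ℓ_K)` where
`k* = max{i : P_(i) ≤ α(⌊i/U⌋ ∧ K)/(K ℓ_K)}` has FDR at most α. -/
theorem stmt9 {Ω : Type*} [MeasureSpace Ω] [IsProbabilityMeasure (ℙ : Measure Ω)]
    (K : ℕ) (hK : 0 < K) (α : ℝ) (hα : 0 < α) (hα1 : α ≤ 1)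
    (P : Fin K → Ω → ℝ) (hPm : ∀ i, Measurable (P i))
    (hP01 : ∀ i ω, P i ω ∈ Set.Icc (0:ℝ) 1)
    (N : Finset (Fin K))
    (hNull : ∀ i ∈ N, ∀ s ∈ Set.Icc (0:ℝ) 1, ℙ {ω | P i ω ≤ s} ≤ ENNReal.ofReal s)
    (U : Ω → ℝ) (hUm : Measurable U)
    (hUnif : Measure.map U ℙ = (volume : Measure ℝ).restrict (Icc (0:ℝ) 1))
    (hInd : IndepFun (fun ω i => P i ω) U ℙ)
    (lK : ℝ) (hlK : lK = ∑ j ∈ Finset.Icc 1 K, (1:ℝ) / j)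
    (kStar : Ω → ℕ)
    (hkStar : ∀ ω, kStar ω = sSup {k : ℕ | k ≤ K ∧ k ≤ (Finset.univ.filter
        (fun j : Fin K =>
          P j ω ≤ α * ((min ⌊(k:ℝ)/U ω⌋₊ K : ℕ) : ℝ) / (K * lK))).card})
    (D : Ω → Finset (Fin K))
    (hD : ∀ ω, D ω = Finset.univ.filter
        (fun j : Fin K =>
          P j ω ≤ α * ((min ⌊(kStar ω : ℝ)/U ω⌋₊ K : ℕ) : ℝ) / (K * lK))) :
    ∫⁻ ω, ((D ω ∩ N).card : ℝ≥0∞) / ((max (D ω).card 1 : ℕ) : ℝ≥0∞) ∂ℙ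
      ≤ ENNReal.ofReal α := by
  have hKR : (0:ℝ) < K := by exact_mod_cast hK
  have hlK1 : (1:ℝ) ≤ lK := by
    rw [hlK]
    have h := Finset.single_le_sum (f := fun j : ℕ => (1:ℝ)/j)
      (fun j _ => by positivity) (Finset.mem_Icc.mpr ⟨le_rfl, hK⟩)
    simpa using h
  have hlKpos : (0:ℝ) < lK := lt_of_lt_of_le one_pos hlK1
  have hKlK : (0:ℝ) < K * lK := by nlinarith
  have hXm : Measurable (fun ω => (fun j => P j ω : Fin K → ℝ)) :=
    measurable_pi_lambda _ hPm
  -- rewrite the rejection set in terms of the abstract procedure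
  have hrw : ∀ ω, D ω = RBY.Dx α lK K (fun j => P j ω) (U ω) := by
    intro ω
    rw [hD ω, hkStar ω]
    rfl
  -- the per-hypothesis contributions
  set Fi : Fin K → (Fin K → ℝ) × ℝ → ℝ≥0∞ := fun i q =>
    if i ∈ RBY.Dx α lK K q.1 q.2
      then (((max (RBY.Dx α lK K q.1 q.2).card 1 : ℕ)) : ℝ≥0∞)⁻¹ else 0 with hFidef
  set F : (Fin K → ℝ) × ℝ → ℝ≥0∞ := fun q =>
    (((RBY.Dx α lK K q.1 q.2 ∩ N).card : ℕ) : ℝ≥0∞)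
      / ((max (RBY.Dx α lK K q.1 q.2).card 1 : ℕ) : ℝ≥0∞) with hFdef
  have hsplit : ∀ q, F q = ∑ i ∈ N, Fi i q := fun q => RBY.split_FDP N _
  have hFim : ∀ i, Measurable (Fi i) := fun i =>
    Measurable.ite (RBY.meas_memDx i)
      ((measurable_from_top (f := fun n : ℕ => (((max n 1 : ℕ)) : ℝ≥0∞)⁻¹)).comp
        RBY.meas_cardDx)
      measurable_const
  have hFm : Measurable F := by
    have h : F = fun q => ∑ i ∈ N, Fi i q := funext hsplit
    rw [h]
    exact Finset.measurable_sum _ (fun i _ => hFim i)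
  have hmap : Measure.map (fun ω => ((fun j => P j ω : Fin K → ℝ), U ω)) ℙ
      = (Measure.map (fun ω => (fun j => P j ω : Fin K → ℝ)) ℙ).prod
          (volume.restrict (Icc (0:ℝ) 1)) := by
    rw [← hUnif]
    exact (ProbabilityTheory.indepFun_iff_map_prod_eq_prod_map_map
      hXm.aemeasurable hUm.aemeasurable).mp hInd
  haveI : IsProbabilityMeasure (Measure.map (fun ω => (fun j => P j ω : Fin K → ℝ)) ℙ) :=
    Measure.isProbabilityMeasure_map hXm.aemeasurable
  set μX := Measure.map (fun ω => (fun j => P j ω : Fin K → ℝ)) ℙ with hμXdef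
  -- a.e. positivity of null p-values
  have hae : ∀ i ∈ N, ∀ᵐ x ∂μX, 0 < x i := by
    intro i hi
    have hms : MeasurableSet {x : Fin K → ℝ | x i ≤ 0} :=
      measurableSet_le (measurable_pi_apply i) measurable_const
    have h0 : μX {x : Fin K → ℝ | x i ≤ 0} = 0 := by
      rw [hμXdef, Measure.map_apply hXm hms]
      have h := hNull i hi 0 ⟨le_rfl, zero_le_one⟩
      simpa using h
    rw [ae_iff]
    have hset : {x : Fin K → ℝ | ¬ 0 < x i} = {x : Fin K → ℝ | x i ≤ 0} := by
      ext x
      simp [not_lt]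
    rw [hset]
    exact h0
  -- probability bounds for the thresholds
  have hthr : ∀ i ∈ N, ∀ m ∈ Finset.Icc 1 K,
      μX {x : Fin K → ℝ | x i ≤ α * (m:ℝ) / (K * lK)}
        ≤ ENNReal.ofReal (α * (m:ℝ) / (K * lK)) := by
    intro i hi m hm
    have hmK : (m:ℝ) ≤ K := by exact_mod_cast (Finset.mem_Icc.mp hm).2
    have hms : MeasurableSet {x : Fin K → ℝ | x i ≤ α * (m:ℝ) / (K * lK)} :=
      measurableSet_le (measurable_pi_apply i) measurable_const
    rw [hμXdef, Measure.map_apply hXm hms]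
    refine hNull i hi _ ⟨by positivity, ?_⟩
    rw [div_le_one hKlK]
    nlinarith
  calc ∫⁻ ω, ((D ω ∩ N).card : ℝ≥0∞) / ((max (D ω).card 1 : ℕ) : ℝ≥0∞) ∂ℙ
      = ∫⁻ ω, F ((fun j => P j ω : Fin K → ℝ), U ω) ∂ℙ := by
        apply lintegral_congr
        intro ω
        rw [hFdef]
        simp only
        rw [hrw ω]
    _ = ∫⁻ q, F q ∂(Measure.map (fun ω => ((fun j => P j ω : Fin K → ℝ), U ω)) ℙ) :=
        (lintegral_map hFm (hXm.prodMk hUm)).symm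
    _ = ∫⁻ q, F q ∂(μX.prod (volume.restrict (Icc (0:ℝ) 1))) := by rw [hmap]
    _ = ∫⁻ x, (∫⁻ u in Icc (0:ℝ) 1, F (x, u)) ∂μX :=
        MeasureTheory.lintegral_prod F hFm.aemeasurable
    _ = ∑ i ∈ N, ∫⁻ x, (∫⁻ u in Icc (0:ℝ) 1, Fi i (x, u)) ∂μX := by
        rw [← lintegral_finset_sum
          (f := fun i x => (∫⁻ u in Icc (0:ℝ) 1, Fi i (x, u))) _
          (fun i _ => (hFim i).lintegral_prod_right')]
        apply lintegral_congr
        intro x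
        rw [← lintegral_finset_sum (f := fun i u => Fi i (x, u)) _
          (fun i _ => (hFim i).comp measurable_prodMk_left)]
        apply lintegral_congr
        intro u
        exact hsplit (x, u)
    _ ≤ ∑ i ∈ N, ENNReal.ofReal (α / K) := by
        apply Finset.sum_le_sum
        intro i hi
        have hkey : ∀ᵐ x ∂μX, (∫⁻ u in Icc (0:ℝ) 1, Fi i (x, u))
            ≤ ∑ m ∈ Finset.Icc 1 K, ENNReal.ofReal (RBY.w K m) *
                (if x i ≤ α * (m:ℝ) / (K * lK) then 1 else 0) :=
          (hae i hi).mono (fun x hx => RBY.key hα hlK1 hK x i hx)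
        refine le_trans (lintegral_mono_ae hkey) ?_
        have hmeas_ind : ∀ m : ℕ, Measurable (fun x : Fin K → ℝ =>
            (if x i ≤ α * (m:ℝ) / (K * lK) then (1:ℝ≥0∞) else 0)) := by
          intro m
          exact Measurable.ite
            (measurableSet_le (measurable_pi_apply i) measurable_const)
            measurable_const measurable_const
        rw [lintegral_finset_sum _
          (fun m _ => (hmeas_ind m).const_mul _)]
        have hterm : ∀ m ∈ Finset.Icc 1 K,
            ∫⁻ x, ENNReal.ofReal (RBY.w K m) *
               (if x i ≤ α * (m:ℝ) / (K * lK) then 1 else 0) ∂μX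
            ≤ ENNReal.ofReal (RBY.w K m * (α * (m:ℝ) / (K * lK))) := by
          intro m hm
          rw [lintegral_const_mul _ (hmeas_ind m)]
          have hind : (fun x : Fin K → ℝ =>
              (if x i ≤ α * (m:ℝ) / (K * lK) then (1:ℝ≥0∞) else 0))
              = Set.indicator {x : Fin K → ℝ | x i ≤ α * (m:ℝ) / (K * lK)}
                  (fun _ => (1:ℝ≥0∞)) := by
            funext x
            simp [Set.indicator_apply]
          rw [hind, lintegral_indicator_const
            (measurableSet_le (measurable_pi_apply i) measurable_const), one_mul]
          rw [ENNReal.ofReal_mul (RBY.w_nonneg (Finset.mem_Icc.mp hm).1)]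
          exact mul_le_mul_right (hthr i hi m hm) _
        refine le_trans (Finset.sum_le_sum hterm) ?_
        rw [← ENNReal.ofReal_sum_of_nonneg]
        · rw [RBY.sum_w_thr hK hlK hlKpos]
        · intro m hm
          have h1 : 0 ≤ RBY.w K m := RBY.w_nonneg (Finset.mem_Icc.mp hm).1
          have h2 : (0:ℝ) ≤ α * (m:ℝ) / (K * lK) := by positivity
          exact mul_nonneg h1 h2
    _ = (N.card : ℝ≥0∞) * ENNReal.ofReal (α / K) := by
        rw [Finset.sum_const, nsmul_eq_mul]
    _ ≤ (K : ℝ≥0∞) * ENNReal.ofReal (α / K) := by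
        apply mul_le_mul_left
        have h1 : N.card ≤ K := by
          refine le_trans (Finset.card_le_univ N) ?_
          simp
        exact_mod_cast h1
    _ = ENNReal.ofReal α := by
        rw [← ENNReal.ofReal_natCast K, ← ENNReal.ofReal_mul (by positivity)]
        congr 1
        field_simp
end

section
/- Define the BY calibrator f(x) = (K/α) · (⌈x·(Kℓ_K/α)⌉ ∨ 1)^{-1} · 1{x ≤ α/ℓ_K} for x ∈ [0,1], where ℓ_K = Σ_{j=1}^K 1/j. Then ∫_0^1 f(x) dx ≤ 1, so for any superuniform random variable P, f(P) is an e-value (E[f(P)] ≤ 1). -/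
open MeasureTheory ProbabilityTheory Set
open scoped ENNReal

/-- The BY calibrator `f(x) = (K/α)(⌈x·Kℓ_K/α⌉ ∨ 1)⁻¹ · 1{x ≤ α/ℓ_K}`. -/
noncomputable def byCalib (K : ℕ) (α lK : ℝ) (x : ℝ) : ℝ :=
  if x ≤ α / lK then
    ((K : ℝ) / α) / ((max ⌈x * ((K : ℝ) * lK / α)⌉₊ 1 : ℕ) : ℝ)
  else 0

/-- Telescoping sum over `Icc`. -/
lemma tele_aux (f : ℕ → ℝ) : ∀ (k m : ℕ), m ≤ k + 1 →
    ∑ n ∈ Finset.Icc m k, (f n - f (n+1)) = f m - f (k+1) := by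
  intro k
  induction k with
  | zero =>
    intro m hm
    interval_cases m
    · simp
    · simp
  | succ k ih =>
    intro m hm
    rcases Nat.lt_or_ge m (k+2) with h | h
    · have hm' : m ≤ k + 1 := Nat.lt_succ_iff.mp h
      rw [Finset.sum_Icc_succ_top hm', ih m hm']
      ring
    · have : m = k + 2 := le_antisymm hm h
      subst this
      simp

/-- Abel-type harmonic identity. -/
lemma harm_aux : ∀ M : ℕ, ∑ n ∈ Finset.Icc 1 M, ((1:ℝ)/n - 1/(n+1)) * n
    = (∑ n ∈ Finset.Icc 1 M, (1:ℝ)/n) - M/(M+1) := by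
  intro M
  induction M with
  | zero => simp
  | succ M ih =>
    rw [Finset.sum_Icc_succ_top (Nat.one_le_iff_ne_zero.mpr (Nat.succ_ne_zero M)),
        Finset.sum_Icc_succ_top (Nat.one_le_iff_ne_zero.mpr (Nat.succ_ne_zero M)), ih]
    push_cast
    have h1 : (M:ℝ) + 1 ≠ 0 := by positivity
    have h2 : (M:ℝ) + 1 + 1 ≠ 0 := by positivity
    field_simp
    ring

/-- Step values (with cutoff at `K`). -/
noncomputable def cBY (K : ℕ) (α : ℝ) (n : ℕ) : ℝ := if n ≤ K then ((K:ℝ)/α)/n else 0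

/-- Step thresholds. -/
noncomputable def tBY (K : ℕ) (α lK : ℝ) (n : ℕ) : ℝ := n * (α / (K * lK))

lemma byCalib_eq_sum (K : ℕ) (α lK : ℝ) (hK : 0 < K) (hα0 : 0 < α) (hlK0 : 0 < lK)
    (x : ℝ) :
    byCalib K α lK x =
      ∑ n ∈ Finset.Icc 1 K, (if x ≤ tBY K α lK n then cBY K α n - cBY K α (n+1) else 0) := by
  have hK0 : (0:ℝ) < K := Nat.cast_pos.mpr hK
  have hβ0 : (0:ℝ) < α / (K * lK) := by positivity
  have htK : tBY K α lK K = α / lK := by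
    unfold tBY; field_simp
  unfold byCalib
  by_cases hx2 : x ≤ α / lK
  · rw [if_pos hx2]
    set m := max ⌈x * ((K : ℝ) * lK / α)⌉₊ 1 with hm
    have hm1 : 1 ≤ m := le_max_right _ _
    have hmK : m ≤ K := by
      apply max_le _ hK
      apply Nat.ceil_le.mpr
      have hpos : (0:ℝ) ≤ (K:ℝ) * lK / α := by positivity
      have h1 : x * ((K:ℝ) * lK / α) ≤ (α / lK) * ((K:ℝ) * lK / α) :=
        mul_le_mul_of_nonneg_right hx2 hpos
      have h2 : (α / lK) * ((K:ℝ) * lK / α) = K := by field_simp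
      rw [h2] at h1; exact h1
    have hiff : ∀ n : ℕ, 1 ≤ n → (x ≤ tBY K α lK n ↔ m ≤ n) := by
      intro n hn
      have e1 : x ≤ tBY K α lK n ↔ x * ((K:ℝ) * lK / α) ≤ n := by
        unfold tBY
        rw [← div_le_iff₀ hβ0]
        have : x * ((K:ℝ) * lK / α) = x / (α / (K * lK)) := by
          field_simp
        rw [this]
      rw [e1, ← Nat.ceil_le, hm]
      constructor
      · intro h; exact max_le h hn
      · intro h; exact le_trans (le_max_left _ _) h
    have hfilter : (Finset.Icc 1 K).filter (fun n => m ≤ n) = Finset.Icc m K := by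
      ext n
      simp only [Finset.mem_filter, Finset.mem_Icc]
      omega
    calc ((K : ℝ) / α) / (m : ℝ)
        = cBY K α m - cBY K α (K+1) := by
          unfold cBY
          rw [if_pos hmK, if_neg (by omega)]
          ring
      _ = ∑ n ∈ Finset.Icc m K, (cBY K α n - cBY K α (n+1)) :=
          (tele_aux _ K m (by omega)).symm
      _ = ∑ n ∈ (Finset.Icc 1 K).filter (fun n => m ≤ n),
            (cBY K α n - cBY K α (n+1)) := by rw [hfilter]
      _ = ∑ n ∈ Finset.Icc 1 K,
            (if m ≤ n then cBY K α n - cBY K α (n+1) else 0) :=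
          (Finset.sum_filter _ _)
      _ = ∑ n ∈ Finset.Icc 1 K,
            (if x ≤ tBY K α lK n then cBY K α n - cBY K α (n+1) else 0) := by
          apply Finset.sum_congr rfl
          intro n hn
          rw [Finset.mem_Icc] at hn
          rw [if_congr (iff_of_eq (propext (hiff n hn.1)).symm) rfl rfl]
  · rw [if_neg hx2]
    symm
    apply Finset.sum_eq_zero
    intro n hn
    rw [Finset.mem_Icc] at hn
    rw [if_neg]
    intro hle
    apply hx2
    calc x ≤ tBY K α lK n := hle
      _ ≤ tBY K α lK K := by
          unfold tBY
          apply mul_le_mul_of_nonneg_right _ hβ0.le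
          exact_mod_cast hn.2
      _ = α / lK := htK

lemma sum_dt (K : ℕ) (hK : 0 < K) (α lK : ℝ) (hα0 : 0 < α) (hlK0 : 0 < lK)
    (hlK : lK = ∑ j ∈ Finset.Icc 1 K, (1:ℝ) / j) :
    ∑ n ∈ Finset.Icc 1 K, (cBY K α n - cBY K α (n+1)) * tBY K α lK n = 1 := by
  obtain ⟨K', rfl⟩ : ∃ K', K = K' + 1 := ⟨K - 1, by omega⟩
  have hKne : ((K':ℝ) + 1) ≠ 0 := by positivity
  have hαne : α ≠ 0 := ne_of_gt hα0
  have hlKne : lK ≠ 0 := ne_of_gt hlK0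
  have h1 : ∑ n ∈ Finset.Icc 1 K', (cBY (K'+1) α n - cBY (K'+1) α (n+1)) * tBY (K'+1) α lK n
      = (((K':ℝ)+1)/α) * (α / (((K':ℝ)+1) * lK))
          * ∑ n ∈ Finset.Icc 1 K', ((1:ℝ)/n - 1/(n+1)) * n := by
    rw [Finset.mul_sum]
    apply Finset.sum_congr rfl
    intro n hn
    rw [Finset.mem_Icc] at hn
    unfold cBY tBY
    rw [if_pos (by omega), if_pos (by omega)]
    push_cast
    ring
  rw [Finset.sum_Icc_succ_top (by omega : 1 ≤ K' + 1), h1, harm_aux]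
  have h2 : cBY (K'+1) α (K'+1) - cBY (K'+1) α (K'+1+1) = (((K':ℝ)+1)/α)/((K':ℝ)+1) := by
    unfold cBY
    rw [if_pos (by omega), if_neg (by omega)]
    push_cast
    ring
  rw [h2]
  have hH : (∑ n ∈ Finset.Icc 1 K', (1:ℝ)/n) = lK - 1/((K':ℝ)+1) := by
    rw [hlK, Finset.sum_Icc_succ_top (by omega : 1 ≤ K' + 1)]
    push_cast
    ring
  rw [hH]
  unfold tBY
  push_cast
  field_simp
  ring

/-- The BY calibrator integrates to at most one over `[0,1]`; consequently,
applying it to any superuniform random variable yields an e-value. -/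
theorem stmt10 {Ω : Type*} [MeasureSpace Ω] [IsProbabilityMeasure (ℙ : Measure Ω)]
    (K : ℕ) (hK : 0 < K) (α : ℝ) (hα : α ∈ Set.Ioo (0:ℝ) 1)
    (lK : ℝ) (hlK : lK = ∑ j ∈ Finset.Icc 1 K, (1:ℝ) / j)
    (P : Ω → ℝ) (hPm : Measurable P) (hP : ∀ ω, P ω ∈ Set.Icc (0:ℝ) 1)
    (hsup : ∀ s ∈ Set.Icc (0:ℝ) 1, ℙ {ω : Ω | P ω ≤ s} ≤ ENNReal.ofReal s) :
    (∫ x in Set.Icc (0:ℝ) 1, byCalib K α lK x ≤ 1) ∧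
    (∫⁻ ω, ENNReal.ofReal (byCalib K α lK (P ω)) ∂ℙ ≤ 1) := by
  obtain ⟨hα0, hα1⟩ := hα
  have hK0 : (0:ℝ) < K := Nat.cast_pos.mpr hK
  have hlK1 : 1 ≤ lK := by
    rw [hlK]
    have h1 : (1:ℝ)/((1:ℕ):ℝ) ≤ ∑ j ∈ Finset.Icc 1 K, (1:ℝ)/j := by
      apply Finset.single_le_sum (f := fun j : ℕ => (1:ℝ)/j)
      · intro i _; positivity
      · rw [Finset.mem_Icc]; omega
    simpa using h1
  have hlK0 : 0 < lK := lt_of_lt_of_le one_pos hlK1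
  have hβ0 : (0:ℝ) < α / (K * lK) := by positivity
  set d : ℕ → ℝ := fun n => cBY K α n - cBY K α (n+1) with hd
  have hd0 : ∀ n : ℕ, 1 ≤ n → 0 ≤ d n := by
    intro n hn
    simp only [hd, cBY, sub_nonneg]
    by_cases h1 : n + 1 ≤ K
    · rw [if_pos h1, if_pos (by omega)]
      apply div_le_div_of_nonneg_left (by positivity) (by positivity)
      push_cast; linarith
    · rw [if_neg h1]
      split_ifs with h2
      · positivity
      · exact le_refl 0
  have ht_mem : ∀ n ∈ Finset.Icc 1 K, tBY K α lK n ∈ Icc (0:ℝ) 1 := by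
    intro n hn
    rw [Finset.mem_Icc] at hn
    constructor
    · unfold tBY; positivity
    · have h1 : tBY K α lK n ≤ tBY K α lK K := by
        unfold tBY
        apply mul_le_mul_of_nonneg_right _ hβ0.le
        exact_mod_cast hn.2
      have h2 : tBY K α lK K = α / lK := by unfold tBY; field_simp
      have h3 : α / lK ≤ α := by
        rw [div_le_iff₀ hlK0]
        nlinarith
      linarith
  have hsum : ∑ n ∈ Finset.Icc 1 K, d n * tBY K α lK n = 1 :=
    sum_dt K hK α lK hα0 hlK0 hlK
  have hkey : ∀ x : ℝ, byCalib K α lK x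
      = ∑ n ∈ Finset.Icc 1 K, (if x ≤ tBY K α lK n then d n else 0) :=
    fun x => byCalib_eq_sum K α lK hK hα0 hlK0 x
  constructor
  · -- the integral over [0,1]
    have hcong : EqOn (byCalib K α lK)
        (fun x => ∑ n ∈ Finset.Icc 1 K, (if x ≤ tBY K α lK n then d n else 0))
        (Icc (0:ℝ) 1) := fun x _ => hkey x
    rw [setIntegral_congr_fun measurableSet_Icc hcong]
    haveI : Fact (volume (Icc (0:ℝ) 1) < ⊤) := ⟨by simp [Real.volume_Icc]⟩
    have hind : ∀ n : ℕ, (fun x : ℝ => if x ≤ tBY K α lK n then d n else 0)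
        = (Iic (tBY K α lK n)).indicator (fun _ => d n) := by
      intro n; funext x; simp [Set.indicator_apply, Set.mem_Iic]
    rw [integral_finset_sum]
    · have heq : ∀ n ∈ Finset.Icc 1 K,
          ∫ x in Icc (0:ℝ) 1, (if x ≤ tBY K α lK n then d n else 0) = d n * tBY K α lK n := by
        intro n hn
        have hmem := ht_mem n hn
        rw [mem_Icc] at hmem
        rw [hind n, integral_indicator_const _ measurableSet_Iic,
            measureReal_restrict_apply measurableSet_Iic]
        have hset : Iic (tBY K α lK n) ∩ Icc (0:ℝ) 1 = Icc 0 (tBY K α lK n) := by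
          ext y
          simp only [mem_inter_iff, mem_Iic, mem_Icc]
          constructor
          · rintro ⟨h1, h2, _⟩; exact ⟨h2, h1⟩
          · rintro ⟨h1, h2⟩; exact ⟨h2, h1, h2.trans hmem.2⟩
        rw [hset, Real.volume_real_Icc_of_le hmem.1, smul_eq_mul, mul_comm]
        ring_nf
      rw [Finset.sum_congr rfl heq, hsum]
    · intro n _
      rw [hind n]
      exact (integrable_const (d n)).indicator measurableSet_Iic
  · -- the expectation bound
    have hstep1 : ∀ ω : Ω, ENNReal.ofReal (byCalib K α lK (P ω))
        = ∑ n ∈ Finset.Icc 1 K,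
            (if P ω ≤ tBY K α lK n then ENNReal.ofReal (d n) else 0) := by
      intro ω
      rw [hkey (P ω), ENNReal.ofReal_sum_of_nonneg]
      · apply Finset.sum_congr rfl
        intro n _
        split_ifs
        · rfl
        · exact ENNReal.ofReal_zero
      · intro n hn
        rw [Finset.mem_Icc] at hn
        split_ifs
        · exact hd0 n hn.1
        · exact le_refl 0
    calc ∫⁻ ω, ENNReal.ofReal (byCalib K α lK (P ω)) ∂ℙ
        = ∫⁻ ω, ∑ n ∈ Finset.Icc 1 K,
            (if P ω ≤ tBY K α lK n then ENNReal.ofReal (d n) else 0) ∂ℙ :=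
          lintegral_congr hstep1
      _ = ∑ n ∈ Finset.Icc 1 K, ∫⁻ ω,
            (if P ω ≤ tBY K α lK n then ENNReal.ofReal (d n) else 0) ∂ℙ := by
          apply lintegral_finset_sum
          intro n _
          exact Measurable.ite (hPm measurableSet_Iic) measurable_const measurable_const
      _ = ∑ n ∈ Finset.Icc 1 K, ENNReal.ofReal (d n) * ℙ {ω | P ω ≤ tBY K α lK n} := by
          apply Finset.sum_congr rfl
          intro n _
          calc ∫⁻ ω, (if P ω ≤ tBY K α lK n then ENNReal.ofReal (d n) else 0) ∂ℙ
              = ∫⁻ ω, ({ω | P ω ≤ tBY K α lK n}).indicator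
                  (fun _ => ENNReal.ofReal (d n)) ω ∂ℙ :=
                lintegral_congr (fun ω => by simp [Set.indicator_apply])
            _ = ENNReal.ofReal (d n) * ℙ {ω | P ω ≤ tBY K α lK n} :=
                lintegral_indicator_const (hPm measurableSet_Iic) _
      _ ≤ ∑ n ∈ Finset.Icc 1 K, ENNReal.ofReal (d n) * ENNReal.ofReal (tBY K α lK n) := by
          apply Finset.sum_le_sum
          intro n hn
          exact mul_le_mul_right (hsup _ (ht_mem n hn)) _
      _ = ENNReal.ofReal (∑ n ∈ Finset.Icc 1 K, d n * tBY K α lK n) := by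
          rw [ENNReal.ofReal_sum_of_nonneg]
          · apply Finset.sum_congr rfl
            intro n hn
            rw [Finset.mem_Icc] at hn
            rw [ENNReal.ofReal_mul (hd0 n hn.1)]
          · intro n hn
            have h2 := (ht_mem n hn).1
            rw [Finset.mem_Icc] at hn
            have h1 := hd0 n hn.1
            positivity
      _ = 1 := by rw [hsum, ENNReal.ofReal_one]
end

section
/- For any i ∈ [K], p ∈ [0,1], u ∈ (0,1], and α ∈ (0,1): with f the BY calibrator f(x) = (K/α)(⌈x·Kℓ_K/α⌉ ∨ 1)^{-1}·1{x ≤ α/ℓ_K}, the inequality u ≤ (αi/K)·f(p) holds if and only if p ≤ α(⌊i/u⌋ ∧ K)/(Kℓ_K). -/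
open Set

/-- U-eBH applied to BY-calibrated e-values coincides with the randomized BY
procedure: `u ≤ (αi/K)·f(p)` iff `p ≤ α(⌊i/u⌋ ∧ K)/(K ℓ_K)`. -/
theorem stmt11 (K : ℕ) (hK : 0 < K) (i : ℕ) (hi : i ∈ Finset.Icc 1 K)
    (p u α : ℝ) (hp : p ∈ Set.Icc (0:ℝ) 1) (hu : u ∈ Set.Ioc (0:ℝ) 1)
    (hα : α ∈ Set.Ioo (0:ℝ) 1)
    (lK : ℝ) (hlK : lK = ∑ j ∈ Finset.Icc 1 K, (1:ℝ) / j) :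
    u ≤ (α * i / K) * byCalib K α lK p ↔
      p ≤ α * ((min ⌊(i:ℝ)/u⌋₊ K : ℕ) : ℝ) / (K * lK) := by
  obtain ⟨hu0, hu1⟩ := hu
  obtain ⟨hα0, hα1⟩ := hα
  obtain ⟨hp0, hp1⟩ := hp
  obtain ⟨hi1, hiK⟩ := Finset.mem_Icc.mp hi
  have hKr : (0:ℝ) < K := Nat.cast_pos.mpr hK
  have hlK0 : 0 < lK := by
    rw [hlK]
    apply Finset.sum_pos
    · intro j hj
      have hj1 : 1 ≤ j := (Finset.mem_Icc.mp hj).1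
      have : (0:ℝ) < j := by exact_mod_cast Nat.lt_of_lt_of_le Nat.zero_lt_one hj1
      positivity
    · exact ⟨1, Finset.mem_Icc.mpr ⟨le_refl 1, hK⟩⟩
  have hi1r : (1:ℝ) ≤ i := by exact_mod_cast hi1
  have hiu : (1:ℝ) ≤ (i:ℝ)/u := by
    rw [le_div_iff₀ hu0]; linarith
  have hfl1 : 1 ≤ ⌊(i:ℝ)/u⌋₊ := by
    apply Nat.le_floor; exact_mod_cast hiu
  have heq : α * (K:ℝ)/((K:ℝ)*lK) = α/lK := by
    rw [mul_comm (K:ℝ) lK, mul_div_mul_right _ _ hKr.ne']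
  by_cases hc : p ≤ α / lK
  · rw [byCalib, if_pos hc]
    set m : ℕ := max ⌈p * ((K:ℝ) * lK / α)⌉₊ 1 with hm
    have hm1 : 1 ≤ m := le_max_right _ _
    have hm0 : (0:ℝ) < m := by exact_mod_cast hm1
    have hE : α * i / K * ((K:ℝ)/α / m) = (i:ℝ)/m := by
      field_simp
    rw [hE, le_div_iff₀ hm0]
    have hstep : u * (m:ℝ) ≤ i ↔ (m:ℝ) ≤ (i:ℝ)/u := by
      rw [le_div_iff₀ hu0, mul_comm]
    rw [hstep]
    have hstep2 : (m:ℝ) ≤ (i:ℝ)/u ↔ m ≤ ⌊(i:ℝ)/u⌋₊ := by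
      rw [Nat.le_floor_iff (by positivity)]
    rw [hstep2, hm, max_le_iff, and_iff_left hfl1, Nat.ceil_le]
    have key : ∀ F : ℝ, p * ((K:ℝ)*lK/α) ≤ F ↔ p ≤ α * F/((K:ℝ)*lK) := by
      intro F
      rw [le_div_iff₀ (by positivity : (0:ℝ) < (K:ℝ)*lK), ← mul_div_assoc,
        div_le_iff₀ hα0]
      constructor <;> intro h <;> linarith
    rw [key]
    rcases le_or_gt ⌊(i:ℝ)/u⌋₊ K with h | h
    · rw [min_eq_left h]
    · rw [min_eq_right h.le]
      have hKF : (K:ℝ) ≤ (⌊(i:ℝ)/u⌋₊ : ℝ) := by exact_mod_cast h.le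
      constructor
      · intro _; rw [heq]; exact hc
      · intro _
        have h2 : α*(K:ℝ)/((K:ℝ)*lK) ≤ α*(⌊(i:ℝ)/u⌋₊:ℝ)/((K:ℝ)*lK) := by
          gcongr
        rw [heq] at h2
        linarith
  · rw [byCalib, if_neg hc]
    push_neg at hc
    constructor
    · intro h; nlinarith
    · intro h
      exfalso
      have hmin : ((min ⌊(i:ℝ)/u⌋₊ K : ℕ):ℝ) ≤ K := by exact_mod_cast min_le_right _ _
      have h1 : α * ((min ⌊(i:ℝ)/u⌋₊ K : ℕ):ℝ)/((K:ℝ)*lK) ≤ α*(K:ℝ)/((K:ℝ)*lK) := by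
        gcongr
      rw [heq] at h1
      linarith
end

section
/- Let P_1,…,P_K be arbitrarily dependent superuniform random variables (all nulls true) and U uniform on [0,1] independent of them. Then P_UHommel = min_{i∈[K]} P_{(i)}·K·ℓ_K/(⌊i/U⌋ ∧ K) satisfies P(P_UHommel ≤ α) ≤ α for all α ∈ [0,1]; i.e., P_UHommel is a valid p-value for the global null. -/
open MeasureTheory ProbabilityTheory Set
open scoped ENNReal

namespace Stmt13Aux

/-- Count of coordinates at most `c*m`. -/
noncomputable def cnt (K : ℕ) (c : ℝ) (v : Fin K → ℝ) (m : ℕ) : ℕ :=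
  (Finset.univ.filter fun j => v j ≤ c * m).card

lemma cnt_cast (K : ℕ) (c : ℝ) (v : Fin K → ℝ) (m : ℕ) :
    (cnt K c v m : ℝ) = ∑ j : Fin K, if v j ≤ c * m then (1:ℝ) else 0 := by
  rw [cnt, Finset.card_filter]
  push_cast
  exact Finset.sum_congr rfl fun j _ => by split <;> simp

lemma cnt_mono (K : ℕ) {c : ℝ} (hc : 0 ≤ c) (v : Fin K → ℝ) {a b : ℕ} (h : a ≤ b) :
    cnt K c v a ≤ cnt K c v b := by
  apply Finset.card_le_card
  intro j hj
  simp only [Finset.mem_filter] at hj ⊢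
  exact ⟨hj.1, hj.2.trans (mul_le_mul_of_nonneg_left (Nat.cast_le.mpr h) hc)⟩

lemma cnt_meas (K : ℕ) (c : ℝ) (m : ℕ) :
    Measurable fun v : Fin K → ℝ => (cnt K c v m : ℝ) := by
  simp only [cnt_cast]
  apply Finset.measurable_sum
  intro j _
  exact Measurable.ite (measurableSet_le (measurable_pi_apply j) measurable_const)
    measurable_const measurable_const

lemma cnt_telescope (K : ℕ) (c : ℝ) (v : Fin K → ℝ) (m : ℕ) :
    (cnt K c v m : ℝ) = (cnt K c v 0 : ℝ)
      + ∑ s ∈ Finset.Icc 1 m, ((cnt K c v s : ℝ) - (cnt K c v (s-1) : ℝ)) := by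
  induction m with
  | zero => simp
  | succ n ih =>
      rw [Finset.sum_Icc_succ_top (Nat.succ_le_succ (Nat.zero_le n))]
      simp only [Nat.add_sub_cancel]
      rw [← add_assoc, ← ih]
      ring

lemma cnt_div_le (K : ℕ) {c : ℝ} (hc : 0 ≤ c) (v : Fin K → ℝ) {m : ℕ}
    (hm : m ∈ Finset.Icc 1 K) :
    (cnt K c v m : ℝ) / m ≤ (cnt K c v 0 : ℝ)
      + ∑ s ∈ Finset.Icc 1 K, ((cnt K c v s : ℝ) - (cnt K c v (s-1) : ℝ)) / s := by
  obtain ⟨hm1, hmK⟩ := Finset.mem_Icc.mp hm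
  have hmpos : (0:ℝ) < m := by exact_mod_cast hm1
  rw [cnt_telescope K c v m, add_div]
  apply add_le_add
  · exact div_le_self (by positivity) (by exact_mod_cast hm1)
  · rw [Finset.sum_div]
    refine le_trans (Finset.sum_le_sum ?_) (Finset.sum_le_sum_of_subset_of_nonneg
      (Finset.Icc_subset_Icc_right hmK) ?_)
    · intro s hs
      obtain ⟨hs1, hsm⟩ := Finset.mem_Icc.mp hs
      have hΔ : (0:ℝ) ≤ (cnt K c v s : ℝ) - (cnt K c v (s-1) : ℝ) := by
        have := cnt_mono K hc v (Nat.sub_le s 1)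
        exact sub_nonneg.mpr (by exact_mod_cast this)
      exact div_le_div_of_nonneg_left hΔ (by exact_mod_cast hs1) (by exact_mod_cast hsm)
    · intro s hs _
      obtain ⟨hs1, _⟩ := Finset.mem_Icc.mp hs
      have := cnt_mono K hc v (Nat.sub_le s 1)
      have hΔ : (0:ℝ) ≤ (cnt K c v s : ℝ) - (cnt K c v (s-1) : ℝ) :=
        sub_nonneg.mpr (by exact_mod_cast this)
      positivity

lemma abel_sum (c : ℝ) (f : ℕ → ℝ) (h0 : 0 ≤ f 0) :
    ∀ n, 1 ≤ n → (∀ s, s ≤ n → f s ≤ c * s) →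
      ∑ s ∈ Finset.Icc 1 n, (f s - f (s-1)) / s
        ≤ c * (∑ s ∈ Finset.Icc 1 n, (1:ℝ)/s) - c + f n / n := by
  intro n hn
  induction n, hn using Nat.le_induction with
  | base =>
      intro hf
      simp only [Finset.Icc_self, Finset.sum_singleton]
      norm_num
      linarith
  | succ n hn ih =>
      intro hf
      have hfn : ∀ s, s ≤ n → f s ≤ c * s := fun s hs => hf s (hs.trans (Nat.le_succ n))
      have h1 := ih hfn
      rw [Finset.sum_Icc_succ_top (by omega : 1 ≤ n + 1),
        Finset.sum_Icc_succ_top (by omega : 1 ≤ n + 1)]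
      simp only [Nat.add_sub_cancel]
      have hn0 : (0:ℝ) < n := by exact_mod_cast hn
      have hn1 : (0:ℝ) < (n:ℝ) + 1 := by positivity
      have hfc : f n ≤ c * n := hfn n le_rfl
      have key : f n / n ≤ (f n + c) / ((n:ℝ)+1) := by
        rw [div_le_div_iff₀ hn0 hn1]
        nlinarith
      have e1 : (f n + c) / ((n:ℝ)+1) = f n / ((n:ℝ)+1) + c / ((n:ℝ)+1) := add_div _ _ _
      have e2 : (f (n+1) - f n) / ((n:ℝ)+1) = f (n+1) / ((n:ℝ)+1) - f n / ((n:ℝ)+1) :=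
        sub_div _ _ _
      push_cast
      push_cast at h1 key e1 e2
      rw [mul_add]
      have : c * ((1:ℝ)/((n:ℝ)+1)) = c / ((n:ℝ)+1) := by ring
      rw [this]
      linarith

lemma cnt_sub (K : ℕ) {c : ℝ} (hc : 0 ≤ c) (v : Fin K → ℝ) (s : ℕ) :
    ((cnt K c v s : ℝ) - (cnt K c v (s-1) : ℝ))
      = ∑ j : Fin K, if c * ((s-1 : ℕ):ℝ) < v j ∧ v j ≤ c * s then (1:ℝ) else 0 := by
  rw [cnt_cast, cnt_cast, ← Finset.sum_sub_distrib]
  refine Finset.sum_congr rfl fun j _ => ?_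
  have hle : c * ((s-1:ℕ):ℝ) ≤ c * (s:ℝ) :=
    mul_le_mul_of_nonneg_left (Nat.cast_le.mpr (Nat.sub_le s 1)) hc
  by_cases h1 : v j ≤ c * ((s-1:ℕ):ℝ)
  · simp [h1, h1.trans hle, not_lt.mpr h1]
  · by_cases h2 : v j ≤ c * (s:ℝ)
    · simp [h1, h2, not_le.mp h1]
    · simp [h1, h2]

lemma lintegral_cnt_zero (K : ℕ) (c : ℝ) (m : ℕ) (μ : Measure (Fin K → ℝ)) :
    ∫⁻ v, ENNReal.ofReal ((cnt K c v m : ℝ)) ∂μ = ∑ j : Fin K, μ {v | v j ≤ c * m} := by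
  have hpt : ∀ v, ENNReal.ofReal ((cnt K c v m : ℝ))
      = ∑ j : Fin K, Set.indicator {v' : Fin K → ℝ | v' j ≤ c * m}
          (fun _ => (1:ℝ≥0∞)) v := by
    intro v
    rw [cnt_cast, ENNReal.ofReal_sum_of_nonneg (fun j _ => by positivity)]
    refine Finset.sum_congr rfl fun j _ => ?_
    rw [Set.indicator_apply]
    by_cases h : v j ≤ c * m <;> simp [h]
  have hms : ∀ j : Fin K, MeasurableSet {v' : Fin K → ℝ | v' j ≤ c * m} :=
    fun j => measurableSet_le (measurable_pi_apply j) measurable_const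
  simp only [hpt]
  rw [lintegral_finset_sum _ (fun j _ => measurable_const.indicator (hms j))]
  refine Finset.sum_congr rfl fun j _ => ?_
  rw [lintegral_indicator (hms j), setLIntegral_const, one_mul]

lemma lintegral_cnt_sub (K : ℕ) {c : ℝ} (hc : 0 ≤ c) (s : ℕ) (μ : Measure (Fin K → ℝ)) :
    ∫⁻ v, ENNReal.ofReal (((cnt K c v s : ℝ) - (cnt K c v (s-1) : ℝ))/s) ∂μ
      = ∑ j : Fin K, ENNReal.ofReal (1/(s:ℝ))
          * μ {v | c * ((s-1 : ℕ):ℝ) < v j ∧ v j ≤ c * s} := by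
  have hms : ∀ j : Fin K,
      MeasurableSet {v' : Fin K → ℝ | c * ((s-1 : ℕ):ℝ) < v' j ∧ v' j ≤ c * s} := by
    intro j
    exact (measurableSet_lt measurable_const (measurable_pi_apply j)).inter
      (measurableSet_le (measurable_pi_apply j) measurable_const)
  have hpt : ∀ v, ENNReal.ofReal (((cnt K c v s : ℝ) - (cnt K c v (s-1) : ℝ))/s)
      = ∑ j : Fin K, Set.indicator {v' : Fin K → ℝ | c * ((s-1 : ℕ):ℝ) < v' j ∧ v' j ≤ c * s}
          (fun _ => ENNReal.ofReal (1/(s:ℝ))) v := by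
    intro v
    rw [cnt_sub K hc v s, Finset.sum_div,
      ENNReal.ofReal_sum_of_nonneg (fun j _ => by split <;> positivity)]
    refine Finset.sum_congr rfl fun j _ => ?_
    rw [Set.indicator_apply]
    by_cases h : c * ((s-1 : ℕ):ℝ) < v j ∧ v j ≤ c * s <;> simp [h]
  simp only [hpt]
  rw [lintegral_finset_sum _ (fun j _ => measurable_const.indicator (hms j))]
  refine Finset.sum_congr rfl fun j _ => ?_
  rw [lintegral_indicator (hms j), setLIntegral_const]

end Stmt13Aux

open Stmt13Aux ENNReal
open scoped ENNReal

/-- Under the global null (all p-values superuniform, arbitrarily dependent)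
and with `U` uniform on `[0,1]` independent of them, the randomized U-Hommel
merged p-value `P_UHommel = min_i P_(i)·K·ℓ_K/(⌊i/U⌋ ∧ K)` is a valid p-value:
`P(P_UHommel ≤ α) ≤ α` for all `α ∈ [0,1]`. Here `P_(i)` denotes the `i`-th
smallest p-value, obtained via the sorting permutation `Tuple.sort`. -/
theorem stmt13 {Ω : Type*} [MeasureSpace Ω] [IsProbabilityMeasure (ℙ : Measure Ω)]
    (K : ℕ) (hK : 0 < K)
    (P : Fin K → Ω → ℝ) (hPm : ∀ i, Measurable (P i))
    (hP01 : ∀ i ω, P i ω ∈ Set.Icc (0:ℝ) 1)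
    (hNull : ∀ i, ∀ s ∈ Set.Icc (0:ℝ) 1, ℙ {ω | P i ω ≤ s} ≤ ENNReal.ofReal s)
    (U : Ω → ℝ) (hUm : Measurable U)
    (hUnif : Measure.map U ℙ = (volume : Measure ℝ).restrict (Icc (0:ℝ) 1))
    (hInd : IndepFun (fun ω i => P i ω) U ℙ)
    (lK : ℝ) (hlK : lK = ∑ j ∈ Finset.Icc 1 K, (1:ℝ) / j)
    (PUH : Ω → ℝ)
    (hPUH : ∀ ω, PUH ω = Finset.univ.inf' (Finset.univ_nonempty_iff.mpr ⟨⟨0, hK⟩⟩)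
        (fun i : Fin K =>
          (fun j => P j ω) (Tuple.sort (fun j => P j ω) i) * K * lK /
            ((min ⌊(((i : ℕ) + 1 : ℕ) : ℝ)/U ω⌋₊ K : ℕ) : ℝ)))
    (α : ℝ) (hα : α ∈ Set.Icc (0:ℝ) 1) :
    ℙ {ω | PUH ω ≤ α} ≤ ENNReal.ofReal α := by
  obtain ⟨hα0, hα1⟩ := hα
  -- basic facts
  have hlK1 : 1 ≤ lK := by
    rw [hlK]
    calc (1:ℝ) = ∑ j ∈ ({1} : Finset ℕ), (1:ℝ)/j := by norm_num
    _ ≤ _ := Finset.sum_le_sum_of_subset_of_nonneg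
        (by simp [Finset.singleton_subset_iff, Finset.mem_Icc]; omega) (fun i _ _ => by positivity)
  have hK0 : (0:ℝ) < K := by exact_mod_cast hK
  have hKlK : (0:ℝ) < K * lK := mul_pos hK0 (by linarith)
  set c : ℝ := α / (K * lK) with hc_def
  have hc0 : 0 ≤ c := div_nonneg hα0 hKlK.le
  have htK : ∀ m : ℕ, m ≤ K → c * m ∈ Set.Icc (0:ℝ) 1 := by
    intro m hm
    refine ⟨by positivity, ?_⟩
    have h1 : c * m ≤ c * K := mul_le_mul_of_nonneg_left (Nat.cast_le.mpr hm) hc0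
    have h2 : c * K = α / lK := by
      rw [hc_def]; field_simp
    have h3 : α / lK ≤ α := div_le_self hα0 hlK1
    linarith
  have hVm : Measurable (fun ω => (fun i => P i ω)) := measurable_pi_lambda _ hPm
  -- the target set in the product space
  set S : Set ((Fin K → ℝ) × ℝ) :=
    {p | ∃ m ∈ Finset.Icc 1 K, p.2 * m ≤ (cnt K c p.1 m : ℝ)} with hS_def
  have hSm : MeasurableSet S := by
    have : S = ⋃ m ∈ Finset.Icc 1 K,
        {p : (Fin K → ℝ) × ℝ | p.2 * m ≤ (cnt K c p.1 m : ℝ)} := by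
      ext p; simp [hS_def]
    rw [this]
    exact MeasurableSet.biUnion (Finset.Icc 1 K).countable_toSet
      (fun m _ => measurableSet_le (measurable_snd.mul_const _)
        ((cnt_meas K c m).comp measurable_fst))
  -- Step 1: inclusion
  have hincl : {ω | PUH ω ≤ α} ∩ U ⁻¹' (Ioc 0 1)
      ⊆ (fun ω => ((fun i => P i ω), U ω)) ⁻¹' S := by
    rintro ω ⟨hA, hU⟩
    have hu0 : 0 < U ω := hU.1
    have hu1 : U ω ≤ 1 := hU.2
    simp only [mem_setOf_eq] at hA
    rw [hPUH ω, Finset.inf'_le_iff] at hA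
    obtain ⟨i, -, hi⟩ := hA
    set σ := Tuple.sort (fun j => P j ω) with hσ
    set d : ℕ := min ⌊((((i:ℕ)+1 : ℕ)):ℝ)/U ω⌋₊ K with hd_def
    have hI_le_floor : (i:ℕ)+1 ≤ ⌊((((i:ℕ)+1:ℕ)):ℝ)/U ω⌋₊ := by
      apply Nat.le_floor
      rw [le_div_iff₀ hu0]
      exact mul_le_of_le_one_right (by positivity) hu1
    have hId : (i:ℕ)+1 ≤ d := le_min hI_le_floor i.isLt
    have hd1 : 1 ≤ d := le_trans (Nat.succ_le_succ (Nat.zero_le _)) hId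
    have hdK : d ≤ K := min_le_right _ _
    have hdpos : (0:ℝ) < d := by exact_mod_cast hd1
    have hQ : P (σ i) ω ≤ c * d := by
      rw [div_le_iff₀ hdpos] at hi
      rw [hc_def, div_mul_eq_mul_div, le_div_iff₀ hKlK, ← mul_assoc]
      exact hi
    have hcnt : (i:ℕ)+1 ≤ cnt K c (fun j => P j ω) d := by
      have himg : (Finset.Iic i).image σ
          ⊆ Finset.univ.filter (fun j => (fun j => P j ω) j ≤ c * (d:ℕ)) := by
        intro j hj
        simp only [Finset.mem_image] at hj
        obtain ⟨i', hi', rfl⟩ := hj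
        simp only [Finset.mem_filter, Finset.mem_univ, true_and]
        exact le_trans (Tuple.monotone_sort (fun j => P j ω) (Finset.mem_Iic.mp hi')) hQ
      calc (i:ℕ)+1 = ((Finset.Iic i).image σ).card := by
            rw [Finset.card_image_of_injective _ σ.injective, Fin.card_Iic]
      _ ≤ _ := Finset.card_le_card himg
    refine ⟨d, Finset.mem_Icc.mpr ⟨hd1, hdK⟩, ?_⟩
    have h1 : (d:ℝ) ≤ ((((i:ℕ)+1:ℕ)):ℝ)/U ω :=
      le_trans (Nat.cast_le.mpr (min_le_left _ _)) (Nat.floor_le (by positivity))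
    have h2 : U ω * d ≤ ((((i:ℕ)+1:ℕ)):ℝ) := by
      rw [mul_comm]; exact (le_div_iff₀ hu0).mp h1
    exact le_trans h2 (by exact_mod_cast hcnt)
  -- Step 2: complement is null
  have hnullU : ℙ ((U ⁻¹' (Ioc 0 1))ᶜ) = 0 := by
    rw [← preimage_compl, ← Measure.map_apply hUm measurableSet_Ioc.compl, hUnif,
      Measure.restrict_apply measurableSet_Ioc.compl]
    have h0 : (Ioc (0:ℝ) 1)ᶜ ∩ Icc 0 1 = {0} := by
      ext x
      simp only [mem_inter_iff, mem_compl_iff, mem_Ioc, mem_Icc, mem_singleton_iff, not_and,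
        not_le]
      constructor
      · rintro ⟨h1, h2, h3⟩
        by_contra hx
        exact absurd (h1 (lt_of_le_of_ne h2 (Ne.symm hx))) (not_lt.mpr h3)
      · rintro rfl
        exact ⟨fun h => absurd h (lt_irrefl 0), le_refl 0, zero_le_one⟩
    rw [h0, Real.volume_singleton]
  -- Step 3: product structure
  have hmapF : Measure.map (fun ω => ((fun i => P i ω), U ω)) ℙ
      = (Measure.map (fun ω i => P i ω) ℙ).prod (Measure.map U ℙ) :=
    (ProbabilityTheory.indepFun_iff_map_prod_eq_prod_map_map hVm.aemeasurable
      hUm.aemeasurable).mp hInd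
  -- Step 4: slice bound
  set μV := Measure.map (fun ω (i : Fin K) => P i ω) ℙ with hμV
  set D : (Fin K → ℝ) → ℝ := fun v => (cnt K c v 0 : ℝ)
      + ∑ s ∈ Finset.Icc 1 K, ((cnt K c v s : ℝ) - (cnt K c v (s-1) : ℝ)) / s with hD_def
  have hslice : ∀ v, (Measure.map U ℙ) (Prod.mk v ⁻¹' S) ≤ ENNReal.ofReal (D v) := by
    intro v
    rw [hUnif, Measure.restrict_apply' measurableSet_Icc]
    have hsub2 : Prod.mk v ⁻¹' S ∩ Icc 0 1 ⊆ Icc 0 (D v) := by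
      rintro u ⟨hS', hu0, hu1⟩
      obtain ⟨m, hm, hum⟩ := hS'
      have hm1 : 1 ≤ m := (Finset.mem_Icc.mp hm).1
      have hmpos : (0:ℝ) < m := by exact_mod_cast hm1
      refine ⟨hu0, ?_⟩
      have hud : u ≤ (cnt K c v m : ℝ) / m := (le_div_iff₀ hmpos).mpr hum
      exact hud.trans (cnt_div_le K hc0 v hm)
    calc volume (Prod.mk v ⁻¹' S ∩ Icc 0 1) ≤ volume (Icc 0 (D v)) := measure_mono hsub2
      _ ≤ ENNReal.ofReal (D v) := by
          rw [Real.volume_Icc]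
          exact ENNReal.ofReal_le_ofReal (by linarith)
  -- Step 5: the integral bound
  have hint : ∫⁻ v, ENNReal.ofReal (D v) ∂μV ≤ ENNReal.ofReal α := by
    have hΔ : ∀ (v : Fin K → ℝ) (s : ℕ), (0:ℝ) ≤ (cnt K c v s : ℝ) - (cnt K c v (s-1) : ℝ) :=
      fun v s => sub_nonneg.mpr (by exact_mod_cast cnt_mono K hc0 v (Nat.sub_le s 1))
    have hD_eq : ∀ v, ENNReal.ofReal (D v)
        = ENNReal.ofReal ((cnt K c v 0 : ℝ))
          + ∑ s ∈ Finset.Icc 1 K,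
              ENNReal.ofReal (((cnt K c v s : ℝ) - (cnt K c v (s-1) : ℝ))/s) := by
      intro v
      simp only [hD_def]
      rw [ENNReal.ofReal_add (by positivity)
          (Finset.sum_nonneg fun s _ => div_nonneg (hΔ v s) (Nat.cast_nonneg s)),
        ENNReal.ofReal_sum_of_nonneg (fun s _ => div_nonneg (hΔ v s) (Nat.cast_nonneg s))]
    have hmeas : ∀ s : ℕ, Measurable fun v : Fin K → ℝ =>
        ENNReal.ofReal (((cnt K c v s : ℝ) - (cnt K c v (s-1) : ℝ))/s) :=
      fun s => (((cnt_meas K c s).sub (cnt_meas K c (s-1))).div_const _).ennreal_ofReal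
    -- identification of marginals
    have hmapV : ∀ (j : Fin K) (b : ℝ), μV {v | v j ≤ b} = ℙ {ω | P j ω ≤ b} := by
      intro j b
      rw [hμV, Measure.map_apply hVm (measurableSet_le (measurable_pi_apply j) measurable_const)]
      rfl
    set F : Fin K → ℕ → ℝ≥0∞ := fun j s => ℙ {ω | P j ω ≤ c * s} with hF_def
    set f : Fin K → ℕ → ℝ := fun j s => (F j s).toReal with hf_def
    have hsetsub : ∀ (j : Fin K) (a b : ℕ), a ≤ b →
        {ω | P j ω ≤ c * a} ⊆ {ω | P j ω ≤ c * b} := by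
      intro j a b hab ω hω
      exact le_trans hω (mul_le_mul_of_nonneg_left (Nat.cast_le.mpr hab) hc0)
    have hFle : ∀ (j : Fin K) (a b : ℕ), a ≤ b → F j a ≤ F j b :=
      fun j a b hab => measure_mono (hsetsub j a b hab)
    have hFtop : ∀ (j : Fin K) (s : ℕ), F j s ≠ ⊤ := fun j s => measure_ne_top _ _
    have hmapIoc : ∀ (j : Fin K) (s : ℕ),
        μV {v | c * ((s-1 : ℕ):ℝ) < v j ∧ v j ≤ c * s} = F j s - F j (s-1) := by
      intro j s
      have hmsj : MeasurableSet {v : Fin K → ℝ | c * ((s-1 : ℕ):ℝ) < v j ∧ v j ≤ c * s} :=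
        (measurableSet_lt measurable_const (measurable_pi_apply j)).inter
          (measurableSet_le (measurable_pi_apply j) measurable_const)
      rw [hμV, Measure.map_apply hVm hmsj]
      have hpre : (fun ω (i : Fin K) => P i ω) ⁻¹' {v | c * ((s-1 : ℕ):ℝ) < v j ∧ v j ≤ c * s}
          = {ω | P j ω ≤ c * s} \ {ω | P j ω ≤ c * ((s-1:ℕ):ℝ)} := by
        ext ω
        simp only [mem_preimage, mem_setOf_eq, Set.mem_diff, not_le]
        tauto
      rw [hpre, measure_diff (hsetsub j (s-1) s (Nat.sub_le s 1))
        (((hPm j) measurableSet_Iic).nullMeasurableSet) (measure_ne_top _ _)]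
    have hterm : ∀ s : ℕ, ∀ j : Fin K,
        ENNReal.ofReal (1/(s:ℝ)) * (F j s - F j (s-1))
          = ENNReal.ofReal ((f j s - f j (s-1))/s) := by
      intro s j
      have h1 : F j s - F j (s-1) = ENNReal.ofReal (f j s - f j (s-1)) := by
        rw [hf_def, ENNReal.ofReal_sub _ ENNReal.toReal_nonneg,
          ENNReal.ofReal_toReal (hFtop j s), ENNReal.ofReal_toReal (hFtop j (s-1))]
      rw [h1, ← ENNReal.ofReal_mul (by positivity), one_div_mul_eq_div]
    have hfnonneg : ∀ (j : Fin K) (s : ℕ), 0 ≤ (f j s - f j (s-1))/(s:ℝ) := by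
      intro j s
      have := ENNReal.toReal_mono (hFtop j s) (hFle j (s-1) s (Nat.sub_le s 1))
      have h2 : 0 ≤ f j s - f j (s-1) := sub_nonneg.mpr this
      positivity
    have h0 : ∫⁻ v, ENNReal.ofReal ((cnt K c v 0 : ℝ)) ∂μV = 0 := by
      rw [lintegral_cnt_zero]
      refine Finset.sum_eq_zero fun j _ => ?_
      rw [hmapV]
      refine le_antisymm ?_ (zero_le')
      have := hNull j (c * ((0:ℕ):ℝ)) (htK 0 (Nat.zero_le K))
      simpa using this
    calc ∫⁻ v, ENNReal.ofReal (D v) ∂μV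
        = (∫⁻ v, ENNReal.ofReal ((cnt K c v 0 : ℝ)) ∂μV)
            + ∑ s ∈ Finset.Icc 1 K, ∫⁻ v,
                ENNReal.ofReal (((cnt K c v s : ℝ) - (cnt K c v (s-1) : ℝ))/s) ∂μV := by
          rw [lintegral_congr hD_eq,
            lintegral_add_left (cnt_meas K c 0).ennreal_ofReal,
            lintegral_finset_sum _ (fun s _ => hmeas s)]
      _ = ∑ s ∈ Finset.Icc 1 K, ∑ j : Fin K, ENNReal.ofReal ((f j s - f j (s-1))/s) := by
          rw [h0, zero_add]
          refine Finset.sum_congr rfl fun s _ => ?_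
          rw [lintegral_cnt_sub K hc0 s μV]
          exact Finset.sum_congr rfl fun j _ => by rw [hmapIoc j s, hterm s j]
      _ = ∑ j : Fin K, ∑ s ∈ Finset.Icc 1 K, ENNReal.ofReal ((f j s - f j (s-1))/s) :=
          Finset.sum_comm
      _ ≤ ∑ j : Fin K, ENNReal.ofReal (α / K) := by
          refine Finset.sum_le_sum fun j _ => ?_
          rw [← ENNReal.ofReal_sum_of_nonneg (fun s _ => hfnonneg j s)]
          apply ENNReal.ofReal_le_ofReal
          have habel := abel_sum c (f j) ENNReal.toReal_nonneg K hK
            (fun s hs => ENNReal.toReal_le_of_le_ofReal (by positivity)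
              (hNull j (c * s) (htK s hs)))
          have hfK : f j K / K ≤ c := by
            rw [div_le_iff₀ hK0]
            exact ENNReal.toReal_le_of_le_ofReal (by positivity)
              (hNull j (c * K) (htK K le_rfl))
          have hsum_eq : (∑ s ∈ Finset.Icc 1 K, (1:ℝ)/s) = lK := hlK.symm
          have hclK : c * lK = α / K := by
            rw [hc_def]
            field_simp
          calc ∑ s ∈ Finset.Icc 1 K, (f j s - f j (s-1))/(s:ℝ)
              ≤ c * (∑ s ∈ Finset.Icc 1 K, (1:ℝ)/s) - c + f j K / K := habel
            _ ≤ c * lK := by rw [hsum_eq]; linarith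
            _ = α / K := hclK
      _ = ENNReal.ofReal α := by
          rw [Finset.sum_const, Finset.card_univ, Fintype.card_fin, nsmul_eq_mul,
            show ((K:ℝ≥0∞)) = ENNReal.ofReal (K:ℝ) from (ENNReal.ofReal_natCast K).symm,
            ← ENNReal.ofReal_mul (Nat.cast_nonneg K)]
          congr 1
          field_simp
  -- Assemble
  calc ℙ {ω | PUH ω ≤ α}
      ≤ ℙ ({ω | PUH ω ≤ α} ∩ U ⁻¹' (Ioc 0 1)) + ℙ ((U ⁻¹' (Ioc 0 1))ᶜ) := by
        refine le_trans (measure_mono ?_) (measure_union_le _ _)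
        intro ω hω
        by_cases h : U ω ∈ Ioc (0:ℝ) 1
        · exact Or.inl ⟨hω, h⟩
        · exact Or.inr h
    _ = ℙ ({ω | PUH ω ≤ α} ∩ U ⁻¹' (Ioc 0 1)) := by rw [hnullU, add_zero]
    _ ≤ ℙ ((fun ω => ((fun i => P i ω), U ω)) ⁻¹' S) := measure_mono hincl
    _ = (Measure.map (fun ω => ((fun i => P i ω), U ω)) ℙ) S :=
        (Measure.map_apply (hVm.prodMk hUm) hSm).symm
    _ = (μV.prod (Measure.map U ℙ)) S := by rw [hmapF]
    _ = ∫⁻ v, (Measure.map U ℙ) (Prod.mk v ⁻¹' S) ∂μV := Measure.prod_apply hSm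
    _ ≤ ∫⁻ v, ENNReal.ofReal (D v) ∂μV := lintegral_mono hslice
    _ ≤ ENNReal.ofReal α := hint
end

section
/- Let P_1,…,P_K be arbitrarily dependent superuniform random variables, U uniform on [0,1] independent of them, and β a reshaping function. The β-reshaped randomized BY procedure rejects the k*_{β,U} smallest p-values where k*_{β,U} = max{i : P_{(i)} ≤ αβ(i/U)/K}. Then its false discovery rate is at most α. -/
open MeasureTheory ProbabilityTheory Set
open scoped ENNReal

section Aux

variable (K : ℕ) (α : ℝ) (β : ℝ → ℝ)

noncomputable def rbyKst (z : (Fin K → ℝ) × ℝ) : ℕ :=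
  sSup {k : ℕ | k ≤ K ∧ k ≤ (Finset.univ.filter
      (fun j : Fin K => z.1 j ≤ α * β ((k : ℝ) / z.2) / K)).card}

lemma rbyKst_mem (z : (Fin K → ℝ) × ℝ) :
    rbyKst K α β z ∈ {k : ℕ | k ≤ K ∧ k ≤ (Finset.univ.filter
      (fun j : Fin K => z.1 j ≤ α * β ((k : ℝ) / z.2) / K)).card} :=
  Nat.sSup_mem ⟨0, Nat.zero_le K, Nat.zero_le _⟩ ⟨K, fun _ hk => hk.1⟩

lemma rbyKst_antitone (hβ : Monotone β) (hα : 0 ≤ α) (p : Fin K → ℝ) {u u' : ℝ}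
    (hu : 0 < u) (huu : u ≤ u') : rbyKst K α β (p, u') ≤ rbyKst K α β (p, u) := by
  have hsub : {k : ℕ | k ≤ K ∧ k ≤ (Finset.univ.filter
      (fun j : Fin K => (p, u').1 j ≤ α * β ((k : ℝ) / (p, u').2) / K)).card} ⊆
      {k : ℕ | k ≤ K ∧ k ≤ (Finset.univ.filter
      (fun j : Fin K => (p, u).1 j ≤ α * β ((k : ℝ) / (p, u).2) / K)).card} := by
    rintro k ⟨hkK, hkc⟩
    refine ⟨hkK, hkc.trans (Finset.card_le_card (Finset.monotone_filter_right _ ?_))⟩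
    intro j _ hj
    refine le_trans hj ?_
    have hb : β ((k : ℝ) / u') ≤ β ((k : ℝ) / u) :=
      hβ (div_le_div_of_nonneg_left (Nat.cast_nonneg k) hu huu)
    gcongr
  exact csSup_le_csSup ⟨K, fun _ hk => hk.1⟩ ⟨0, Nat.zero_le K, Nat.zero_le _⟩ hsub

lemma rbyKst_measurable (hβ : Measurable β) : Measurable (rbyKst K α β) := by
  have hcard : ∀ k : ℕ, Measurable (fun z : (Fin K → ℝ) × ℝ =>
      (Finset.univ.filter (fun j : Fin K => z.1 j ≤ α * β ((k : ℝ) / z.2) / K)).card) := by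
    intro k
    simp only [Finset.card_filter]
    apply Finset.measurable_sum
    intro j _
    refine Measurable.ite ?_ measurable_const measurable_const
    exact measurableSet_le (measurable_fst.eval)
      ((measurable_const.mul (hβ.comp' (measurable_const.div measurable_snd))).div_const _)
  have key : ∀ n : ℕ, MeasurableSet {z : (Fin K → ℝ) × ℝ | n ≤ rbyKst K α β z} := by
    intro n
    have : {z : (Fin K → ℝ) × ℝ | n ≤ rbyKst K α β z} =
        ⋃ k ∈ Finset.Icc n K, {z : (Fin K → ℝ) × ℝ | k ≤ (Finset.univ.filter
          (fun j : Fin K => z.1 j ≤ α * β ((k : ℝ) / z.2) / K)).card} := by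
      ext z
      simp only [mem_setOf_eq, mem_iUnion, Finset.mem_Icc, exists_prop]
      constructor
      · intro hn
        exact ⟨rbyKst K α β z, ⟨hn, (rbyKst_mem K α β z).1⟩, (rbyKst_mem K α β z).2⟩
      · rintro ⟨k, ⟨hnk, hkK⟩, hkc⟩
        exact hnk.trans (le_csSup ⟨K, fun _ hk => hk.1⟩ ⟨hkK, hkc⟩)
    rw [this]
    exact MeasurableSet.biUnion (Finset.Icc n K).countable_toSet
      (fun k _ => (hcard k) measurableSet_Ici)
  apply measurable_to_countable'
  intro n
  have : rbyKst K α β ⁻¹' {n} =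
      {z : (Fin K → ℝ) × ℝ | n ≤ rbyKst K α β z} \ {z | n + 1 ≤ rbyKst K α β z} := by
    ext z
    simp only [mem_preimage, mem_singleton_iff, mem_diff, mem_setOf_eq]
    omega
  rw [this]
  exact (key n).diff (key (n+1))

end Aux
section Aux2
variable (K : ℕ) (α : ℝ) (β : ℝ → ℝ)

lemma beta_nonneg (ν : Measure ℝ) (hβ : ∀ r, β r = ∫ x in Set.Icc 0 r, x ∂ν) :
    ∀ r, 0 ≤ β r := by
  intro r
  rw [hβ]
  exact setIntegral_nonneg measurableSet_Icc (fun x hx => hx.1)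

lemma beta_zero (ν : Measure ℝ) (hβ : ∀ r, β r = ∫ x in Set.Icc 0 r, x ∂ν) : β 0 = 0 := by
  rw [hβ, Set.Icc_self,
    setIntegral_congr_fun (measurableSet_singleton 0)
      (fun x hx => by simpa using hx : EqOn (fun x : ℝ => x) (fun _ => (0:ℝ)) {0})]
  simp

lemma beta_mono (ν : Measure ℝ) [IsProbabilityMeasure ν]
    (hβ : ∀ r, β r = ∫ x in Set.Icc 0 r, x ∂ν) : Monotone β := by
  intro r r' hrr
  by_cases hr : 0 ≤ r
  · rw [hβ, hβ]
    have hint : IntegrableOn (fun x : ℝ => x) (Set.Icc 0 r') ν :=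
      ContinuousOn.integrableOn_compact isCompact_Icc continuousOn_id
    exact setIntegral_mono_set hint
      (ae_restrict_of_forall_mem measurableSet_Icc (fun x hx => hx.1))
      ((Set.Icc_subset_Icc_right hrr).eventuallyLE)
  · have : β r = 0 := by
      rw [hβ, Set.Icc_eq_empty hr]
      simp
    rw [this]
    exact beta_nonneg β ν hβ r'

lemma beta_key_integral (ν : Measure ℝ) [IsProbabilityMeasure ν]
    (hβ : ∀ r, β r = ∫ x in Set.Icc 0 r, x ∂ν) :
    ∫⁻ t in Set.Ioi (0:ℝ), ENNReal.ofReal (β t⁻¹) ∂volume ≤ 1 := by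
  -- rewrite the inner Bochner integral as a lintegral
  have step1 : ∀ t : ℝ, 0 < t → ENNReal.ofReal (β t⁻¹) =
      ∫⁻ x, ({w : ℝ × ℝ | 0 ≤ w.2 ∧ w.2 ≤ w.1⁻¹}.indicator
        (fun w => ENNReal.ofReal w.2) (t, x)) ∂ν := by
    intro t ht
    have hir : IntegrableOn (fun x : ℝ => x) (Set.Icc (0:ℝ) t⁻¹) ν :=
      ContinuousOn.integrableOn_compact isCompact_Icc continuous_id'.continuousOn
    rw [hβ, ofReal_integral_eq_lintegral_ofReal hir
      (ae_restrict_of_forall_mem measurableSet_Icc (fun x hx => hx.1)),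
      ← lintegral_indicator measurableSet_Icc]
    apply lintegral_congr
    intro x
    by_cases hx : x ∈ Set.Icc (0:ℝ) t⁻¹
    · rw [Set.indicator_of_mem hx,
        Set.indicator_of_mem (show (t, x) ∈ {w : ℝ × ℝ | 0 ≤ w.2 ∧ w.2 ≤ w.1⁻¹} from ⟨hx.1, hx.2⟩)]
    · rw [Set.indicator_of_notMem hx, Set.indicator_of_notMem
        (show (t, x) ∉ {w : ℝ × ℝ | 0 ≤ w.2 ∧ w.2 ≤ w.1⁻¹} from fun h => hx ⟨h.1, h.2⟩)]
  have hSmeas : MeasurableSet {w : ℝ × ℝ | 0 ≤ w.2 ∧ w.2 ≤ w.1⁻¹} :=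
    (measurableSet_le measurable_const measurable_snd).inter
      (measurableSet_le measurable_snd measurable_fst.inv)
  calc ∫⁻ t in Set.Ioi (0:ℝ), ENNReal.ofReal (β t⁻¹) ∂volume
      = ∫⁻ t in Set.Ioi (0:ℝ), ∫⁻ x, ({w : ℝ × ℝ | 0 ≤ w.2 ∧ w.2 ≤ w.1⁻¹}.indicator
          (fun w => ENNReal.ofReal w.2) (t, x)) ∂ν ∂volume := by
        refine lintegral_congr_ae (ae_restrict_of_forall_mem measurableSet_Ioi ?_)
        intro t ht; exact step1 t ht
    _ = ∫⁻ x, ∫⁻ t in Set.Ioi (0:ℝ), ({w : ℝ × ℝ | 0 ≤ w.2 ∧ w.2 ≤ w.1⁻¹}.indicator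
          (fun w => ENNReal.ofReal w.2) (t, x)) ∂volume ∂ν := by
        apply lintegral_lintegral_swap
        exact ((measurable_snd.ennreal_ofReal.indicator hSmeas).comp
          (measurable_fst.prodMk measurable_snd)).aemeasurable
    _ ≤ ∫⁻ _x, 1 ∂ν := by
        apply lintegral_mono
        intro x
        have hrw : ∀ t : ℝ, ({w : ℝ × ℝ | 0 ≤ w.2 ∧ w.2 ≤ w.1⁻¹}.indicator
            (fun w => ENNReal.ofReal w.2) (t, x)) =
            ({t : ℝ | 0 ≤ x ∧ x ≤ t⁻¹}.indicator (fun _ => ENNReal.ofReal x) t) := by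
          intro t
          by_cases hx : 0 ≤ x ∧ x ≤ t⁻¹
          · rw [Set.indicator_of_mem (by exact hx), Set.indicator_of_mem (by exact hx)]
          · rw [Set.indicator_of_notMem (by exact hx), Set.indicator_of_notMem (by exact hx)]
        simp_rw [hrw]
        by_cases hx : 0 < x
        · have hset : MeasurableSet {t : ℝ | 0 ≤ x ∧ x ≤ t⁻¹} :=
            (MeasurableSet.const _).inter (measurableSet_le measurable_const measurable_inv)
          rw [lintegral_indicator hset, setLIntegral_const]
          have : {t : ℝ | 0 ≤ x ∧ x ≤ t⁻¹} ∩ Set.Ioi 0 = Set.Ioc 0 x⁻¹ := by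
            ext t
            simp only [Set.mem_inter_iff, Set.mem_setOf_eq, Set.mem_Ioi, Set.mem_Ioc]
            constructor
            · rintro ⟨⟨_, hxt⟩, ht⟩
              exact ⟨ht, (le_inv_comm₀ hx ht).mp hxt⟩
            · rintro ⟨ht, htx⟩
              exact ⟨⟨hx.le, (le_inv_comm₀ hx ht).mpr htx⟩, ht⟩
          rw [Measure.restrict_apply hset, this, Real.volume_Ioc, sub_zero,
            ← ENNReal.ofReal_mul hx.le, mul_inv_cancel₀ hx.ne']
          simp
        · have hz : ∀ t : ℝ, ({t : ℝ | 0 ≤ x ∧ x ≤ t⁻¹}.indicator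
              (fun _ => ENNReal.ofReal x) t) = 0 := by
            intro t
            by_cases hmem : t ∈ {t : ℝ | 0 ≤ x ∧ x ≤ t⁻¹}
            · rw [Set.indicator_of_mem hmem]
              have hx0 : x = 0 := le_antisymm (not_lt.mp hx) hmem.1
              simp [hx0]
            · rw [Set.indicator_of_notMem hmem]
          simp only [hz, lintegral_zero]
          exact zero_le_one
    _ = 1 := by simp
end Aux2

section Aux3
variable (K : ℕ) (α : ℝ) (β : ℝ → ℝ)

/-- rationalized "acceptance region" used for the generalized-inverse bound -/
def ESet : Set (ℝ × ℝ) :=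
  ⋃ q : ℚ, {w : ℝ × ℝ | (0 ≤ (q:ℝ) ∧ w.1 ≤ α * β q / K) ∧ (0 < w.2 ∧ w.2 * q < 1)}

lemma ESet_measurable (hβ : Measurable β) : MeasurableSet (ESet K α β) := by
  apply MeasurableSet.iUnion
  intro q
  have h1 : MeasurableSet {w : ℝ × ℝ | 0 ≤ (q:ℝ) ∧ w.1 ≤ α * β q / K} :=
    (MeasurableSet.const _).inter (measurableSet_le measurable_fst measurable_const)
  have h2 : MeasurableSet {w : ℝ × ℝ | 0 < w.2 ∧ w.2 * q < 1} :=
    (measurableSet_lt measurable_const measurable_snd).inter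
      (measurableSet_lt (measurable_snd.mul_const _) measurable_const)
  exact h1.inter h2

lemma ESet_mem (p t : ℝ) : (p, t) ∈ ESet K α β ↔
    0 < t ∧ ∃ q : ℚ, 0 ≤ (q:ℝ) ∧ p ≤ α * β q / K ∧ t * q < 1 := by
  simp only [ESet, Set.mem_iUnion, Set.mem_setOf_eq]
  constructor
  · rintro ⟨q, ⟨hq0, hpq⟩, ht, htq⟩
    exact ⟨ht, q, hq0, hpq, htq⟩
  · rintro ⟨ht, q, hq0, hpq, htq⟩
    exact ⟨q, ⟨hq0, hpq⟩, ht, htq⟩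

noncomputable def gfun (p : ℝ) : ℝ≥0∞ := volume (Prod.mk p ⁻¹' ESet K α β)

lemma gfun_measurable (hβ : Measurable β) : Measurable (gfun K α β) :=
  measurable_measure_prodMk_left (ESet_measurable K α β hβ)

/-- if the generalized inverse `sInf {y | 0 ≤ y ∧ p ≤ α β(y)/K}` is positive then
`gfun` dominates its reciprocal -/
lemma gfun_ge (hα : 0 ≤ α) (hβmono : Monotone β) (p : ℝ)
    (hne : {y : ℝ | 0 ≤ y ∧ p ≤ α * β y / K}.Nonempty) :
    ∀ t : ℝ, 0 < t →
      sInf {y : ℝ | 0 ≤ y ∧ p ≤ α * β y / K} < t⁻¹ → (p, t) ∈ ESet K α β := by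
  intro t ht hbt
  obtain ⟨y, hy, hyt⟩ := exists_lt_of_csInf_lt hne hbt
  obtain ⟨q, hyq, hqt⟩ := exists_rat_btwn hyt
  rw [ESet_mem]
  refine ⟨ht, q, le_trans hy.1 hyq.le, le_trans hy.2 ?_, ?_⟩
  · have := hβmono hyq.le
    gcongr
  · have h1 : t * (q:ℝ) < t * t⁻¹ := mul_lt_mul_of_pos_left hqt ht
    rwa [mul_inv_cancel₀ ht.ne'] at h1
end Aux3

section Aux4
variable (K : ℕ) (α : ℝ) (β : ℝ → ℝ)

lemma gfun_lintegral_le {Ω : Type*} [MeasurableSpace Ω] (μ : Measure Ω)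
    [IsProbabilityMeasure μ] (X : Ω → ℝ) (hX : Measurable X)
    (hNull : ∀ s : ℝ, 0 ≤ s → μ {ω | X ω ≤ s} ≤ ENNReal.ofReal s)
    (hα : 0 ≤ α) (hβm : Measurable β) (hβmono : Monotone β) (hβnn : ∀ r, 0 ≤ β r)
    (hint : ∫⁻ t in Set.Ioi (0:ℝ), ENNReal.ofReal (β t⁻¹) ∂volume ≤ 1) :
    ∫⁻ ω, gfun K α β (X ω) ∂μ ≤ ENNReal.ofReal (α / K) := by
  have hE := ESet_measurable K α β hβm
  have step1 : ∀ p : ℝ, gfun K α β p =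
      ∫⁻ t, (ESet K α β).indicator 1 (p, t) ∂volume := by
    intro p
    rw [gfun, ← lintegral_indicator_one (hE.preimage measurable_prodMk_left)]
    apply lintegral_congr
    intro t
    by_cases h : (p, t) ∈ ESet K α β
    · rw [Set.indicator_of_mem h, Set.indicator_of_mem (by exact h)]; rfl
    · rw [Set.indicator_of_notMem h, Set.indicator_of_notMem (by exact h)]
  calc ∫⁻ ω, gfun K α β (X ω) ∂μ
      = ∫⁻ ω, ∫⁻ t, (ESet K α β).indicator 1 (X ω, t) ∂volume ∂μ := by
        exact lintegral_congr (fun ω => step1 (X ω))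
    _ = ∫⁻ t, ∫⁻ ω, (ESet K α β).indicator 1 (X ω, t) ∂μ ∂volume := by
        apply lintegral_lintegral_swap
        exact (((measurable_one.indicator hE).comp
          ((hX.comp measurable_fst).prodMk measurable_snd))).aemeasurable
    _ = ∫⁻ t, μ {ω | (X ω, t) ∈ ESet K α β} ∂volume := by
        apply lintegral_congr
        intro t
        have hmeas : MeasurableSet {ω | (X ω, t) ∈ ESet K α β} :=
          (hX.prodMk measurable_const) hE
        rw [← lintegral_indicator_one hmeas]
        apply lintegral_congr
        intro ω
        by_cases h : (X ω, t) ∈ ESet K α β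
        · rw [Set.indicator_of_mem h, Set.indicator_of_mem (by exact h)]; rfl
        · rw [Set.indicator_of_notMem h, Set.indicator_of_notMem (by exact h)]
    _ ≤ ∫⁻ t, (Set.Ioi (0:ℝ)).indicator
          (fun t => ENNReal.ofReal (α * β t⁻¹ / K)) t ∂volume := by
        apply lintegral_mono
        intro t
        by_cases ht : 0 < t
        · rw [Set.indicator_of_mem (Set.mem_Ioi.mpr ht)]
          have hsub : {ω | (X ω, t) ∈ ESet K α β} ⊆ {ω | X ω ≤ α * β t⁻¹ / K} := by
            intro ω hω
            rw [Set.mem_setOf_eq, ESet_mem] at hω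
            obtain ⟨-, q, hq0, hpq, htq⟩ := hω
            have hqt : (q:ℝ) < t⁻¹ := by
              rw [← one_div]
              exact (lt_div_iff₀ ht).mpr (by linarith [htq])
            refine le_trans hpq ?_
            have := hβmono hqt.le
            gcongr
          refine le_trans (measure_mono hsub) ?_
          exact hNull _ (div_nonneg (mul_nonneg hα (hβnn _)) (Nat.cast_nonneg K))
        · rw [Set.indicator_of_notMem (fun hmem => ht (Set.mem_Ioi.mp hmem))]
          have : {ω | (X ω, t) ∈ ESet K α β} = ∅ := by
            ext ω
            simp only [Set.mem_setOf_eq, ESet_mem, Set.mem_empty_iff_false, iff_false]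
            rintro ⟨ht', -⟩
            exact ht ht'
          simp [this]
    _ = ENNReal.ofReal (α / K) * ∫⁻ t in Set.Ioi (0:ℝ),
          ENNReal.ofReal (β t⁻¹) ∂volume := by
        rw [lintegral_indicator measurableSet_Ioi]
        rw [← lintegral_const_mul' _ _ ENNReal.ofReal_ne_top]
        apply lintegral_congr
        intro t
        rw [← ENNReal.ofReal_mul (div_nonneg hα (Nat.cast_nonneg K))]
        congr 1
        ring
    _ ≤ ENNReal.ofReal (α / K) * 1 := by
        exact mul_le_mul_right hint _
    _ = ENNReal.ofReal (α / K) := mul_one _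
end Aux4

section Aux5
variable (K : ℕ) (α : ℝ) (β : ℝ → ℝ)

noncomputable def Phi (i : Fin K) (z : (Fin K → ℝ) × ℝ) : ℝ≥0∞ :=
  {z : (Fin K → ℝ) × ℝ | z.1 i ≤ α * β ((rbyKst K α β z : ℝ) / z.2) / K}.indicator
    (fun z => ((max (rbyKst K α β z) 1 : ℕ) : ℝ≥0∞)⁻¹) z

lemma Phi_measurable (hβm : Measurable β) (i : Fin K) : Measurable (Phi K α β i) := by
  have hk := rbyKst_measurable K α β hβm
  have hkR : Measurable (fun z : (Fin K → ℝ) × ℝ => ((rbyKst K α β z : ℝ))) :=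
    (measurable_from_top (f := fun n : ℕ => (n:ℝ))).comp' hk
  apply Measurable.indicator
  · exact (measurable_from_top (f := fun n : ℕ => ((max n 1 : ℕ) : ℝ≥0∞)⁻¹)).comp' hk
  · exact measurableSet_le measurable_fst.eval
      ((measurable_const.mul (hβm.comp' (hkR.div measurable_snd))).div_const _)

lemma cond_bound (hK : 0 < K) (hα : 0 < α) (hβm : Measurable β) (hβmono : Monotone β)
    (hβ0 : β 0 = 0) (hβnn : ∀ r, 0 ≤ β r) (p : Fin K → ℝ) (i : Fin K) :
    ∫⁻ u in Set.Icc (0:ℝ) 1, Phi K α β i (p, u) ∂volume ≤ gfun K α β (p i) := by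
  classical
  set A := {y : ℝ | 0 ≤ y ∧ p i ≤ α * β y / K} with hAdef
  set R : ℝ → ℕ := fun u => max (rbyKst K α β (p, u)) 1 with hRdef
  set S := {u : ℝ | u ∈ Set.Ioc (0:ℝ) 1 ∧ p i ≤ α * β ((R u : ℝ) / u) / K} with hSdef
  rw [← Measure.restrict_congr_set Ioc_ae_eq_Icc]
  have hpt : ∀ u ∈ Set.Ioc (0:ℝ) 1, Phi K α β i (p, u) ≤
      S.indicator (fun u => ((R u : ℕ) : ℝ≥0∞)⁻¹) u := by
    intro u hu
    simp only [Phi]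
    by_cases hcond : (p, u) ∈ {z : (Fin K → ℝ) × ℝ |
        z.1 i ≤ α * β ((rbyKst K α β z : ℝ) / z.2) / K}
    · rw [Set.indicator_of_mem hcond]
      have hcond' : p i ≤ α * β ((rbyKst K α β (p, u) : ℝ) / u) / K := hcond
      have huS : u ∈ S := by
        refine ⟨hu, ?_⟩
        rcases Nat.eq_zero_or_pos (rbyKst K α β (p, u)) with h0 | hpos
        · rw [h0] at hcond'
          simp only [Nat.cast_zero, zero_div, hβ0, mul_zero, zero_div] at hcond'
          refine le_trans hcond' (div_nonneg (mul_nonneg hα.le (hβnn _)) (Nat.cast_nonneg K))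
        · have : R u = rbyKst K α β (p, u) := max_eq_left hpos
          rw [this]
          exact hcond'
      rw [Set.indicator_of_mem huS]
    · rw [Set.indicator_of_notMem hcond]
      exact zero_le
  refine le_trans (lintegral_mono_ae (ae_restrict_of_forall_mem measurableSet_Ioc hpt)) ?_
  by_cases hS : S.Nonempty
  swap
  · rw [Set.not_nonempty_iff_eq_empty.mp hS]
    simp
  obtain ⟨u₀, hu₀⟩ := hS
  have hu₀pos : 0 < u₀ := hu₀.1.1
  have hAne : A.Nonempty :=
    ⟨(R u₀ : ℝ) / u₀, div_nonneg (Nat.cast_nonneg _) hu₀pos.le, hu₀.2⟩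
  set b := sInf A with hbdef
  have hb0 : 0 ≤ b := le_csInf hAne (fun y hy => hy.1)
  rcases eq_or_lt_of_le hb0 with hb | hb
  · -- b = 0 : gfun is infinite
    have htop : gfun K α β (p i) = ⊤ := by
      have hsub : Set.Ioi (0:ℝ) ⊆ Prod.mk (p i) ⁻¹' ESet K α β := by
        intro t ht
        exact gfun_ge K α β hα.le hβmono (p i) hAne t ht
          (by change b < t⁻¹; rw [← hb]; exact inv_pos.mpr ht)
      refine top_unique ?_
      calc (⊤ : ℝ≥0∞) = volume (Set.Ioi (0:ℝ)) := Real.volume_Ioi.symm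
        _ ≤ volume (Prod.mk (p i) ⁻¹' ESet K α β) := measure_mono hsub
        _ = gfun K α β (p i) := rfl
    rw [htop]
    exact le_top
  · -- b > 0
    have hbA : ∀ u ∈ S, b * u ≤ (R u : ℝ) := by
      intro u hu
      have hmem : (R u : ℝ) / u ∈ A :=
        ⟨div_nonneg (Nat.cast_nonneg _) hu.1.1.le, hu.2⟩
      have hle : b ≤ (R u : ℝ) / u := csInf_le ⟨0, fun y hy => hy.1⟩ hmem
      exact (le_div_iff₀ hu.1.1).mp hle
    have hRmono : ∀ u ∈ S, ∀ u' ∈ S, b * u' ≤ (R u : ℝ) := by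
      intro u hu u' hu'
      rcases le_total u' u with h | h
      · exact le_trans (mul_le_mul_of_nonneg_left h hb0) (hbA u hu)
      · refine le_trans (hbA u' hu') ?_
        have hk := rbyKst_antitone K α β hβmono hα.le p hu.1.1 h
        exact_mod_cast max_le_max hk le_rfl
    set t₀ := sSup S with ht₀def
    have hu₀t : u₀ ≤ t₀ := le_csSup ⟨1, fun x hx => hx.1.2⟩ hu₀
    have ht₀pos : 0 < t₀ := lt_of_lt_of_le hu₀pos hu₀t
    have hRt : ∀ u ∈ S, b * t₀ ≤ (R u : ℝ) := by
      intro u hu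
      have ht : t₀ ≤ (R u : ℝ) / b := csSup_le ⟨u₀, hu₀⟩ (fun u' hu' => by
        rw [le_div_iff₀ hb]
        rw [mul_comm]
        exact hRmono u hu u' hu')
      have := (le_div_iff₀ hb).mp ht
      linarith [this]
    have hind : ∀ u, S.indicator (fun u => ((R u : ℕ) : ℝ≥0∞)⁻¹) u ≤
        (Set.Ioc (0:ℝ) t₀).indicator (fun _ => (ENNReal.ofReal (b * t₀))⁻¹) u := by
      intro u
      by_cases hu : u ∈ S
      · rw [Set.indicator_of_mem hu, Set.indicator_of_mem
          (show u ∈ Set.Ioc (0:ℝ) t₀ from ⟨hu.1.1, le_csSup ⟨1, fun x hx => hx.1.2⟩ hu⟩)]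
        apply ENNReal.inv_le_inv'
        calc ENNReal.ofReal (b * t₀) ≤ ENNReal.ofReal ((R u : ℕ) : ℝ) :=
              ENNReal.ofReal_le_ofReal (hRt u hu)
          _ = ((R u : ℕ) : ℝ≥0∞) := ENNReal.ofReal_natCast _
      · rw [Set.indicator_of_notMem hu]
        exact zero_le
    calc ∫⁻ u in Set.Ioc (0:ℝ) 1, S.indicator (fun u => ((R u : ℕ) : ℝ≥0∞)⁻¹) u ∂volume
        ≤ ∫⁻ u in Set.Ioc (0:ℝ) 1,
            (Set.Ioc (0:ℝ) t₀).indicator (fun _ => (ENNReal.ofReal (b * t₀))⁻¹) u ∂volume :=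
          lintegral_mono (fun u => hind u)
      _ = (ENNReal.ofReal (b * t₀))⁻¹ * volume (Set.Ioc (0:ℝ) t₀ ∩ Set.Ioc (0:ℝ) 1) := by
          rw [lintegral_indicator measurableSet_Ioc, setLIntegral_const,
            Measure.restrict_apply measurableSet_Ioc]
      _ ≤ (ENNReal.ofReal (b * t₀))⁻¹ * ENNReal.ofReal t₀ := by
          apply mul_le_mul_right
          calc volume (Set.Ioc (0:ℝ) t₀ ∩ Set.Ioc (0:ℝ) 1)
              ≤ volume (Set.Ioc (0:ℝ) t₀) := measure_mono Set.inter_subset_left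
            _ = ENNReal.ofReal t₀ := by rw [Real.volume_Ioc, sub_zero]
      _ = (ENNReal.ofReal b)⁻¹ := by
          rw [ENNReal.ofReal_mul hb0, ENNReal.mul_inv (Or.inr ENNReal.ofReal_ne_top)
            (Or.inl ENNReal.ofReal_ne_top), mul_assoc,
            ENNReal.inv_mul_cancel (by simpa using ht₀pos) ENNReal.ofReal_ne_top, mul_one]
      _ ≤ gfun K α β (p i) := by
          have hsub : Set.Ioo (0:ℝ) b⁻¹ ⊆ Prod.mk (p i) ⁻¹' ESet K α β := by
            intro t ht
            refine gfun_ge K α β hα.le hβmono (p i) hAne t ht.1 ?_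
            change b < t⁻¹
            exact (lt_inv_comm₀ hb ht.1).mpr ht.2
          calc (ENNReal.ofReal b)⁻¹ = ENNReal.ofReal b⁻¹ := (ENNReal.ofReal_inv_of_pos hb).symm
            _ = volume (Set.Ioo (0:ℝ) b⁻¹) := by rw [Real.volume_Ioo, sub_zero]
            _ ≤ gfun K α β (p i) := measure_mono hsub
end Aux5

/-- FDR control of the β-reshaped randomized BY procedure: with arbitrarily
dependent p-values (superuniform on the set `N` of true nulls), `U` uniform on
`[0,1]` independent of them, and a reshaping function `β(r) = ∫_0^r x dν(x)`,
rejecting the `k*` smallest p-values where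
`k* = max{i : P_(i) ≤ α β(i/U)/K}` has FDR at most α. -/
theorem stmt15 {Ω : Type*} [MeasureSpace Ω] [IsProbabilityMeasure (ℙ : Measure Ω)]
    (K : ℕ) (hK : 0 < K) (α : ℝ) (hα : 0 < α) (hα1 : α ≤ 1)
    (P : Fin K → Ω → ℝ) (hPm : ∀ i, Measurable (P i))
    (hP01 : ∀ i ω, P i ω ∈ Set.Icc (0:ℝ) 1)
    (N : Finset (Fin K))
    (hNull : ∀ i ∈ N, ∀ s ∈ Set.Icc (0:ℝ) 1, ℙ {ω | P i ω ≤ s} ≤ ENNReal.ofReal s)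
    (U : Ω → ℝ) (hUm : Measurable U)
    (hUnif : Measure.map U ℙ = (volume : Measure ℝ).restrict (Icc (0:ℝ) 1))
    (hInd : IndepFun (fun ω i => P i ω) U ℙ)
    (ν : Measure ℝ) [IsProbabilityMeasure ν] (hν : ν (Set.Iio 0) = 0)
    (β : ℝ → ℝ) (hβ : ∀ r, β r = ∫ x in Set.Icc 0 r, x ∂ν)
    (kStar : Ω → ℕ)
    (hkStar : ∀ ω, kStar ω = sSup {k : ℕ | k ≤ K ∧ k ≤ (Finset.univ.filter
        (fun j : Fin K => P j ω ≤ α * β ((k : ℝ) / U ω) / K)).card})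
    (D : Ω → Finset (Fin K))
    (hD : ∀ ω, D ω = Finset.univ.filter
        (fun j : Fin K => P j ω ≤ α * β ((kStar ω : ℝ) / U ω) / K)) :
    ∫⁻ ω, ((D ω ∩ N).card : ℝ≥0∞) / ((max (D ω).card 1 : ℕ) : ℝ≥0∞) ∂ℙ
      ≤ ENNReal.ofReal α := by
  classical
  have hβmono : Monotone β := beta_mono β ν hβ
  have hβ0 : β 0 = 0 := beta_zero β ν hβ
  have hβnn : ∀ r, 0 ≤ β r := beta_nonneg β ν hβ
  have hβm : Measurable β := hβmono.measurable
  set X : Ω → (Fin K → ℝ) := fun ω i => P i ω with hXdef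
  have hXm : Measurable X := measurable_pi_lambda _ hPm
  have hkst : ∀ ω, kStar ω = rbyKst K α β (X ω, U ω) := by
    intro ω
    rw [hkStar ω]
    rfl
  -- pointwise bound on the FDP
  have hpoint : ∀ ω, ((D ω ∩ N).card : ℝ≥0∞) / ((max (D ω).card 1 : ℕ) : ℝ≥0∞) ≤
      ∑ i ∈ N, Phi K α β i (X ω, U ω) := by
    intro ω
    have hkD : rbyKst K α β (X ω, U ω) ≤ (D ω).card := by
      have hmem := (rbyKst_mem K α β (X ω, U ω)).2
      rw [hD ω, hkst ω]
      exact hmem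
    have hmax : max (rbyKst K α β (X ω, U ω)) 1 ≤ max (D ω).card 1 := max_le_max hkD le_rfl
    have h1 : ((D ω ∩ N).card : ℝ≥0∞) = ∑ i ∈ N, (if i ∈ D ω then (1:ℝ≥0∞) else 0) := by
      rw [Finset.inter_comm, ← Finset.filter_mem_eq_inter, Finset.card_filter, Nat.cast_sum]
      exact Finset.sum_congr rfl (fun i _ => by split <;> simp)
    rw [h1, div_eq_mul_inv, Finset.sum_mul]
    apply Finset.sum_le_sum
    intro i _
    by_cases hiD : i ∈ D ω
    · rw [if_pos hiD, one_mul]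
      have hcond : (X ω, U ω) ∈ {z : (Fin K → ℝ) × ℝ |
          z.1 i ≤ α * β ((rbyKst K α β z : ℝ) / z.2) / K} := by
        have := (Finset.mem_filter.mp ((hD ω) ▸ hiD)).2
        rw [hkst ω] at this
        exact this
      have : Phi K α β i (X ω, U ω) =
          ((max (rbyKst K α β (X ω, U ω)) 1 : ℕ) : ℝ≥0∞)⁻¹ := by
        simp only [Phi]
        rw [Set.indicator_of_mem hcond]
      rw [this]
      exact ENNReal.inv_le_inv' (by exact_mod_cast hmax)
    · rw [if_neg hiD, zero_mul]
      exact zero_le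
  -- per-index integral bound
  have hmain : ∀ i ∈ N, ∫⁻ ω, Phi K α β i (X ω, U ω) ∂ℙ ≤ ENNReal.ofReal (α / K) := by
    intro i hi
    have hΦm := Phi_measurable K α β hβm i
    have hmap : Measure.map (fun ω => (X ω, U ω)) ℙ =
        (Measure.map X ℙ).prod (Measure.map U ℙ) :=
      (indepFun_iff_map_prod_eq_prod_map_map hXm.aemeasurable hUm.aemeasurable).mp hInd
    have h1 : ∫⁻ ω, Phi K α β i (X ω, U ω) ∂ℙ =
        ∫⁻ z, Phi K α β i z ∂((Measure.map X ℙ).prod (Measure.map U ℙ)) := by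
      rw [← hmap, lintegral_map hΦm (hXm.prodMk hUm)]
    rw [h1, hUnif, lintegral_prod _ hΦm.aemeasurable]
    have hNull' : ∀ s : ℝ, 0 ≤ s → ℙ {ω | X ω i ≤ s} ≤ ENNReal.ofReal s := by
      intro s hs
      by_cases hs1 : s ≤ 1
      · exact hNull i hi s ⟨hs, hs1⟩
      · calc ℙ {ω | X ω i ≤ s} ≤ 1 := prob_le_one
          _ = ENNReal.ofReal 1 := by simp
          _ ≤ ENNReal.ofReal s := ENNReal.ofReal_le_ofReal (le_of_not_ge hs1)
    calc ∫⁻ p, ∫⁻ u in Set.Icc (0:ℝ) 1, Phi K α β i (p, u) ∂volume ∂(Measure.map X ℙ)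
        ≤ ∫⁻ p, gfun K α β (p i) ∂(Measure.map X ℙ) :=
          lintegral_mono (fun p => cond_bound K α β hK hα hβm hβmono hβ0 hβnn p i)
      _ = ∫⁻ ω, gfun K α β (X ω i) ∂ℙ :=
          lintegral_map ((gfun_measurable K α β hβm).comp' (measurable_pi_apply i)) hXm
      _ ≤ ENNReal.ofReal (α / K) :=
          gfun_lintegral_le K α β ℙ (fun ω => X ω i) (hPm i) hNull' hα.le hβm hβmono hβnn
            (beta_key_integral β ν hβ)
  -- put things together
  have hKne : (K:ℝ) ≠ 0 := by
    exact_mod_cast hK.ne'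
  calc ∫⁻ ω, ((D ω ∩ N).card : ℝ≥0∞) / ((max (D ω).card 1 : ℕ) : ℝ≥0∞) ∂ℙ
      ≤ ∫⁻ ω, ∑ i ∈ N, Phi K α β i (X ω, U ω) ∂ℙ := lintegral_mono hpoint
    _ = ∑ i ∈ N, ∫⁻ ω, Phi K α β i (X ω, U ω) ∂ℙ :=
        lintegral_finset_sum _ (fun i _ =>
          (Phi_measurable K α β hβm i).comp' (hXm.prodMk hUm))
    _ ≤ ∑ _i ∈ N, ENNReal.ofReal (α / K) := Finset.sum_le_sum hmain
    _ = (N.card : ℝ≥0∞) * ENNReal.ofReal (α / K) := by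
        rw [Finset.sum_const, nsmul_eq_mul]
    _ ≤ (K : ℝ≥0∞) * ENNReal.ofReal (α / K) := by
        apply mul_le_mul_left
        exact_mod_cast (N.card_le_univ).trans_eq (by simp)
    _ = ENNReal.ofReal α := by
        rw [← ENNReal.ofReal_natCast, ← ENNReal.ofReal_mul (Nat.cast_nonneg K)]
        congr 1
        field_simp
end

section
/- Let X be an e-value for a null hypothesis H_0 (E[X] ≤ 1 under H_0), let α̂ ∈ (0,1) be a random test level, and let P be a random variable with P(P ≤ s | X, α̂) ≤ s for all s ∈ [0,1] under H_0. Then M_{α̂}(X,P) := max( X·1{X ≥ 1/α̂}, (1/α̂)·1{α̂X ≥ P} ) satisfies E[M_{α̂}(X,P)] ≤ 1 under H_0, i.e., it is an e-value. -/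
open MeasureTheory ProbabilityTheory Set
open scoped ENNReal Topology

/-- Auxiliary Lemma A: weighted superuniformity at a fixed level `s`, for
weights measurable w.r.t. the sub-σ-algebra `m`. -/
lemma aux_lemA {Ω : Type*} {m : MeasurableSpace Ω} [m0 : MeasurableSpace Ω]
    (μ : Measure Ω) (hm : m ≤ m0)
    {P : Ω → ℝ} (hPm : Measurable P) (s : ℝ)
    (hPs : ∀ B : Set Ω, MeasurableSet[m] B →
      μ ({ω | P ω ≤ s} ∩ B) ≤ ENNReal.ofReal s * μ B)
    {f : Ω → ℝ≥0∞} (hf : Measurable[m] f) :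
    ∫⁻ ω in {ω | P ω ≤ s}, f ω ∂μ ≤ ENNReal.ofReal s * ∫⁻ ω, f ω ∂μ := by
  have hS : MeasurableSet {ω | P ω ≤ s} := measurableSet_le hPm measurable_const
  have hle : (μ.restrict {ω | P ω ≤ s}).trim hm ≤ (ENNReal.ofReal s • μ).trim hm := by
    rw [Measure.le_iff]
    intro B hB
    rw [trim_measurableSet_eq hm hB, trim_measurableSet_eq hm hB,
      Measure.restrict_apply (hm _ hB), Set.inter_comm, Measure.smul_apply, smul_eq_mul]
    exact hPs B hB
  calc ∫⁻ ω in {ω | P ω ≤ s}, f ω ∂μ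
      = ∫⁻ ω, f ω ∂((μ.restrict {ω | P ω ≤ s}).trim hm) := (lintegral_trim hm hf).symm
    _ ≤ ∫⁻ ω, f ω ∂((ENNReal.ofReal s • μ).trim hm) := lintegral_mono' hle le_rfl
    _ = ∫⁻ ω, f ω ∂(ENNReal.ofReal s • μ) := lintegral_trim hm hf
    _ = ENNReal.ofReal s * ∫⁻ ω, f ω ∂μ := lintegral_smul_measure _ _

/-- Auxiliary Lemma B: weighted superuniformity at a random, countably-valued,
`m`-measurable level `t` with values in `[0,1]`. -/
lemma aux_lemB {Ω : Type*} {m : MeasurableSpace Ω} [m0 : MeasurableSpace Ω]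
    (μ : Measure Ω) (hm : m ≤ m0)
    {P : Ω → ℝ} (hPm : Measurable P)
    (hP : ∀ s ∈ Set.Icc (0:ℝ) 1, ∀ B : Set Ω, MeasurableSet[m] B →
      μ ({ω | P ω ≤ s} ∩ B) ≤ ENNReal.ofReal s * μ B)
    {t : Ω → ℝ} (ht : Measurable[m] t) (htc : (Set.range t).Countable)
    (ht01 : ∀ ω, t ω ∈ Set.Icc (0:ℝ) 1)
    {f : Ω → ℝ≥0∞} (hf : Measurable[m] f) :
    ∫⁻ ω, ({ω | P ω ≤ t ω}).indicator f ω ∂μ ≤ ∫⁻ ω, ENNReal.ofReal (t ω) * f ω ∂μ := by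
  haveI := htc.to_subtype
  set C : (Set.range t) → Set Ω := fun v => t ⁻¹' {(v : ℝ)} with hC
  have hCm : ∀ v, MeasurableSet[m] (C v) := fun v => ht (measurableSet_singleton _)
  have hCm0 : ∀ v, MeasurableSet (C v) := fun v => hm _ (hCm v)
  have hdisj : Pairwise (Function.onFun Disjoint C) := by
    intro u v huv
    simp only [Function.onFun, C, Set.disjoint_left]
    intro ω hu hv
    refine huv (Subtype.ext ?_)
    simp only [Set.mem_preimage, Set.mem_singleton_iff] at hu hv
    rw [← hu, ← hv]
  have hcover : (⋃ v, C v) = Set.univ := by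
    ext ω; simp only [Set.mem_iUnion, Set.mem_univ, iff_true]
    exact ⟨⟨t ω, Set.mem_range_self ω⟩, rfl⟩
  have key : ∀ (g : Ω → ℝ≥0∞), ∫⁻ ω, g ω ∂μ = ∑' v, ∫⁻ ω in C v, g ω ∂μ := by
    intro g
    rw [← lintegral_iUnion hCm0 hdisj g, hcover, Measure.restrict_univ]
  rw [key, key (fun ω => ENNReal.ofReal (t ω) * f ω)]
  refine ENNReal.tsum_le_tsum fun v => ?_
  have hveq : ∀ ω ∈ C v, ({ω | P ω ≤ t ω}).indicator f ω = ({ω | P ω ≤ (v:ℝ)}).indicator f ω := by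
    intro ω hω
    simp only [Set.mem_preimage, Set.mem_singleton_iff, C] at hω
    simp only [Set.indicator, Set.mem_setOf_eq, hω]
  obtain ⟨ω₀, hω₀⟩ := v.2
  have hv01 : (v:ℝ) ∈ Set.Icc (0:ℝ) 1 := hω₀ ▸ ht01 ω₀
  calc ∫⁻ ω in C v, ({ω | P ω ≤ t ω}).indicator f ω ∂μ
      = ∫⁻ ω in C v, ({ω | P ω ≤ (v:ℝ)}).indicator f ω ∂μ :=
        setLIntegral_congr_fun (hCm0 v) hveq
    _ = ∫⁻ ω in {ω | P ω ≤ (v:ℝ)}, (C v).indicator f ω ∂μ := by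
        rw [lintegral_indicator (measurableSet_le hPm measurable_const),
          lintegral_indicator (hCm0 v), Measure.restrict_restrict (hCm0 v),
          Measure.restrict_restrict (measurableSet_le hPm measurable_const), Set.inter_comm]
    _ ≤ ENNReal.ofReal (v:ℝ) * ∫⁻ ω, (C v).indicator f ω ∂μ :=
        aux_lemA μ hm hPm _ (hP _ hv01) ((hf).indicator (hCm v))
    _ = ∫⁻ ω in C v, ENNReal.ofReal (t ω) * f ω ∂μ := by
        rw [lintegral_indicator (hCm0 v), ← lintegral_const_mul' _ _ ENNReal.ofReal_ne_top]
        refine setLIntegral_congr_fun (hCm0 v) (fun ω hω => ?_)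
        simp only [Set.mem_preimage, Set.mem_singleton_iff, C] at hω
        rw [hω]

lemma aux_main {Ω : Type*} {m : MeasurableSpace Ω} [m0 : MeasurableSpace Ω]
    (μ : Measure Ω) [IsProbabilityMeasure μ]
    (X A P : Ω → ℝ) (hm : m ≤ m0)
    (hXm' : Measurable[m] X) (hAm' : Measurable[m] A) (hPm : Measurable P)
    (hX0 : ∀ ω, 0 ≤ X ω) (hXe : ∫⁻ ω, ENNReal.ofReal (X ω) ∂μ ≤ 1)
    (hA : ∀ ω, A ω ∈ Set.Ioo (0:ℝ) 1)
    (hP : ∀ s ∈ Set.Icc (0:ℝ) 1, ∀ B : Set Ω, MeasurableSet[m] B →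
      μ ({ω | P ω ≤ s} ∩ B) ≤ ENNReal.ofReal s * μ B) :
    ∫⁻ ω, ENNReal.ofReal (max (X ω * (if 1 / A ω ≤ X ω then 1 else 0))
        ((1 / A ω) * (if P ω ≤ A ω * X ω then 1 else 0))) ∂μ ≤ 1 := by
  classical
  have hXm : Measurable X := hXm'.mono hm le_rfl
  have hAm : Measurable A := hAm'.mono hm le_rfl
  set E : Set Ω := {ω | 1 / A ω ≤ X ω} with hEdef
  have hEm' : MeasurableSet[m] E := measurableSet_le (measurable_const.div hAm') hXm'
  have hEm : MeasurableSet E := hm _ hEm'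
  set g : Ω → ℝ≥0∞ := fun ω => ENNReal.ofReal (1 / A ω) with hgdef
  have hg' : Measurable[m] g := (measurable_const.div hAm').ennreal_ofReal
  have hg : Measurable g := hg'.mono hm le_rfl
  set S2 : Set Ω := {ω | P ω ≤ A ω * X ω} with hS2def
  have hS2 : MeasurableSet S2 := measurableSet_le hPm (hAm.mul hXm)
  have hXE : Measurable (fun ω => ENNReal.ofReal (X ω)) := hXm.ennreal_ofReal
  -- Step 1: rewrite the integrand as a sum of two indicator pieces
  have hpt : ∀ ω, ENNReal.ofReal (max (X ω * (if 1 / A ω ≤ X ω then 1 else 0))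
        ((1 / A ω) * (if P ω ≤ A ω * X ω then 1 else 0)))
      = E.indicator (fun ω => ENNReal.ofReal (X ω)) ω + Eᶜ.indicator (S2.indicator g) ω := by
    intro ω
    have hA0 : 0 < A ω := (hA ω).1
    have hinv0 : (0:ℝ) ≤ 1 / A ω := by positivity
    by_cases h1 : 1 / A ω ≤ X ω
    · have hE : ω ∈ E := h1
      rw [Set.indicator_of_mem hE, Set.indicator_of_notMem (Set.notMem_compl_iff.mpr hE), add_zero,
        if_pos h1, mul_one]
      congr 1
      rcases le_or_gt (P ω) (A ω * X ω) with h2 | h2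
      · rw [if_pos h2, mul_one, max_eq_left h1]
      · rw [if_neg (not_le.mpr h2), mul_zero, max_eq_left (hX0 ω)]
    · have hE : ω ∉ E := h1
      rw [Set.indicator_of_notMem hE, Set.indicator_of_mem (Set.mem_compl hE), zero_add,
        if_neg h1, mul_zero]
      rcases le_or_gt (P ω) (A ω * X ω) with h2 | h2
      · have hS : ω ∈ S2 := h2
        rw [Set.indicator_of_mem hS, if_pos h2, mul_one, max_eq_right hinv0, hgdef]
      · have hS : ω ∉ S2 := not_le.mpr h2
        rw [Set.indicator_of_notMem hS, if_neg (not_le.mpr h2), mul_zero, max_self,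
          ENNReal.ofReal_zero]
  rw [lintegral_congr hpt, lintegral_add_left (hXE.indicator hEm)]
  set κ : ℝ≥0∞ := ∫⁻ ω, Eᶜ.indicator (fun ω => ENNReal.ofReal (X ω)) ω ∂μ with hκdef
  -- truncated weights
  set D : ℕ → Set Ω := fun N => Eᶜ ∩ {ω | 1 / A ω ≤ (N:ℝ)} with hDdef
  have hDm' : ∀ N, MeasurableSet[m] (D N) := fun N =>
    (hEm'.compl).inter (measurableSet_le (measurable_const.div hAm') measurable_const)
  have hDm : ∀ N, MeasurableSet (D N) := fun N => hm _ (hDm' N)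
  set fN : ℕ → Ω → ℝ≥0∞ := fun N => (D N).indicator g with hfNdef
  have hfNm' : ∀ N, Measurable[m] (fN N) := fun N => hg'.indicator (hDm' N)
  -- key bound for each truncation level N
  have keyN : ∀ N : ℕ, ∫⁻ ω, S2.indicator (fN N) ω ∂μ ≤ κ := by
    intro N
    have hbound : ∀ n : ℕ, ∫⁻ ω, S2.indicator (fN N) ω ∂μ
        ≤ κ + ENNReal.ofReal ((2:ℝ)⁻¹ ^ n) * N := by
      intro n
      have hpow : ((2:ℝ)⁻¹) ^ n * 2 ^ n = 1 := by
        rw [← mul_pow]; norm_num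
      set t : Ω → ℝ := fun ω => min (((⌈(A ω * X ω) * 2^n⌉ : ℤ) : ℝ) / 2^n) 1 with htdef
      have htm' : Measurable[m] t := by
        have h1 : Measurable (fun x : ℝ => min (((⌈x * 2^n⌉ : ℤ) : ℝ) / 2^n) 1) := by
          have h2 : Measurable (fun x : ℝ => (⌈x * 2^n⌉ : ℤ)) :=
            Int.measurable_ceil.comp (measurable_id.mul_const _)
          exact (measurable_from_top (f := fun k : ℤ => min ((k:ℝ)/2^n) 1)).comp h2
        exact h1.comp (hAm'.mul hXm')
      have htc : (Set.range t).Countable := by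
        refine (Set.countable_range (fun k : ℤ => min ((k:ℝ)/2^n) 1)).mono ?_
        rintro x ⟨ω, rfl⟩
        exact ⟨⌈(A ω * X ω) * 2^n⌉, rfl⟩
      have ht01 : ∀ ω, t ω ∈ Set.Icc (0:ℝ) 1 := by
        intro ω
        have hAX : (0:ℝ) ≤ A ω * X ω := mul_nonneg (hA ω).1.le (hX0 ω)
        constructor
        · refine le_min (div_nonneg ?_ (by positivity)) zero_le_one
          exact_mod_cast Int.ceil_nonneg (by positivity : (0:ℝ) ≤ (A ω * X ω) * 2^n)
        · exact min_le_right _ _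
      have hptle : ∀ ω, S2.indicator (fN N) ω ≤ ({ω | P ω ≤ t ω}).indicator (fN N) ω := by
        intro ω
        by_cases hS : ω ∈ S2
        · by_cases hD : ω ∈ D N
          · have hEc : ω ∉ E := hD.1
            have hA0 : 0 < A ω := (hA ω).1
            have hh1 : A ω * X ω < 1 := by
              have hXlt : X ω < 1 / A ω := not_le.mp hEc
              calc A ω * X ω < A ω * (1 / A ω) := mul_lt_mul_of_pos_left hXlt hA0
                _ = 1 := by field_simp
            have hht : A ω * X ω ≤ t ω := by
              refine le_min ?_ hh1.le
              rw [le_div_iff₀ (by positivity : (0:ℝ) < 2^n)]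
              exact Int.le_ceil _
            have hPt : ω ∈ {ω | P ω ≤ t ω} := le_trans (hS : P ω ≤ A ω * X ω) hht
            rw [Set.indicator_of_mem hS, Set.indicator_of_mem hPt]
          · have hz : fN N ω = 0 := Set.indicator_of_notMem hD _
            rw [Set.indicator_of_mem hS, hz]
            exact zero_le
        · rw [Set.indicator_of_notMem hS]
          exact zero_le
      calc ∫⁻ ω, S2.indicator (fN N) ω ∂μ
          ≤ ∫⁻ ω, ({ω | P ω ≤ t ω}).indicator (fN N) ω ∂μ := lintegral_mono hptle
        _ ≤ ∫⁻ ω, ENNReal.ofReal (t ω) * fN N ω ∂μ :=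
            aux_lemB μ hm hPm hP htm' htc ht01 (hfNm' N)
        _ ≤ ∫⁻ ω, (Eᶜ.indicator (fun ω => ENNReal.ofReal (X ω)) ω
              + ENNReal.ofReal ((2:ℝ)⁻¹ ^ n) * fN N ω) ∂μ := by
            refine lintegral_mono fun ω => ?_
            by_cases hD : ω ∈ D N
            · have hA0 : (0:ℝ) < A ω := (hA ω).1
              have h0 : (0:ℝ) ≤ A ω * X ω := mul_nonneg hA0.le (hX0 ω)
              have ht_le : t ω ≤ A ω * X ω + (2:ℝ)⁻¹ ^ n := by
                refine (min_le_left _ _).trans ?_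
                rw [div_le_iff₀ (by positivity : (0:ℝ) < 2^n)]
                calc ((⌈(A ω * X ω) * 2^n⌉ : ℤ) : ℝ) ≤ (A ω * X ω) * 2^n + 1 :=
                      (Int.ceil_lt_add_one _).le
                  _ = (A ω * X ω + (2:ℝ)⁻¹ ^ n) * 2^n := by
                      rw [add_mul, hpow]
              have hfval : fN N ω = ENNReal.ofReal (1 / A ω) := Set.indicator_of_mem hD _
              have e1 : ENNReal.ofReal (t ω) * fN N ω
                  ≤ (ENNReal.ofReal (A ω * X ω) + ENNReal.ofReal ((2:ℝ)⁻¹ ^ n)) * fN N ω := by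
                refine mul_le_mul_left ?_ _
                calc ENNReal.ofReal (t ω) ≤ ENNReal.ofReal (A ω * X ω + (2:ℝ)⁻¹ ^ n) :=
                      ENNReal.ofReal_le_ofReal ht_le
                  _ = _ := ENNReal.ofReal_add h0 (by positivity)
              refine e1.trans ?_
              rw [add_mul]
              refine add_le_add ?_ (mul_le_mul_right le_rfl _)
              rw [hfval, ← ENNReal.ofReal_mul h0]
              have hAXA : A ω * X ω * (1 / A ω) = X ω := by
                field_simp
              rw [hAXA, Set.indicator_of_mem hD.1]
            · have hz : fN N ω = 0 := Set.indicator_of_notMem hD _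
              rw [hz, mul_zero, mul_zero, add_zero]
              exact zero_le
        _ = κ + ENNReal.ofReal ((2:ℝ)⁻¹ ^ n) * ∫⁻ ω, fN N ω ∂μ := by
            rw [lintegral_add_left (hXE.indicator hEm.compl),
              lintegral_const_mul' _ _ ENNReal.ofReal_ne_top]
        _ ≤ κ + ENNReal.ofReal ((2:ℝ)⁻¹ ^ n) * N := by
            refine add_le_add le_rfl (mul_le_mul_right ?_ _)
            calc ∫⁻ ω, fN N ω ∂μ ≤ ∫⁻ _, (N:ℝ≥0∞) ∂μ := by
                  refine lintegral_mono fun ω => ?_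
                  by_cases hD : ω ∈ D N
                  · rw [show fN N ω = ENNReal.ofReal (1 / A ω) from Set.indicator_of_mem hD _]
                    calc ENNReal.ofReal (1 / A ω) ≤ ENNReal.ofReal (N:ℝ) :=
                          ENNReal.ofReal_le_ofReal hD.2
                      _ = (N:ℝ≥0∞) := ENNReal.ofReal_natCast N
                  · rw [show fN N ω = 0 from Set.indicator_of_notMem hD _]
                    exact zero_le
              _ = N := by simp
    -- pass to the limit n → ∞
    have h1 : Filter.Tendsto (fun n : ℕ => ((2:ℝ)⁻¹) ^ n) Filter.atTop (𝓝 0) :=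
      tendsto_pow_atTop_nhds_zero_of_lt_one (by norm_num) (by norm_num)
    have h2 : Filter.Tendsto (fun n : ℕ => ENNReal.ofReal ((2:ℝ)⁻¹ ^ n)) Filter.atTop (𝓝 0) := by
      simpa using ENNReal.tendsto_ofReal h1
    have h3 : Filter.Tendsto (fun n : ℕ => ENNReal.ofReal ((2:ℝ)⁻¹ ^ n) * (N:ℝ≥0∞))
        Filter.atTop (𝓝 0) := by
      simpa using ENNReal.Tendsto.mul_const h2 (Or.inr (ENNReal.natCast_ne_top N))
    have h4 : Filter.Tendsto (fun n : ℕ => κ + ENNReal.ofReal ((2:ℝ)⁻¹ ^ n) * (N:ℝ≥0∞))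
        Filter.atTop (𝓝 κ) := by
      simpa using Filter.Tendsto.add (tendsto_const_nhds (x := κ)) h3
    exact ge_of_tendsto' h4 hbound
  -- monotone convergence in N
  have hfN_mono : Monotone (fun N => S2.indicator (fN N)) := by
    intro N M hNM ω
    show S2.indicator (fN N) ω ≤ S2.indicator (fN M) ω
    by_cases hS : ω ∈ S2
    · rw [Set.indicator_of_mem hS, Set.indicator_of_mem hS]
      by_cases hD : ω ∈ D N
      · have h2 : (1:ℝ) / A ω ≤ (N:ℝ) := hD.2
        have hDM : ω ∈ D M := ⟨hD.1, show (1:ℝ) / A ω ≤ (M:ℝ) from h2.trans (Nat.cast_le.mpr hNM)⟩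
        rw [show fN N ω = g ω from Set.indicator_of_mem hD _,
          show fN M ω = g ω from Set.indicator_of_mem hDM _]
      · rw [show fN N ω = 0 from Set.indicator_of_notMem hD _]
        exact zero_le
    · rw [Set.indicator_of_notMem hS, Set.indicator_of_notMem hS]
  have hsup : ∀ ω, Eᶜ.indicator (S2.indicator g) ω = ⨆ N, S2.indicator (fN N) ω := by
    intro ω
    by_cases hE : ω ∈ Eᶜ
    · by_cases hS : ω ∈ S2
      · rw [Set.indicator_of_mem hE, Set.indicator_of_mem hS]
        obtain ⟨N, hN⟩ := exists_nat_ge (1 / A ω)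
        apply le_antisymm
        · refine le_trans ?_ (le_iSup _ N)
          have hDN : ω ∈ D N := ⟨hE, show (1:ℝ) / A ω ≤ (N:ℝ) from hN⟩
          rw [Set.indicator_of_mem hS, show fN N ω = g ω from Set.indicator_of_mem hDN _]
        · refine iSup_le fun M => ?_
          rw [Set.indicator_of_mem hS]
          by_cases hD : ω ∈ D M
          · rw [show fN M ω = g ω from Set.indicator_of_mem hD _]
          · rw [show fN M ω = 0 from Set.indicator_of_notMem hD _]
            exact zero_le
      · have hz : ∀ M : ℕ, S2.indicator (fN M) ω = 0 := fun M => Set.indicator_of_notMem hS _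
        rw [Set.indicator_of_mem hE, Set.indicator_of_notMem hS]
        simp [hz]
    · have hz : ∀ M : ℕ, S2.indicator (fN M) ω = 0 := by
        intro M
        by_cases hS : ω ∈ S2
        · rw [Set.indicator_of_mem hS]
          exact Set.indicator_of_notMem (fun hD => hE hD.1) _
        · exact Set.indicator_of_notMem hS _
      rw [Set.indicator_of_notMem hE]
      simp [hz]
  have key2 : ∫⁻ ω, Eᶜ.indicator (S2.indicator g) ω ∂μ ≤ κ := by
    calc ∫⁻ ω, Eᶜ.indicator (S2.indicator g) ω ∂μ
        = ∫⁻ ω, ⨆ N, S2.indicator (fN N) ω ∂μ := lintegral_congr hsup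
      _ = ⨆ N, ∫⁻ ω, S2.indicator (fN N) ω ∂μ :=
          lintegral_iSup (fun N => ((hg.indicator (hDm N)).indicator hS2)) hfN_mono
      _ ≤ κ := iSup_le keyN
  calc ∫⁻ ω, E.indicator (fun ω => ENNReal.ofReal (X ω)) ω ∂μ
        + ∫⁻ ω, Eᶜ.indicator (S2.indicator g) ω ∂μ
      ≤ ∫⁻ ω, E.indicator (fun ω => ENNReal.ofReal (X ω)) ω ∂μ + κ := add_le_add le_rfl key2
    _ = ∫⁻ ω, (E.indicator (fun ω => ENNReal.ofReal (X ω)) ω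
          + Eᶜ.indicator (fun ω => ENNReal.ofReal (X ω)) ω) ∂μ :=
        (lintegral_add_left (hXE.indicator hEm) _).symm
    _ = ∫⁻ ω, ENNReal.ofReal (X ω) ∂μ := by
        refine lintegral_congr fun ω => ?_
        exact congrFun (Set.indicator_self_add_compl E (fun ω => ENNReal.ofReal (X ω))) ω
    _ ≤ 1 := hXe


/-- Combining an e-value `X` with a conditionally-valid p-value `P` at a random
level `α̂ ∈ (0,1)`: the quantity
`M = max( X·1{X ≥ 1/α̂}, (1/α̂)·1{α̂X ≥ P} )` has expectation at most 1, i.e.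
it is an e-value. Conditional superuniformity of `P` given `(X, α̂)` is stated
as `P({P ≤ s} ∩ B) ≤ s·P(B)` for all `B` measurable w.r.t. `σ(X, α̂)`. -/
theorem stmt16 {Ω : Type*} [MeasureSpace Ω] [IsProbabilityMeasure (ℙ : Measure Ω)]
    (X A P : Ω → ℝ) (hXm : Measurable X) (hAm : Measurable A) (hPm : Measurable P)
    (hX0 : ∀ ω, 0 ≤ X ω) (hXe : ∫⁻ ω, ENNReal.ofReal (X ω) ∂ℙ ≤ 1)
    (hA : ∀ ω, A ω ∈ Set.Ioo (0:ℝ) 1)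
    (hP : ∀ s ∈ Set.Icc (0:ℝ) 1, ∀ B : Set Ω,
      MeasurableSet[MeasurableSpace.comap (fun ω => (X ω, A ω)) inferInstance] B →
      ℙ ({ω | P ω ≤ s} ∩ B) ≤ ENNReal.ofReal s * ℙ B) :
    ∫⁻ ω, ENNReal.ofReal (max (X ω * (if 1 / A ω ≤ X ω then 1 else 0))
        ((1 / A ω) * (if P ω ≤ A ω * X ω then 1 else 0))) ∂ℙ ≤ 1 := by
  have hm : MeasurableSpace.comap (fun ω => (X ω, A ω)) inferInstance
      ≤ (MeasureSpace.toMeasurableSpace : MeasurableSpace Ω) :=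
    (hXm.prodMk hAm).comap_le
  have hXAm : Measurable[MeasurableSpace.comap (fun ω => (X ω, A ω)) inferInstance]
      (fun ω => (X ω, A ω)) := measurable_iff_comap_le.mpr le_rfl
  exact aux_main ℙ X A P hm (measurable_fst.comp hXAm : _) (measurable_snd.comp hXAm : _)
    hPm hX0 hXe hA hP
end

section
/- Let P be superuniform, R a positive random variable arbitrarily dependent with P, and U uniform on [0,1] independent of (P,R). Define R* = inf{ s ≥ R : P ≤ c·β(s) } (inf ∅ = ∞), where β is a reshaping function and c ≥ 0. Then E[ 1{P > c·β(R), U ≤ R/R*} / R ] = E[ 1{P > c·β(R)} / R* ]. -/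
open MeasureTheory ProbabilityTheory Set
open scoped ENNReal

private lemma stmt18_beta_mono (ν : Measure ℝ) [IsProbabilityMeasure ν] :
    Monotone (fun r : ℝ => ∫ t in Set.Icc 0 r, t ∂ν) := by
  intro a b hab
  have hint : IntegrableOn (fun t : ℝ => t) (Set.Icc 0 b) ν := by
    apply Integrable.mono' (integrable_const (max b 0))
    · exact measurable_id.aestronglyMeasurable
    · filter_upwards [ae_restrict_mem measurableSet_Icc] with t ht
      rw [Real.norm_eq_abs, abs_of_nonneg ht.1]
      exact le_max_of_le_left ht.2
  apply setIntegral_mono_set hint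
  · filter_upwards [ae_restrict_mem measurableSet_Icc] with t ht using ht.1
  · exact HasSubset.Subset.eventuallyLE (Set.Icc_subset_Icc_right hab)

private lemma stmt18_g_meas {β : ℝ → ℝ} {c : ℝ} (hβm : Monotone fun s => c * β s) :
    Measurable (fun x : ℝ × ℝ =>
      sInf (ENNReal.ofReal '' {s : ℝ | x.2 ≤ s ∧ x.1 ≤ c * β s})) := by
  apply measurable_of_Iio
  intro a
  have key : (fun x : ℝ × ℝ => sInf (ENNReal.ofReal '' {s | x.2 ≤ s ∧ x.1 ≤ c * β s})) ⁻¹'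
        Set.Iio a
      = ⋃ q ∈ {q : ℚ | ENNReal.ofReal (q : ℝ) < a},
          {x : ℝ × ℝ | x.2 ≤ (q : ℝ) ∧ x.1 ≤ c * β q} := by
    ext x
    simp only [Set.mem_preimage, Set.mem_Iio, Set.mem_iUnion, Set.mem_setOf_eq, exists_prop]
    constructor
    · intro h
      rw [sInf_lt_iff] at h
      obtain ⟨e, he, hea⟩ := h
      obtain ⟨s, ⟨hs1, hs2⟩, rfl⟩ := he
      rcases eq_or_ne a ∞ with ha | ha
      · obtain ⟨q, hq1, hq2⟩ := exists_rat_btwn (lt_add_one s)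
        exact ⟨q, by simp [ha], le_trans hs1 hq1.le,
          le_trans hs2 (hβm hq1.le)⟩
      · have h1 : max s 0 < a.toReal := by
          by_contra hcon
          push_neg at hcon
          have : a ≤ ENNReal.ofReal s := by
            calc a = ENNReal.ofReal a.toReal := (ENNReal.ofReal_toReal ha).symm
              _ ≤ ENNReal.ofReal (max s 0) := ENNReal.ofReal_le_ofReal hcon
              _ = ENNReal.ofReal s := by
                  rcases le_or_gt 0 s with hs | hs
                  · rw [max_eq_left hs]
                  · rw [max_eq_right hs.le]
                    simp [ENNReal.ofReal_eq_zero.mpr hs.le]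
          exact absurd hea (not_lt.mpr this)
        obtain ⟨q, hq1, hq2⟩ := exists_rat_btwn h1
        refine ⟨q, ?_, le_trans hs1 (le_trans (le_max_left s 0) hq1.le),
          le_trans hs2 (hβm (le_trans (le_max_left s 0) hq1.le))⟩
        have h0a : 0 < a.toReal := lt_of_le_of_lt (le_max_right s 0) h1
        calc ENNReal.ofReal (q : ℝ) < ENNReal.ofReal a.toReal :=
              (ENNReal.ofReal_lt_ofReal_iff h0a).mpr hq2
          _ = a := ENNReal.ofReal_toReal ha
    · rintro ⟨q, hq, hx2, hx1⟩
      exact lt_of_le_of_lt (sInf_le ⟨q, ⟨hx2, hx1⟩, rfl⟩) hq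
  rw [key]
  refine MeasurableSet.biUnion (Set.to_countable _) fun q _ => ?_
  exact (measurableSet_le measurable_snd measurable_const).inter
    (measurableSet_le measurable_fst measurable_const)

/-- Key identity in the proof of the randomized superuniformity lemma: with
`R* = inf{s ≥ R : P ≤ c·β(s)}` (inf ∅ = ∞, valued in `ℝ≥0∞`),
`E[1{P > cβ(R), U ≤ R/R*}/R] = E[1{P > cβ(R)}/R*]`. -/
theorem stmt18 {Ω : Type*} [MeasureSpace Ω] [IsProbabilityMeasure (ℙ : Measure Ω)]
    (P R U : Ω → ℝ) (hPm : Measurable P) (hRm : Measurable R) (hUm : Measurable U)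
    (hR : ∀ ω, 0 < R ω)
    (hsup : ∀ s ∈ Set.Icc (0:ℝ) 1, ℙ {ω | P ω ≤ s} ≤ ENNReal.ofReal s)
    (hUnif : Measure.map U ℙ = (volume : Measure ℝ).restrict (Icc (0:ℝ) 1))
    (hInd : IndepFun (fun ω => (P ω, R ω)) U ℙ)
    (c : ℝ) (hc : 0 ≤ c)
    (ν : Measure ℝ) [IsProbabilityMeasure ν] (hν : ν (Set.Iio 0) = 0)
    (β : ℝ → ℝ) (hβ : ∀ r, β r = ∫ t in Set.Icc 0 r, t ∂ν)
    (Rstar : Ω → ℝ≥0∞)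
    (hRstar : ∀ ω, Rstar ω
        = sInf (ENNReal.ofReal '' {s : ℝ | R ω ≤ s ∧ P ω ≤ c * β s})) :
    ∫⁻ ω, {ω' | c * β (R ω') < P ω' ∧
          ENNReal.ofReal (U ω') ≤ ENNReal.ofReal (R ω') / Rstar ω'}.indicator
        (fun ω' => (ENNReal.ofReal (R ω'))⁻¹) ω ∂ℙ
      = ∫⁻ ω, {ω' | c * β (R ω') < P ω'}.indicator (fun ω' => (Rstar ω')⁻¹) ω ∂ℙ := by
  -- basic facts about β and g
  have hβm : Monotone β := by
    intro a b hab
    rw [hβ a, hβ b]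
    exact stmt18_beta_mono ν hab
  have hcβm : Monotone fun s => c * β s := fun a b hab =>
    mul_le_mul_of_nonneg_left (hβm hab) hc
  set g : ℝ × ℝ → ℝ≥0∞ :=
    fun x => sInf (ENNReal.ofReal '' {s : ℝ | x.2 ≤ s ∧ x.1 ≤ c * β s}) with hgdef
  have hgm : Measurable g := stmt18_g_meas hcβm
  have hβmeas : Measurable β := hβm.measurable
  have hgR : ∀ x : ℝ × ℝ, ENNReal.ofReal x.2 ≤ g x := by
    intro x
    refine le_sInf ?_
    rintro e ⟨s, ⟨hs1, _⟩, rfl⟩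
    exact ENNReal.ofReal_le_ofReal hs1
  have hRstar' : ∀ ω, Rstar ω = g (P ω, R ω) := fun ω => hRstar ω
  -- the set S and function F on (ℝ × ℝ) × ℝ
  set S : Set ((ℝ × ℝ) × ℝ) := {y | c * β y.1.2 < y.1.1 ∧
      ENNReal.ofReal y.2 ≤ ENNReal.ofReal y.1.2 / g y.1} with hSdef
  have hSm : MeasurableSet S := by
    have h1 : MeasurableSet {y : (ℝ × ℝ) × ℝ | c * β y.1.2 < y.1.1} :=
      measurableSet_lt (by fun_prop) (by fun_prop)
    have h2 : MeasurableSet {y : (ℝ × ℝ) × ℝ |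
        ENNReal.ofReal y.2 ≤ ENNReal.ofReal y.1.2 / g y.1} :=
      measurableSet_le (by fun_prop) (by fun_prop)
    rw [hSdef]
    exact h1.inter h2
  set F : (ℝ × ℝ) × ℝ → ℝ≥0∞ :=
    S.indicator (fun y => (ENNReal.ofReal y.1.2)⁻¹) with hFdef
  have hFm : Measurable F :=
    ((ENNReal.measurable_ofReal.comp measurable_fst.snd).inv).indicator hSm
  have hmapPR : Measurable fun ω => (P ω, R ω) := hPm.prodMk hRm
  have hmap : Measurable fun ω => ((P ω, R ω), U ω) := hmapPR.prodMk hUm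
  set μPR := Measure.map (fun ω => (P ω, R ω)) ℙ with hμPR
  set μU := (volume : Measure ℝ).restrict (Icc (0:ℝ) 1) with hμU
  have hjoint : Measure.map (fun ω => ((P ω, R ω), U ω)) ℙ = μPR.prod μU := by
    rw [← hUnif]
    exact (indepFun_iff_map_prod_eq_prod_map_map hmapPR.aemeasurable
      hUm.aemeasurable).mp hInd
  -- rewrite LHS as integral over joint law
  have hLHS : ∫⁻ ω, {ω' | c * β (R ω') < P ω' ∧
          ENNReal.ofReal (U ω') ≤ ENNReal.ofReal (R ω') / Rstar ω'}.indicator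
        (fun ω' => (ENNReal.ofReal (R ω'))⁻¹) ω ∂ℙ
      = ∫⁻ y, F y ∂(μPR.prod μU) := by
    rw [← hjoint, lintegral_map hFm hmap]
    refine lintegral_congr fun ω => ?_
    simp only [hFdef, Set.indicator_apply]
    have hiff : (ω ∈ {ω' | c * β (R ω') < P ω' ∧
        ENNReal.ofReal (U ω') ≤ ENNReal.ofReal (R ω') / Rstar ω'})
        ↔ ((P ω, R ω), U ω) ∈ S := by
      simp only [hSdef, Set.mem_setOf_eq, hRstar' ω]
    split_ifs with h1 h2 h2
    · rfl
    · exact absurd (hiff.mp h1) h2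
    · exact absurd (hiff.mpr h2) h1
    · rfl
  rw [hLHS, lintegral_prod _ hFm.aemeasurable]
  -- inner integral
  have hinner : ∀ x : ℝ × ℝ, 0 < x.2 →
      ∫⁻ u, F (x, u) ∂μU
        = ({x : ℝ × ℝ | c * β x.2 < x.1}).indicator (fun x => (g x)⁻¹) x := by
    intro x hx2
    by_cases hcond : c * β x.2 < x.1
    · set t := ENNReal.ofReal x.2 / g x with htdef
      have ht1 : t ≤ 1 := ENNReal.div_le_of_le_mul (by simpa using hgR x)
      have htne : t ≠ ∞ := (lt_of_le_of_lt ht1 ENNReal.one_lt_top).ne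
      have hsetm : MeasurableSet {u : ℝ | ENNReal.ofReal u ≤ t} :=
        measurableSet_le ENNReal.measurable_ofReal measurable_const
      have hFeq : (fun u => F (x, u))
          = fun u => ({u : ℝ | ENNReal.ofReal u ≤ t}).indicator
              (fun _ => (ENNReal.ofReal x.2)⁻¹) u := by
        funext u
        simp only [hFdef, hSdef, Set.indicator_apply, Set.mem_setOf_eq, hcond, true_and, ← htdef]
      rw [hFeq, lintegral_indicator hsetm _, setLIntegral_const]
      have hmeasset : μU {u : ℝ | ENNReal.ofReal u ≤ t} = t := by
        rw [hμU, Measure.restrict_apply hsetm]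
        have htr1 : t.toReal ≤ 1 := by
          calc t.toReal ≤ (1 : ℝ≥0∞).toReal := ENNReal.toReal_mono ENNReal.one_ne_top ht1
            _ = 1 := by simp
        have hset : {u : ℝ | ENNReal.ofReal u ≤ t} ∩ Icc 0 1 = Icc 0 t.toReal := by
          ext u
          simp only [Set.mem_inter_iff, Set.mem_setOf_eq, Set.mem_Icc]
          constructor
          · rintro ⟨h1, h2, _⟩
            exact ⟨h2, (ENNReal.ofReal_le_iff_le_toReal htne).mp h1⟩
          · rintro ⟨h1, h2⟩
            exact ⟨(ENNReal.ofReal_le_iff_le_toReal htne).mpr h2, h1, le_trans h2 htr1⟩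
        rw [hset, Real.volume_Icc, sub_zero, ENNReal.ofReal_toReal htne]
      rw [hmeasset]
      have ha0 : ENNReal.ofReal x.2 ≠ 0 := by
        simp only [ne_eq, ENNReal.ofReal_eq_zero, not_le]
        exact hx2
      have hat : ENNReal.ofReal x.2 ≠ ∞ := ENNReal.ofReal_ne_top
      rw [Set.indicator_of_mem (by exact hcond)]
      rw [htdef, div_eq_mul_inv, ← mul_assoc,
        ENNReal.inv_mul_cancel ha0 hat, one_mul]
    · have hFeq : (fun u => F (x, u)) = fun _ => 0 := by
        funext u
        simp only [hFdef, hSdef, Set.indicator_apply, Set.mem_setOf_eq, hcond, false_and,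
          if_false]
      rw [hFeq, lintegral_zero, Set.indicator_of_notMem (by exact hcond)]
  -- replace inner integral a.e.
  have hae : ∀ᵐ x ∂μPR, 0 < x.2 := by
    rw [hμPR]
    rw [ae_map_iff hmapPR.aemeasurable
      (measurableSet_lt measurable_const measurable_snd)]
    filter_upwards with ω using hR ω
  have hstep : ∫⁻ x, ∫⁻ u, F (x, u) ∂μU ∂μPR
      = ∫⁻ x, ({x : ℝ × ℝ | c * β x.2 < x.1}).indicator (fun x => (g x)⁻¹) x ∂μPR := by
    refine lintegral_congr_ae ?_
    filter_upwards [hae] with x hx using hinner x hx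
  have hmeasInd : Measurable fun x : ℝ × ℝ =>
      ({x : ℝ × ℝ | c * β x.2 < x.1}).indicator (fun x => (g x)⁻¹) x :=
    hgm.inv.indicator (measurableSet_lt (by fun_prop) (by fun_prop))
  rw [hstep, hμPR, lintegral_map hmeasInd hmapPR]
  refine lintegral_congr fun ω => ?_
  rw [Set.indicator_apply, Set.indicator_apply]
  simp only [Set.mem_setOf_eq, hRstar' ω]
end
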